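/- arXiv:1907.13038 — 11 statements merged into one kernel-verified Lean document; each statement's English description precedes it below -/
import Mathlib

section
/- Let γ ∈ kˣ and let a ≥ 1 be an integer. For every finite field extension F of k, one has the identity in ℂ: ∑_{τ∈F} ∑_{x∈F} η_F(x³ + (τ^{q^a} − τ)·x² + γ·x) = ∑_{β∈F, β^{q^a}=β} ( ∑_{x∈F} η_F(x)·ψ(Tr_{F/k}(β·x)) ) · ( ∑_{x∈Fˣ} ψ(Tr_{F/k}(β·(x + γ·x⁻¹))) ), where γ is viewed in F via the inclusion k ⊆ F. (This identity is the coefficient-wise form of the paper's Theorem 4.1, the explicit product formula for the L-function of the elliptic curve E_{γ,a} : y² = x³ + (t^{q^a}−t)x² + γx over 𝔽_q(t).) -/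
open Finset

section Aux

variable {k : Type*} [Field k] [Fintype k] {F : Type*} [Field F] [Fintype F] [Algebra k F]

private lemma trace_frob (p : ℕ) [Fact p.Prime] [CharP k p] (x : F) :
    Algebra.trace k F (x ^ Fintype.card k) = Algebra.trace k F x := by
  haveI : Module.Finite k F := Module.Finite.of_finite
  obtain ⟨m, -, hm⟩ := FiniteField.card k p
  haveI : CharP F p := charP_of_injective_algebraMap (algebraMap k F).injective p
  let g : F →ₐ[k] F :=
    { toRingHom := iterateFrobenius F p m,
      commutes' := fun c => by
        show iterateFrobenius F p m (algebraMap k F c) = algebraMap k F c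
        rw [iterateFrobenius_def, ← map_pow, ← hm, FiniteField.pow_card] }
  have hbij : Function.Bijective g :=
    Finite.injective_iff_bijective.1 g.toRingHom.injective
  let σ : F ≃ₐ[k] F := AlgEquiv.ofBijective g hbij
  have hσ : ∀ y : F, σ y = y ^ Fintype.card k := fun y => by
    show iterateFrobenius F p m y = _
    rw [iterateFrobenius_def, hm]
  apply (algebraMap k F).injective
  rw [trace_eq_sum_automorphisms, trace_eq_sum_automorphisms]
  exact Fintype.sum_equiv (Equiv.mulRight σ) _ _ fun g' => by
    simp [AlgEquiv.mul_apply, hσ]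

private lemma trace_frob_pow (p : ℕ) [Fact p.Prime] [CharP k p] (j : ℕ) (x : F) :
    Algebra.trace k F (x ^ Fintype.card k ^ j) = Algebra.trace k F x := by
  induction j with
  | zero => simp
  | succ i ih => rw [pow_succ, pow_mul, trace_frob p, ih]

private lemma sum_units_eq {F : Type*} [Field F] [Fintype F] [DecidableEq F] (g : F → ℂ) :
    ∑ x : F, (if x = 0 then 0 else g x) = ∑ x : Fˣ, g ↑x := by
  have h1 : ∑ x : F, (if x = 0 then 0 else g x)
      = ∑ x ∈ univ.filter (fun x : F => x ≠ 0), g x := by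
    rw [Finset.sum_filter]
    exact Finset.sum_congr rfl fun x _ => by by_cases hx : x = 0 <;> simp [hx]
  rw [h1]
  refine (Finset.sum_bij (fun (x : Fˣ) _ => (x : F)) ?_ ?_ ?_ ?_).symm
  · intro x _; simp [Units.ne_zero]
  · intro x _ y _ h; exact Units.ext h
  · intro x hx
    simp only [mem_filter, mem_univ, true_and] at hx
    exact ⟨Units.mk0 x hx, mem_univ _, rfl⟩
  · intro x _; rfl

end Aux

/-- **Coefficient-wise form of Theorem 4.1 of the paper** (the explicit product formula
for the `L`-function of `E_{γ,a} : y² = x³ + (t^{q^a} − t)x² + γx` over `𝔽_q(t)`).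
Let `k` be a finite field of odd characteristic `p` with `q` elements, `ψ` a nontrivial
additive character of `k` with values in `ℂ`, `γ ∈ kˣ` and `a ≥ 1`.  For every finite
field extension `F` of `k` (with quadratic character `η_F`, extended by `η_F(0)=0`):
`∑_{τ∈F} ∑_{x∈F} η_F(x³ + (τ^{q^a} − τ)·x² + γ·x)
  = ∑_{β∈F, β^{q^a}=β} (∑_{x∈F} η_F(x)·ψ(Tr_{F/k}(β·x)))
      · (∑_{x∈Fˣ} ψ(Tr_{F/k}(β·(x + γ·x⁻¹))))`. -/
theorem stmt0 (k : Type*) [Field k] [Fintype k] [DecidableEq k]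
    (p : ℕ) [Fact p.Prime] [CharP k p] (hp : Odd p)
    (ψ : AddChar k ℂ) (hψ : ψ ≠ 1)
    (γ : kˣ) (a : ℕ) (ha : 1 ≤ a)
    (F : Type*) [Field F] [Fintype F] [DecidableEq F] [Algebra k F] :
    ∑ τ : F, ∑ x : F,
        ((quadraticChar F (x ^ 3 + (τ ^ Fintype.card k ^ a - τ) * x ^ 2
            + algebraMap k F (γ : k) * x) : ℤ) : ℂ)
      = ∑ β ∈ Finset.univ.filter (fun β : F => β ^ Fintype.card k ^ a = β),
          (∑ x : F, ((quadraticChar F x : ℤ) : ℂ) * ψ (Algebra.trace k F (β * x)))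
            * ∑ x : Fˣ, ψ (Algebra.trace k F
                (β * ((x : F) + algebraMap k F (γ : k) * (x : F)⁻¹))) := by
  classical
  haveI : Module.Finite k F := Module.Finite.of_finite
  obtain ⟨m, -, hm⟩ := FiniteField.card k p
  set q := Fintype.card k with hqdef
  have hqodd : Odd q := hm ▸ hp.pow
  set Q := q ^ a with hQdef
  have hQodd : Odd Q := hqodd.pow
  set γ' : F := algebraMap k F (γ : k) with hγ'
  have hγ'0 : γ' ≠ 0 := by
    rw [hγ']
    exact (map_ne_zero_iff _ (algebraMap k F).injective).2 (Units.ne_zero γ)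
  -- the quadratic character with values in ℂ
  let η : F → ℂ := fun x => ((quadraticChar F x : ℤ) : ℂ)
  have hηmul : ∀ x y : F, η (x * y) = η x * η y := fun x y => by
    simp only [η, map_mul, Int.cast_mul, Complex.ofReal_mul]
  have hη0 : η 0 = 0 := by
    simp only [η, MulChar.map_nonunit _ (by simp : ¬ IsUnit (0 : F)), Int.cast_zero,
      Complex.ofReal_zero]
  have hηsq : ∀ x : F, x ≠ 0 → η (x ^ 2) = 1 := fun x hx => by
    simp only [η, map_pow, quadraticChar_sq_one hx, Int.cast_one, Complex.ofReal_one]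
  -- the additive character of F
  let ψF : AddChar F ℂ := ψ.compAddMonoidHom (Algebra.trace k F).toAddMonoidHom
  have hψFapp : ∀ y : F, ψF y = ψ (Algebra.trace k F y) := fun y => rfl
  have hψF1 : ψF ≠ 1 := by
    obtain ⟨y, hy⟩ := AddChar.ne_one_iff.1 hψ
    obtain ⟨x, hx⟩ := Algebra.trace_surjective k F y
    exact AddChar.ne_one_iff.2 ⟨x, by rw [hψFapp, hx]; exact hy⟩
  have L1 : ∀ b : F, ∑ x : F, ψF (x * b) = if b = 0 then (Fintype.card F : ℂ) else 0 :=
    fun b => by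
      rw [AddChar.sum_mulShift b (AddChar.IsPrimitive.of_ne_one hψF1),
        apply_ite (Nat.cast : ℕ → ℂ), Nat.cast_zero]
  -- the sum over τ of ψF (β (τ^Q - τ))
  set n := Module.finrank k F with hn
  have hFcard : Fintype.card F = q ^ n := Module.card_eq_pow_finrank
  have hnpos : 0 < n := Module.finrank_pos
  have L2 : ∀ β : F, (∑ τ : F, ψF (β * (τ ^ Q - τ)))
      = if β ^ Q = β then (Fintype.card F : ℂ) else 0 := by
    intro β
    set b : F := β ^ q ^ ((n - 1) * a) with hb
    have hbQ : b ^ Q = β := by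
      have hexp : (n - 1) * a + a = n * a := by
        have h1 : n - 1 + 1 = n := Nat.sub_add_cancel hnpos
        calc (n-1)*a + a = (n-1+1)*a := by ring
          _ = n*a := by rw [h1]
      rw [hb, hQdef, ← pow_mul, ← pow_add, hexp, pow_mul q n a, ← hFcard]
      exact FiniteField.pow_card_pow a β
    have key : ∀ τ : F, ψF (β * (τ ^ Q - τ)) = ψF (τ * (b - β)) := by
      intro τ
      rw [hψFapp, hψFapp]
      congr 1
      have h1 : Algebra.trace k F (β * τ ^ Q) = Algebra.trace k F (b * τ) := by
        conv_lhs => rw [← hbQ, ← mul_pow]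
        exact trace_frob_pow p a (b * τ)
      calc Algebra.trace k F (β * (τ ^ Q - τ))
          = Algebra.trace k F (β * τ ^ Q) - Algebra.trace k F (β * τ) := by
            rw [mul_sub, map_sub]
        _ = Algebra.trace k F (b * τ) - Algebra.trace k F (β * τ) := by rw [h1]
        _ = Algebra.trace k F (τ * (b - β)) := by
            rw [← map_sub]; congr 1; ring
    rw [Finset.sum_congr rfl fun τ _ => key τ, L1 (b - β)]
    have hiff : b - β = 0 ↔ β ^ Q = β := by
      constructor
      · intro h
        have hbβ : b = β := sub_eq_zero.1 h
        conv_lhs => rw [← hbβ]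
        exact hbQ
      · intro h
        have hfix : ∀ j : ℕ, β ^ q ^ (j * a) = β := by
          intro j
          induction j with
          | zero => simp
          | succ i ih =>
            rw [Nat.succ_mul, pow_add, pow_mul, ih, ← hQdef, h]
        rw [sub_eq_zero, hb, hfix (n - 1)]
    simp only [hiff]
  -- the fiber-count identity
  have cardF0 : (Fintype.card F : ℂ) ≠ 0 := Nat.cast_ne_zero.2 Fintype.card_ne_zero
  have L3 : ∀ c : F,
      (((univ.filter (fun τ : F => τ ^ Q - τ = c)).card : ℕ) : ℂ)
        = ∑ β ∈ univ.filter (fun β : F => β ^ Q = β), ψF (β * c) := by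
    intro c
    have hsplit : ∀ β τ : F,
        ψF (β * (τ ^ Q - τ - c)) = ψF (β * (τ ^ Q - τ)) * ψF (β * (-c)) := by
      intro β τ
      rw [← AddChar.map_add_eq_mul]
      congr 1; ring
    have hA : ∀ τ : F, (∑ β : F, ψF (β * (τ ^ Q - τ - c)))
        = if τ ^ Q - τ = c then (Fintype.card F : ℂ) else 0 := by
      intro τ
      rw [L1 (τ ^ Q - τ - c)]
      by_cases h : τ ^ Q - τ = c
      · rw [if_pos (by rw [h, sub_self]), if_pos h]
      · rw [if_neg (fun hh => h (by rwa [sub_eq_zero] at hh)), if_neg h]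
    have hd1 : ∑ τ : F, ∑ β : F, ψF (β * (τ ^ Q - τ - c))
        = (((univ.filter (fun τ : F => τ ^ Q - τ = c)).card : ℕ) : ℂ)
            * (Fintype.card F : ℂ) := by
      rw [Finset.sum_congr rfl fun τ _ => hA τ, ← Finset.sum_filter, Finset.sum_const,
        nsmul_eq_mul]
    have hd2 : ∑ τ : F, ∑ β : F, ψF (β * (τ ^ Q - τ - c))
        = (Fintype.card F : ℂ)
            * ∑ β ∈ univ.filter (fun β : F => β ^ Q = β), ψF (β * (-c)) := by
      rw [Finset.sum_comm]
      have hrow : ∀ β : F, ∑ τ : F, ψF (β * (τ ^ Q - τ - c))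
          = (if β ^ Q = β then (Fintype.card F : ℂ) else 0) * ψF (β * (-c)) := by
        intro β
        rw [Finset.sum_congr rfl fun τ _ => hsplit β τ, ← Finset.sum_mul, L2 β]
      rw [Finset.sum_congr rfl fun β _ => hrow β]
      simp only [ite_mul, zero_mul]
      rw [← Finset.sum_filter, Finset.mul_sum]
    have hNS : (((univ.filter (fun τ : F => τ ^ Q - τ = c)).card : ℕ) : ℂ)
        = ∑ β ∈ univ.filter (fun β : F => β ^ Q = β), ψF (β * (-c)) := by
      apply mul_right_cancel₀ cardF0
      rw [← hd1, hd2]; ring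
    rw [hNS]
    refine Finset.sum_equiv (Equiv.neg F) ?_ ?_
    · intro β
      simp only [mem_filter, mem_univ, true_and, Equiv.neg_apply]
      rw [hQodd.neg_pow, neg_inj]
    · intro β _
      simp only [Equiv.neg_apply]
      congr 1; ring
  -- the inner computation for a fixed β
  have inner : ∀ β : F,
      (∑ c : F, ψF (β * c) * ∑ x : F, η (x ^ 3 + c * x ^ 2 + γ' * x))
        = (∑ x : F, η x * ψF (β * x))
            * ∑ x : Fˣ, ψF (β * ((x : F) + γ' * (x : F)⁻¹)) := by
    intro β
    have swap : (∑ c : F, ψF (β * c) * ∑ x : F, η (x ^ 3 + c * x ^ 2 + γ' * x))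
        = ∑ x : F, ∑ c : F, ψF (β * c) * η (x ^ 3 + c * x ^ 2 + γ' * x) := by
      simp_rw [Finset.mul_sum]
      exact Finset.sum_comm
    rw [swap]
    have hxterm : ∀ x : F, (∑ c : F, ψF (β * c) * η (x ^ 3 + c * x ^ 2 + γ' * x))
        = if x = 0 then 0
          else ψF (-(β * (x + γ' * x⁻¹))) * ∑ u : F, η u * ψF (β * u) := by
      intro x
      by_cases hx : x = 0
      · rw [if_pos hx]
        subst hx
        simp [hη0]
      · rw [if_neg hx]
        rw [← Equiv.sum_comp (Equiv.subRight (x + γ' * x⁻¹))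
            (fun c => ψF (β * c) * η (x ^ 3 + c * x ^ 2 + γ' * x))]
        simp only [Equiv.subRight_apply]
        have hpoly : ∀ u : F,
            x ^ 3 + (u - (x + γ' * x⁻¹)) * x ^ 2 + γ' * x = u * x ^ 2 := by
          intro u; field_simp; ring
        calc ∑ u : F, ψF (β * (u - (x + γ' * x⁻¹)))
                * η (x ^ 3 + (u - (x + γ' * x⁻¹)) * x ^ 2 + γ' * x)
            = ∑ u : F, ψF (-(β * (x + γ' * x⁻¹))) * (η u * ψF (β * u)) := by
              refine Finset.sum_congr rfl fun u _ => ?_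
              rw [hpoly u, hηmul, hηsq x hx, mul_one]
              have harg : β * (u - (x + γ' * x⁻¹))
                  = β * u + -(β * (x + γ' * x⁻¹)) := by ring
              rw [harg, AddChar.map_add_eq_mul]
              ring
          _ = ψF (-(β * (x + γ' * x⁻¹))) * ∑ u : F, η u * ψF (β * u) := by
              rw [← Finset.mul_sum]
    rw [Finset.sum_congr rfl fun x _ => hxterm x,
      sum_units_eq (fun x => ψF (-(β * (x + γ' * x⁻¹))) * ∑ u : F, η u * ψF (β * u)),
      ← Finset.sum_mul, mul_comm]
    congr 1
    refine Fintype.sum_equiv (Equiv.neg Fˣ) _ _ fun x => ?_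
    simp only [Equiv.neg_apply, Units.val_neg]
    congr 1
    rw [inv_neg]
    ring
  -- assembling everything
  show (∑ τ : F, ∑ x : F, η (x ^ 3 + (τ ^ Q - τ) * x ^ 2 + γ' * x))
      = ∑ β ∈ univ.filter (fun β : F => β ^ Q = β),
          (∑ x : F, η x * ψF (β * x))
            * ∑ x : Fˣ, ψF (β * ((x : F) + γ' * (x : F)⁻¹))
  calc (∑ τ : F, ∑ x : F, η (x ^ 3 + (τ ^ Q - τ) * x ^ 2 + γ' * x))
      = ∑ c : F, (((univ.filter (fun τ : F => τ ^ Q - τ = c)).card : ℕ) : ℂ)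
          * ∑ x : F, η (x ^ 3 + c * x ^ 2 + γ' * x) := by
        rw [← Finset.sum_fiberwise' univ (fun τ : F => τ ^ Q - τ)
            (fun c => ∑ x : F, η (x ^ 3 + c * x ^ 2 + γ' * x))]
        exact Finset.sum_congr rfl fun c _ => by rw [Finset.sum_const, nsmul_eq_mul]
    _ = ∑ c : F, (∑ β ∈ univ.filter (fun β : F => β ^ Q = β), ψF (β * c))
          * ∑ x : F, η (x ^ 3 + c * x ^ 2 + γ' * x) :=
        Finset.sum_congr rfl fun c _ => by rw [L3 c]
    _ = ∑ c : F, ∑ β ∈ univ.filter (fun β : F => β ^ Q = β),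
          ψF (β * c) * ∑ x : F, η (x ^ 3 + c * x ^ 2 + γ' * x) :=
        Finset.sum_congr rfl fun c _ => Finset.sum_mul _ _ _
    _ = ∑ β ∈ univ.filter (fun β : F => β ^ Q = β),
          ∑ c : F, ψF (β * c) * ∑ x : F, η (x ^ 3 + c * x ^ 2 + γ' * x) :=
        Finset.sum_comm
    _ = ∑ β ∈ univ.filter (fun β : F => β ^ Q = β),
          (∑ x : F, η x * ψF (β * x))
            * ∑ x : Fˣ, ψF (β * ((x : F) + γ' * (x : F)⁻¹)) :=
        Finset.sum_congr rfl fun β _ => inner β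
end

section
/- Assume ψ is nontrivial. For every α ∈ Fˣ one has 1 − g(ψ)·Kl(ψ,α)/Q + g(ψ)²/Q ≠ 0 in ℂ; equivalently Q² − Q·g(ψ)·Kl(ψ,α) + Q·g(ψ)² ≠ 0. (This is the nonvanishing at the central point T = q⁻¹ of each local factor 1 − g·Kl·T^{deg v} + g²·q^{deg v}·T^{2 deg v} in the explicit product formula for L(E_{γ,a},T), and is the content of the paper's Theorem 5.3: L(E_{γ,a}, q⁻¹) ≠ 0.) -/
open Polynomial Finset

/-- **Theorem 5.3 of the paper (nonvanishing of each local factor at the central point).**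
Let `F` be a finite field of odd characteristic `p` with `Q` elements, `λ` its quadratic
character, `ψ` a nontrivial additive character of `F` with values in `ℂ`.  With the
normalized quadratic Gauss sum `g(ψ) = −∑_{x∈F} λ(x)ψ(x)` and the normalized Kloosterman
sum `Kl(ψ,α) = −∑_{x∈Fˣ} ψ(x + α·x⁻¹)`, for every `α ∈ Fˣ` one has
`1 − g(ψ)·Kl(ψ,α)/Q + g(ψ)²/Q ≠ 0` in `ℂ`. -/
theorem stmt1 (p : ℕ) [Fact p.Prime] (hp : Odd p)
    (F : Type*) [Field F] [Fintype F] [DecidableEq F] [CharP F p]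
    (ψ : AddChar F ℂ) (hψ : ψ ≠ 1) (α : Fˣ) :
    (1 : ℂ)
        - (-∑ x : F, ((quadraticChar F x : ℤ) : ℂ) * ψ x)
            * (-∑ x : Fˣ, ψ ((x : F) + (α : F) * (x : F)⁻¹)) / (Fintype.card F : ℂ)
        + (-∑ x : F, ((quadraticChar F x : ℤ) : ℂ) * ψ x) ^ 2 / (Fintype.card F : ℂ)
      ≠ 0 := by
  have hpprime : p.Prime := Fact.out
  haveI : NeZero p := ⟨hpprime.ne_zero⟩
  intro h0
  set G : ℂ := ∑ x : F, ((quadraticChar F x : ℤ) : ℂ) * ψ x with hGdef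
  set K : ℂ := ∑ x : Fˣ, ψ ((x : F) + (α : F) * (x : F)⁻¹) with hKdef
  have hQ0 : (Fintype.card F : ℂ) ≠ 0 := Nat.cast_ne_zero.mpr Fintype.card_ne_zero
  -- clear denominators
  have key : (Fintype.card F : ℂ) - G * K + G ^ 2 = 0 := by
    field_simp at h0
    linear_combination h0
  -- the Gauss sum squared
  have hringChar : ringChar F ≠ 2 := by
    have h : ringChar F = p := ringChar.eq F p
    rw [h]
    intro h2
    rw [h2] at hp
    exact (by norm_num : ¬ Odd 2) hp
  set χ : MulChar F ℂ := (quadraticChar F).ringHomComp (Int.castRingHom ℂ) with hχdef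
  have hχ1 : χ ≠ 1 :=
    (MulChar.ringHomComp_ne_one_iff (Int.cast_injective (α := ℂ))).mpr
      (quadraticChar_ne_one hringChar)
  have hχq : χ.IsQuadratic := (quadraticChar_isQuadratic F).comp _
  have hψp : ψ.IsPrimitive := AddChar.IsPrimitive.of_ne_one hψ
  have hGgauss : gaussSum χ ψ = G := by
    simp only [gaussSum, hGdef, hχdef, MulChar.ringHomComp_apply, Int.coe_castRingHom]
  have hG2 : G ^ 2 = χ (-1) * (Fintype.card F : ℂ) := by
    rw [← hGgauss]; exact gaussSum_sq hχ1 hχq hψp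
  have hG0 : G ≠ 0 := by
    rw [← hGgauss]
    exact gaussSum_ne_zero_of_nontrivial hQ0 hχ1 hψp
  -- the sign ε
  set ε : ℤ := quadraticChar F (-1) with hεdef
  have hχeps : χ (-1) = (ε : ℂ) := by
    simp [hχdef, hεdef]
  have hε : ε = 1 ∨ ε = -1 := by
    rcases quadraticChar_isQuadratic F (-1) with h | h | h
    · rw [quadraticChar_eq_zero_iff] at h
      exact absurd h (neg_ne_zero.mpr (one_ne_zero : (1 : F) ≠ 0))
    · exact Or.inl h
    · exact Or.inr h
  have hε2 : (ε : ℂ) * ε = 1 := by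
    rcases hε with h | h <;> rw [h] <;> norm_num
  -- derive K = (1 + ε) * G
  have hK : K = ((1 + ε : ℤ) : ℂ) * G := by
    have hQG : (Fintype.card F : ℂ) = (ε : ℂ) * G ^ 2 := by
      rw [hG2, hχeps, ← mul_assoc, hε2, one_mul]
    have h2 : G * (K - ((1 + ε : ℤ) : ℂ) * G) = 0 := by
      push_cast
      linear_combination hQG - key
    rcases mul_eq_zero.mp h2 with h | h
    · exact absurd h hG0
    · exact (sub_eq_zero.mp h)
  -- ψ takes values in p-th roots of unity
  have hpow : ∀ x : F, ψ x ^ p = 1 := by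
    intro x
    rw [← AddChar.map_nsmul_eq_pow]
    have : (p : ℕ) • x = 0 := by
      rw [nsmul_eq_mul, CharP.cast_eq_zero F p, zero_mul]
    rw [this, AddChar.map_zero_eq_one]
  obtain ⟨x₀, hx₀⟩ := AddChar.ne_one_iff.mp hψ
  set ζ : ℂ := ψ x₀ with hζdef
  have hζp : ζ ^ p = 1 := hpow x₀
  have hord : orderOf ζ = p := by
    have hdvd : orderOf ζ ∣ p := orderOf_dvd_of_pow_eq_one hζp
    rcases (Nat.Prime.eq_one_or_self_of_dvd hpprime _ hdvd) with h | h
    · exact absurd (orderOf_eq_one_iff.mp h) hx₀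
    · exact h
  have hζ : IsPrimitiveRoot ζ p := by
    have := IsPrimitiveRoot.orderOf ζ
    rwa [hord] at this
  -- write all values of ψ as powers of ζ
  choose e he using fun x : F => hζ.eq_pow_of_pow_eq_one (hpow x)
  -- the polynomials
  set P : ℤ[X] := ∑ x : Fˣ, X ^ (e ((x : F) + (α : F) * (x : F)⁻¹)) with hPdef
  set S : ℤ[X] := ∑ x : F, C (quadraticChar F x : ℤ) * X ^ (e x) with hSdef
  have haevalP : aeval ζ P = K := by
    rw [hPdef, map_sum, hKdef]
    refine Finset.sum_congr rfl fun x _ => ?_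
    rw [map_pow, aeval_X, (he _).2]
  have haevalS : aeval ζ S = G := by
    rw [hSdef, map_sum, hGdef]
    refine Finset.sum_congr rfl fun x _ => ?_
    rw [map_mul, map_pow, aeval_X, aeval_C, (he _).2]
    norm_num
  -- divisibility by the cyclotomic polynomial
  have haeval0 : aeval ζ (P - C (1 + ε) * S) = 0 := by
    rw [map_sub, map_mul, aeval_C, haevalP, haevalS, hK, eq_intCast]
    exact sub_self _
  have hmin : minpoly ℤ ζ ∣ P - C (1 + ε) * S :=
    minpoly.isIntegrallyClosed_dvd (hζ.isIntegral hpprime.pos) haeval0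
  have hcyc : cyclotomic p ℤ ∣ P - C (1 + ε) * S := by
    rwa [cyclotomic_eq_minpoly hζ hpprime.pos]
  -- evaluate at 1
  have hevdvd : (p : ℤ) ∣ (P - C (1 + ε) * S).eval 1 := by
    have := Polynomial.eval_dvd (x := (1 : ℤ)) hcyc
    rwa [eval_one_cyclotomic_prime] at this
  have hevP : P.eval 1 = (Fintype.card Fˣ : ℤ) := by
    rw [hPdef, eval_finset_sum]
    simp [Finset.card_univ]
  have hevS : S.eval 1 = 0 := by
    rw [hSdef, eval_finset_sum]
    simp only [eval_mul, eval_C, eval_pow, eval_X, one_pow, mul_one]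
    exact quadraticChar_sum_zero hringChar
  have hdvd1 : (p : ℤ) ∣ (Fintype.card Fˣ : ℤ) := by
    rwa [eval_sub, eval_mul, eval_C, hevP, hevS, mul_zero, sub_zero] at hevdvd
  have hdvdN : p ∣ Fintype.card Fˣ := by exact_mod_cast hdvd1
  have hdvdQ : p ∣ Fintype.card F := by
    obtain ⟨n, hn⟩ := FiniteField.card F p
    rw [hn.2]
    exact dvd_pow_self p n.pos.ne'
  have hcardu : Fintype.card Fˣ = Fintype.card F - 1 := Fintype.card_units (α := F)
  have hone : p ∣ 1 := by
    have h1 : Fintype.card F - (Fintype.card F - 1) = 1 := by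
      have := Fintype.card_pos (α := F)
      omega
    have h2 : p ∣ Fintype.card F - (Fintype.card F - 1) :=
      Nat.dvd_sub hdvdQ (hcardu ▸ hdvdN)
    rwa [h1] at h2
  have h3 := Nat.le_of_dvd one_pos hone
  have h4 := hpprime.two_le
  omega
end

section
/- The torsion subgroup of the group E_{γ,a}(K) of K-rational points is {O, P₀}, where O is the point at infinity (the identity element) and P₀ is the affine point (0,0). Precisely: P₀ ≠ O, P₀ + P₀ = O, and every point P ∈ E_{γ,a}(K) satisfying n·P = O for some integer n ≥ 1 equals O or P₀. -/
open Polynomial WeierstrassCurve.Affine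

namespace Stmt2Aux

open Classical

variable {F : Type*} [Field F]

lemma isCoprime_of_isUnit {R : Type*} [CommSemiring R] {a : R} (h : IsUnit a) (b : R) :
    IsCoprime a b := by
  obtain ⟨a', ha⟩ := isUnit_iff_exists_inv.1 h
  exact ⟨a', 0, by rw [zero_mul, add_zero, mul_comm]; exact ha⟩

/-- An element of `RatFunc F` whose square is a polynomial is a polynomial. -/
lemma exists_poly_of_sq (b : RatFunc F) (f : F[X])
    (hb : b ^ 2 = algebraMap F[X] (RatFunc F) f) :
    ∃ B : F[X], algebraMap F[X] (RatFunc F) B = b := by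
  have hint : IsIntegral F[X] b := by
    refine ⟨X ^ 2 - C f, monic_X_pow_sub_C f two_ne_zero, ?_⟩
    simp only [eval₂_sub, eval₂_pow, eval₂_X, eval₂_C, hb, sub_self]
  exact IsIntegrallyClosed.isIntegral_iff.mp hint

/-- Key degree/parity lemma. -/
lemma key_deg {c : F} (hc : c ≠ 0) {w A s B : F[X]} (hw : Odd w.natDegree)
    (hA : A ≠ 0) (hs : s ≠ 0) (hB : B ≠ 0)
    (hB2 : B ^ 2 = A ^ 4 + w * A ^ 2 * s ^ 2 + C c * s ^ 4) :
    A.natDegree ≠ s.natDegree ∧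
      w.natDegree + 2 * (A.natDegree + s.natDegree) < 4 * max A.natDegree s.natDegree ∧
      B.natDegree = 2 * max A.natDegree s.natDegree := by
  obtain ⟨k, hk⟩ := hw
  have hw0 : w ≠ 0 := by
    intro h; rw [h, natDegree_zero] at hk; omega
  have hCc : (C c : F[X]) ≠ 0 := C_ne_zero.mpr hc
  have hg2 : (w * A ^ 2 * s ^ 2).natDegree = w.natDegree + 2 * A.natDegree + 2 * s.natDegree := by
    rw [natDegree_mul (mul_ne_zero hw0 (pow_ne_zero _ hA)) (pow_ne_zero _ hs),
      natDegree_mul hw0 (pow_ne_zero _ hA), natDegree_pow, natDegree_pow]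
  have hg1 : (A ^ 4).natDegree = 4 * A.natDegree := by rw [natDegree_pow]
  have hg3 : (C c * s ^ 4).natDegree = 4 * s.natDegree := by
    rw [natDegree_mul hCc (pow_ne_zero _ hs), natDegree_C, natDegree_pow]; omega
  have hBsq : (B ^ 2).natDegree = 2 * B.natDegree := by rw [natDegree_pow]
  have hne : A.natDegree ≠ s.natDegree := by
    intro heq
    have h13 : (A ^ 4 + C c * s ^ 4).natDegree < (w * A ^ 2 * s ^ 2).natDegree := by
      refine lt_of_le_of_lt (natDegree_add_le _ _) ?_
      rw [hg1, hg3, hg2, heq]; omega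
    have hsum : B ^ 2 = w * A ^ 2 * s ^ 2 + (A ^ 4 + C c * s ^ 4) := by rw [hB2]; ring
    have := natDegree_add_eq_left_of_natDegree_lt h13
    rw [← hsum] at this
    rw [hBsq, hg2] at this
    omega
  rcases hne.lt_or_gt with hlt | hlt
  · have hM : max A.natDegree s.natDegree = s.natDegree := max_eq_right hlt.le
    have h13 : (A ^ 4 + C c * s ^ 4).natDegree = 4 * s.natDegree := by
      rw [natDegree_add_eq_right_of_natDegree_lt (by rw [hg1, hg3]; omega), hg3]
    rcases Nat.lt_or_ge (4 * s.natDegree) (w.natDegree + 2 * A.natDegree + 2 * s.natDegree)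
      with hcmp | hcmp
    · exfalso
      have hsum : B ^ 2 = w * A ^ 2 * s ^ 2 + (A ^ 4 + C c * s ^ 4) := by rw [hB2]; ring
      have := natDegree_add_eq_left_of_natDegree_lt (p := w * A ^ 2 * s ^ 2)
        (q := A ^ 4 + C c * s ^ 4) (by rw [hg2, h13]; omega)
      rw [← hsum, hBsq, hg2] at this
      omega
    · have hcmp' : w.natDegree + 2 * A.natDegree + 2 * s.natDegree ≠ 4 * s.natDegree := by omega
      have hlt2 : (w * A ^ 2 * s ^ 2).natDegree < (A ^ 4 + C c * s ^ 4).natDegree := by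
        rw [hg2, h13]; omega
      have hsum : B ^ 2 = (A ^ 4 + C c * s ^ 4) + w * A ^ 2 * s ^ 2 := by rw [hB2]; ring
      have := natDegree_add_eq_left_of_natDegree_lt hlt2
      rw [← hsum, hBsq, h13] at this
      refine ⟨hne, ?_, ?_⟩ <;> rw [hM] <;> omega
  · have hM : max A.natDegree s.natDegree = A.natDegree := max_eq_left hlt.le
    have h13 : (A ^ 4 + C c * s ^ 4).natDegree = 4 * A.natDegree := by
      rw [natDegree_add_eq_left_of_natDegree_lt (by rw [hg1, hg3]; omega), hg1]
    rcases Nat.lt_or_ge (4 * A.natDegree) (w.natDegree + 2 * A.natDegree + 2 * s.natDegree)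
      with hcmp | hcmp
    · exfalso
      have hsum : B ^ 2 = w * A ^ 2 * s ^ 2 + (A ^ 4 + C c * s ^ 4) := by rw [hB2]; ring
      have := natDegree_add_eq_left_of_natDegree_lt (p := w * A ^ 2 * s ^ 2)
        (q := A ^ 4 + C c * s ^ 4) (by rw [hg2, h13]; omega)
      rw [← hsum, hBsq, hg2] at this
      omega
    · have hcmp' : w.natDegree + 2 * A.natDegree + 2 * s.natDegree ≠ 4 * A.natDegree := by omega
      have hlt2 : (w * A ^ 2 * s ^ 2).natDegree < (A ^ 4 + C c * s ^ 4).natDegree := by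
        rw [hg2, h13]; omega
      have hsum : B ^ 2 = (A ^ 4 + C c * s ^ 4) + w * A ^ 2 * s ^ 2 := by rw [hB2]; ring
      have := natDegree_add_eq_left_of_natDegree_lt hlt2
      rw [← hsum, hBsq, h13] at this
      refine ⟨hne, ?_, ?_⟩ <;> rw [hM] <;> omega

lemma deg_d_le {c : F} (h2 : (2 : F) ≠ 0) (hc : c ≠ 0) {w A s B d : F[X]}
    (hcop : IsCoprime A s) (hA : A ≠ 0) (hs : s ≠ 0) (hw1 : 1 ≤ w.natDegree)
    (hB2 : B ^ 2 = A ^ 4 + w * A ^ 2 * s ^ 2 + C c * s ^ 4)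
    (hdN : d ∣ A ^ 4 - C c * s ^ 4) (hdT : d ∣ C 2 * A * B * s) :
    d.natDegree ≤ w.natDegree := by
  have hC2'' : (C (2:F) : F[X]) = 2 := map_ofNat C 2
  rw [hC2''] at hdT
  have hCc : IsUnit (C c : F[X]) := isUnit_C.mpr hc.isUnit
  have hC2 : IsUnit (C (2:F) : F[X]) := isUnit_C.mpr h2.isUnit
  have hNA : IsCoprime (A ^ 4 - C c * s ^ 4) A := by
    have h1 : IsCoprime (-(C c * s ^ 4)) A :=
      ((isCoprime_of_isUnit hCc A).mul_left (hcop.symm.pow_left)).neg_left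
    have h2' := h1.add_mul_left_left (A ^ 3)
    rwa [show -(C c * s ^ 4) + A * A ^ 3 = A ^ 4 - C c * s ^ 4 by ring] at h2'
  have hNs : IsCoprime (A ^ 4 - C c * s ^ 4) s := by
    have h1 : IsCoprime (A ^ 4) s := hcop.pow_left
    have h2' := h1.add_mul_left_left (-(C c * s ^ 3))
    rwa [show A ^ 4 + s * -(C c * s ^ 3) = A ^ 4 - C c * s ^ 4 by ring] at h2'
  have hdA : IsCoprime d A := hNA.of_isCoprime_of_dvd_left hdN
  have hds : IsCoprime d s := hNs.of_isCoprime_of_dvd_left hdN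
  have hd2 : IsCoprime d (2 : F[X]) := by
    rw [← hC2'']; exact (isCoprime_of_isUnit hC2 d).symm
  have hdB : d ∣ B := by
    have h1 : IsCoprime d (2 * A * s) := ((hd2.mul_right hdA).mul_right hds)
    refine h1.dvd_of_dvd_mul_left ?_
    rw [show (2 : F[X]) * A * s * B = 2 * A * B * s by ring]; exact hdT
  have hdG : d ∣ 2 * A ^ 2 + w * s ^ 2 := by
    have hdvd : d ∣ A ^ 2 * (2 * A ^ 2 + w * s ^ 2) := by
      rw [show A ^ 2 * ((2 : F[X]) * A ^ 2 + w * s ^ 2)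
          = B ^ 2 + (A ^ 4 - C c * s ^ 4) by rw [hB2]; ring]
      exact dvd_add (dvd_pow hdB two_ne_zero) hdN
    exact (hdA.pow_right (n := 2)).dvd_of_dvd_mul_left hdvd
  have hkey : d ^ 2 ∣ C (4 * c) - w ^ 2 := by
    have h1 : d ^ 2 ∣ s ^ 4 * (C (4 * c) - w ^ 2) := by
      rw [show s ^ 4 * (C (4 * c) - w ^ 2)
          = (2 : F[X]) ^ 2 * B ^ 2 - (2 * A ^ 2 + w * s ^ 2) ^ 2 by
        rw [hB2, show (C (4 * c) : F[X]) = 2 * 2 * C c by rw [C_mul, map_ofNat]; ring]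
        ring]
      exact dvd_sub ((pow_dvd_pow_of_dvd hdB 2).mul_left _) (pow_dvd_pow_of_dvd hdG 2)
    exact ((hds.pow).dvd_of_dvd_mul_left h1 : d ^ 2 ∣ _)
  have hRne : C (4 * c) - w ^ 2 ≠ 0 := by
    intro h0
    have : (C (4 * c) : F[X]) = w ^ 2 := by linear_combination h0
    have hdeg := congrArg natDegree this
    rw [natDegree_C, natDegree_pow] at hdeg
    omega
  have hled := natDegree_le_of_dvd hkey hRne
  have hdegR : (C (4 * c) - w ^ 2).natDegree = 2 * w.natDegree := by
    rw [natDegree_sub_eq_right_of_natDegree_lt (by rw [natDegree_C, natDegree_pow]; omega),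
      natDegree_pow]
  rw [natDegree_pow, hdegR] at hled
  omega

lemma rep_unique {A s A' s' : F[X]} (hA : A ≠ 0) (hs : s ≠ 0) (hA' : A' ≠ 0) (hs' : s' ≠ 0)
    (hcop : IsCoprime A s) (hcop' : IsCoprime A' s')
    (h : (algebraMap F[X] (RatFunc F) A / algebraMap F[X] (RatFunc F) s) ^ 2
       = (algebraMap F[X] (RatFunc F) A' / algebraMap F[X] (RatFunc F) s') ^ 2) :
    max A.natDegree s.natDegree = max A'.natDegree s'.natDegree := by
  have hπ : Function.Injective (algebraMap F[X] (RatFunc F)) :=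
    RatFunc.algebraMap_injective F
  have hπs : algebraMap F[X] (RatFunc F) s ≠ 0 := by
    simpa using fun h0 => hs (hπ (by simpa using h0))
  have hπs' : algebraMap F[X] (RatFunc F) s' ≠ 0 := by
    simpa using fun h0 => hs' (hπ (by simpa using h0))
  have hcross : A ^ 2 * s' ^ 2 = A' ^ 2 * s ^ 2 := by
    apply hπ
    have hh := h
    field_simp at hh
    simp only [map_mul, map_pow]
    linear_combination hh
  have h1 : A' ^ 2 ∣ A ^ 2 := by
    refine (hcop'.pow (m := 2) (n := 2)).dvd_of_dvd_mul_right ?_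
    exact ⟨s ^ 2, by rw [hcross]⟩
  have h2 : A ^ 2 ∣ A' ^ 2 := by
    refine (hcop.pow (m := 2) (n := 2)).dvd_of_dvd_mul_right ?_
    exact ⟨s' ^ 2, by rw [← hcross]⟩
  have h3 : s' ^ 2 ∣ s ^ 2 := by
    refine ((hcop'.symm).pow (m := 2) (n := 2)).dvd_of_dvd_mul_right ?_
    exact ⟨A ^ 2, by linear_combination -hcross⟩
  have h4 : s ^ 2 ∣ s' ^ 2 := by
    refine ((hcop.symm).pow (m := 2) (n := 2)).dvd_of_dvd_mul_right ?_
    exact ⟨A' ^ 2, by linear_combination hcross⟩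
  have e1 := natDegree_le_of_dvd h1 (pow_ne_zero _ hA)
  have e2 := natDegree_le_of_dvd h2 (pow_ne_zero _ hA')
  have e3 := natDegree_le_of_dvd h3 (pow_ne_zero _ hs)
  have e4 := natDegree_le_of_dvd h4 (pow_ne_zero _ hs')
  simp only [natDegree_pow] at e1 e2 e3 e4
  omega

lemma bezout_smul {G : Type*} [AddCommGroup G] {a b : ℕ} (hab : Nat.Coprime a b) {P : G}
    (ha : a • P = 0) (hb : b • P = 0) : P = 0 := by
  obtain ⟨u, v, huv⟩ := Nat.isCoprime_iff_coprime.mpr hab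
  calc P = (1 : ℤ) • P := (one_zsmul P).symm
    _ = (u * a + v * b) • P := by rw [huv]
    _ = u • ((a : ℤ) • P) + v • ((b : ℤ) • P) := by rw [add_zsmul, mul_zsmul, mul_zsmul]
    _ = 0 := by rw [natCast_zsmul, natCast_zsmul, ha, hb, smul_zero, smul_zero, add_zero]

lemma step {c : F} (h2 : (2 : F) ≠ 0) (hc : c ≠ 0) {w : F[X]} (hw : Odd w.natDegree)
    {x y : RatFunc F}
    (heq : y ^ 2 = x ^ 3 + algebraMap F[X] (RatFunc F) w * x ^ 2
      + algebraMap F[X] (RatFunc F) (C c) * x)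
    (hy : y ≠ 0) {A s : F[X]} (hA : A ≠ 0) (hs : s ≠ 0) (hcop : IsCoprime A s)
    (hx : x = (algebraMap F[X] (RatFunc F) A / algebraMap F[X] (RatFunc F) s) ^ 2) :
    ∃ A' s' : F[X], A' ≠ 0 ∧ s' ≠ 0 ∧ IsCoprime A' s' ∧
      ((x ^ 2 - algebraMap F[X] (RatFunc F) (C c)) / (2 * y)) ^ 2
        = (algebraMap F[X] (RatFunc F) A' / algebraMap F[X] (RatFunc F) s') ^ 2 ∧
      max A.natDegree s.natDegree < max A'.natDegree s'.natDegree := by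
  set π := algebraMap F[X] (RatFunc F) with hπdef
  have hπ : Function.Injective π := RatFunc.algebraMap_injective F
  have hπne : ∀ g : F[X], g ≠ 0 → π g ≠ 0 := fun g hg h0 => hg (hπ (by simpa using h0))
  have hπs : π s ≠ 0 := hπne s hs
  have hπA : π A ≠ 0 := hπne A hA
  have hw1 : 1 ≤ w.natDegree := hw.pos
  have h2K : (2 : RatFunc F) ≠ 0 := by
    have : π (C (2:F)) = (2 : RatFunc F) := by rw [map_ofNat (C : F →+* F[X]), map_ofNat]
    rw [← this]
    exact hπne _ (C_ne_zero.mpr h2)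
  -- construct B
  set b := y * (π s) ^ 3 / π A with hbdef
  have key : (y * π s ^ 3) ^ 2 = π A ^ 2 * π (A ^ 4 + w * A ^ 2 * s ^ 2 + C c * s ^ 4) := by
    subst hx
    rw [mul_pow, heq]
    simp only [map_add, map_mul, map_pow]
    field_simp
  have hb2 : b ^ 2 = π (A ^ 4 + w * A ^ 2 * s ^ 2 + C c * s ^ 4) := by
    rw [hbdef, div_pow, key]
    exact mul_div_cancel_left₀ _ (pow_ne_zero 2 hπA)
  obtain ⟨B, hB⟩ := exists_poly_of_sq b _ hb2
  have hbne : b ≠ 0 := by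
    apply div_ne_zero (mul_ne_zero hy (pow_ne_zero _ hπs)) hπA
  have hBne : B ≠ 0 := fun h0 => hbne (by rw [← hB, h0, map_zero])
  have hB2 : B ^ 2 = A ^ 4 + w * A ^ 2 * s ^ 2 + C c * s ^ 4 := by
    apply hπ; rw [map_pow, hB]; exact hb2
  obtain ⟨hne, hlt, hBdeg⟩ := key_deg hc hw hA hs hBne hB2
  have hyeq : y = π A * π B / (π s) ^ 3 := by
    rw [hB, hbdef]
    rw [eq_div_iff (pow_ne_zero 3 hπs)]
    field_simp
  -- N, T
  set N := A ^ 4 - C c * s ^ 4 with hNdef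
  set T := C 2 * A * B * s with hTdef
  have hNne : N ≠ 0 := by
    intro h0
    have hAC : A ^ 4 = C c * s ^ 4 := by rw [hNdef] at h0; linear_combination h0
    have := congrArg natDegree hAC
    rw [natDegree_pow, natDegree_mul (C_ne_zero.mpr hc) (pow_ne_zero _ hs), natDegree_C,
      natDegree_pow] at this
    omega
  have hC2 : (C (2:F) : F[X]) ≠ 0 := C_ne_zero.mpr h2
  have hTne : T ≠ 0 := mul_ne_zero (mul_ne_zero (mul_ne_zero hC2 hA) hBne) hs
  have hπT : π T ≠ 0 := hπne T hTne
  have hπN : π N ≠ 0 := hπne N hNne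
  have h2y : (2 : RatFunc F) * y ≠ 0 := mul_ne_zero h2K hy
  have hz : (x ^ 2 - π (C c)) / (2 * y) = π N / π T := by
    rw [div_eq_div_iff h2y hπT]
    rw [hx, hyeq, hNdef, hTdef]
    simp only [map_sub, map_mul, map_pow, map_ofNat (C : F →+* F[X]), map_ofNat]
    field_simp
  set z := π N / π T with hzdef
  have hzne : z ≠ 0 := div_ne_zero hπN hπT
  set A' := z.num with hA'def
  set s' := z.denom with hs'def
  have hA'ne : A' ≠ 0 := RatFunc.num_ne_zero hzne
  have hs'ne : s' ≠ 0 := z.denom_ne_zero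
  have hcop' : IsCoprime A' s' := z.isCoprime_num_denom
  have hπs' : π s' ≠ 0 := hπne s' hs'ne
  have hznd : π A' / π s' = z := z.num_div_denom
  have hcross : N * s' = T * A' := by
    apply hπ
    have h1 : π A' / π s' = π N / π T := by rw [hznd]
    rw [div_eq_div_iff hπs' hπT] at h1
    simp only [map_mul]
    linear_combination -h1
  have hA'N : A' ∣ N := by
    refine hcop'.dvd_of_dvd_mul_right ?_
    exact ⟨T, by linear_combination hcross⟩
  obtain ⟨d, hd⟩ := hA'N
  have hdne : d ≠ 0 := fun h0 => hNne (by rw [hd, h0, mul_zero])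
  have hTds' : T = d * s' := by
    have hcancel : A' * (d * s') = A' * T := by
      rw [← mul_assoc, ← hd]; linear_combination hcross
    exact (mul_left_cancel₀ hA'ne hcancel).symm
  have hdN : d ∣ N := ⟨A', by rw [hd]; ring⟩
  have hdT : d ∣ T := ⟨s', hTds'⟩
  have hdd : d.natDegree ≤ w.natDegree := deg_d_le h2 hc hcop hA hs hw1 hB2 hdN hdT
  -- degree bookkeeping
  set α := A.natDegree
  set σ := s.natDegree
  set M := max α σ with hMdef
  have hMle : M ≤ α + σ := max_le (Nat.le_add_right _ _) (Nat.le_add_left _ _)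
  have hdegCs : (C c * s ^ 4).natDegree = 4 * σ := by
    rw [natDegree_mul (C_ne_zero.mpr hc) (pow_ne_zero _ hs), natDegree_C, natDegree_pow]
    omega
  have hdegA4 : ((A : F[X]) ^ 4).natDegree = 4 * α := by rw [natDegree_pow]
  have hNdeg : N.natDegree = 4 * M := by
    rcases hne.lt_or_gt with hl | hl
    · rw [hNdef, natDegree_sub_eq_right_of_natDegree_lt (by rw [hdegA4, hdegCs]; omega),
        hdegCs, hMdef, max_eq_right hl.le]
    · rw [hNdef, natDegree_sub_eq_left_of_natDegree_lt (by rw [hdegA4, hdegCs]; omega),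
        hdegA4, hMdef, max_eq_left hl.le]
  have hTdeg : T.natDegree = α + 2 * M + σ := by
    rw [hTdef, natDegree_mul (mul_ne_zero (mul_ne_zero hC2 hA) hBne) hs,
      natDegree_mul (mul_ne_zero hC2 hA) hBne, natDegree_mul hC2 hA, natDegree_C, hBdeg]
    omega
  have e1 : 4 * M = A'.natDegree + d.natDegree := by
    rw [← hNdeg, hd, natDegree_mul hA'ne hdne]
  have e2 : α + 2 * M + σ = d.natDegree + s'.natDegree := by
    rw [← hTdeg, hTds', natDegree_mul hdne hs'ne]
  refine ⟨A', s', hA'ne, hs'ne, hcop', ?_, ?_⟩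
  · rw [hz, hznd]
  · have : M < A'.natDegree := by omega
    exact lt_of_lt_of_le this (le_max_left _ _)

variable {c : F} {w : F[X]} {W : WeierstrassCurve.Affine (RatFunc F)}

lemma negY_eq (ha1 : W.a₁ = 0) (ha3 : W.a₃ = 0) (x y : RatFunc F) : W.negY x y = -y := by
  rw [negY, ha1, ha3]; ring

lemma my_equation (ha1 : W.a₁ = 0) (ha2 : W.a₂ = algebraMap F[X] (RatFunc F) w)
    (ha3 : W.a₃ = 0) (ha4 : W.a₄ = algebraMap F[X] (RatFunc F) (C c)) (ha6 : W.a₆ = 0)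
    {x y : RatFunc F} (h : W.Equation x y) :
    y ^ 2 = x ^ 3 + algebraMap F[X] (RatFunc F) w * x ^ 2
      + algebraMap F[X] (RatFunc F) (C c) * x := by
  rw [equation_iff, ha1, ha2, ha3, ha4, ha6] at h
  linear_combination h

lemma addX_sq (ha1 : W.a₁ = 0) (ha2 : W.a₂ = algebraMap F[X] (RatFunc F) w)
    (ha3 : W.a₃ = 0) (ha4 : W.a₄ = algebraMap F[X] (RatFunc F) (C c))
    (h2K : (2 : RatFunc F) ≠ 0) {x y : RatFunc F}
    (heq : y ^ 2 = x ^ 3 + algebraMap F[X] (RatFunc F) w * x ^ 2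
      + algebraMap F[X] (RatFunc F) (C c) * x)
    (hy : y ≠ 0) (hyneg : y ≠ W.negY x y) :
    W.addX x x (W.slope x x y y) = ((x ^ 2 - algebraMap F[X] (RatFunc F) (C c)) / (2 * y)) ^ 2 := by
  rw [slope_of_Y_ne rfl hyneg]
  rw [negY_eq ha1 ha3]
  simp only [addX, ha1, ha2, ha4, zero_mul, sub_zero, add_zero]
  rw [show y - -y = 2 * y by ring]
  have h2y : (2 : RatFunc F) * y ≠ 0 := mul_ne_zero h2K hy
  have h4 : ((2 : RatFunc F) * y) ^ 2 ≠ 0 := pow_ne_zero _ h2y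
  apply mul_right_cancel₀ h4
  rw [div_pow, div_pow, sub_mul, sub_mul, sub_mul, div_mul_cancel₀ _ h4, div_mul_cancel₀ _ h4]
  linear_combination (-4 * algebraMap F[X] (RatFunc F) w - 8 * x) * heq

lemma no_sqrt_const (h2 : (2 : F) ≠ 0) (hc : c ≠ 0) (hw : Odd w.natDegree)
    {x y : RatFunc F}
    (heq : y ^ 2 = x ^ 3 + algebraMap F[X] (RatFunc F) w * x ^ 2
      + algebraMap F[X] (RatFunc F) (C c) * x)
    (hx2 : x ^ 2 = algebraMap F[X] (RatFunc F) (C c)) : False := by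
  have hπ : Function.Injective (algebraMap F[X] (RatFunc F)) := RatFunc.algebraMap_injective F
  have hw1 : 1 ≤ w.natDegree := hw.pos
  obtain ⟨g, hg⟩ := exists_poly_of_sq x (C c) hx2
  have hgc : g ^ 2 = C c := by apply hπ; rw [map_pow, hg]; exact hx2
  have hgdeg : g.natDegree = 0 := by
    have := congrArg natDegree hgc; rw [natDegree_pow, natDegree_C] at this; omega
  have h2X : (2 : F[X]) ≠ 0 := by
    intro h0; apply h2
    exact C_eq_zero.mp (by rw [map_ofNat]; exact h0)
  have hy2 : y ^ 2 = algebraMap F[X] (RatFunc F) (C c * (2 * g + w)) := by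
    rw [heq, show x ^ 3 = x * x ^ 2 by ring, hx2, ← hg]
    simp only [map_mul, map_add, map_ofNat]
    ring
  obtain ⟨B, hB⟩ := exists_poly_of_sq y _ hy2
  have hB2 : B ^ 2 = C c * (2 * g + w) := by apply hπ; rw [map_pow, hB]; exact hy2
  have hgw : (2 * g + w).natDegree = w.natDegree := by
    by_cases hg0 : g = 0
    · rw [hg0, mul_zero, zero_add]
    · exact natDegree_add_eq_right_of_natDegree_lt (by
        rw [natDegree_mul h2X hg0, hgdeg, natDegree_ofNat]
        omega)
  have hne2 : 2 * g + w ≠ 0 := by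
    intro h0; rw [h0, natDegree_zero] at hgw; omega
  have hrhs_ne : C c * (2 * g + w) ≠ 0 := mul_ne_zero (C_ne_zero.mpr hc) hne2
  have hBne : B ≠ 0 := fun h0 => hrhs_ne (by rw [← hB2, h0]; ring)
  have hdeg := congrArg natDegree hB2
  rw [natDegree_pow, natDegree_mul (C_ne_zero.mpr hc) hne2, natDegree_C, hgw] at hdeg
  obtain ⟨k, hk⟩ := hw; omega

lemma exists_some {P : W.Point} (hP : P ≠ 0) :
    ∃ (x y : RatFunc F) (h : W.Nonsingular x y), P = Point.some _ _ h := by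
  rcases P with _ | @⟨x, y, h⟩
  · exact absurd rfl hP
  · exact ⟨x, y, h, rfl⟩

lemma two_torsion (h2 : (2 : F) ≠ 0) (hc : c ≠ 0) (hw : Odd w.natDegree)
    (ha1 : W.a₁ = 0) (ha2 : W.a₂ = algebraMap F[X] (RatFunc F) w)
    (ha3 : W.a₃ = 0) (ha4 : W.a₄ = algebraMap F[X] (RatFunc F) (C c)) (ha6 : W.a₆ = 0)
    (h2K : (2 : RatFunc F) ≠ 0)
    (P : W.Point) (hP : P + P = 0) :
    P = 0 ∨ ∃ hh : W.Nonsingular 0 0, P = Point.some _ _ hh := by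
  have hπ : Function.Injective (algebraMap F[X] (RatFunc F)) := RatFunc.algebraMap_injective F
  have hw1 : 1 ≤ w.natDegree := hw.pos
  rcases P with _ | @⟨x, y, h⟩
  · exact Or.inl rfl
  · have hy : y = W.negY x y := by
      by_contra hy
      exact Point.some_ne_zero _ ((Point.add_self_of_Y_ne hy).symm.trans hP)
    rw [negY_eq ha1 ha3] at hy
    have hy0 : y = 0 := by
      have h2y : 2 * y = 0 := by linear_combination hy
      rcases mul_eq_zero.mp h2y with h0 | h0
      · exact absurd h0 h2K
      · exact h0
    have heq := my_equation ha1 ha2 ha3 ha4 ha6 h.1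
    rw [hy0] at heq
    by_cases hx : x = 0
    · subst hx; subst hy0
      exact Or.inr ⟨h, rfl⟩
    · exfalso
      have hquad : x ^ 2 + algebraMap F[X] (RatFunc F) w * x
          + algebraMap F[X] (RatFunc F) (C c) = 0 := by
        have hfact : x * (x ^ 2 + algebraMap F[X] (RatFunc F) w * x
            + algebraMap F[X] (RatFunc F) (C c)) = 0 := by linear_combination -heq
        rcases mul_eq_zero.mp hfact with h0 | h0
        · exact absurd h0 hx
        · exact h0
      set u := x.num with hu
      set t := x.denom with ht
      have hund : algebraMap F[X] (RatFunc F) u / algebraMap F[X] (RatFunc F) t = x :=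
        x.num_div_denom
      have hπt : algebraMap F[X] (RatFunc F) t ≠ 0 := fun h0 =>
        x.denom_ne_zero (hπ (by simpa using h0))
      have hq2 : (algebraMap F[X] (RatFunc F) u) ^ 2
          + algebraMap F[X] (RatFunc F) w * algebraMap F[X] (RatFunc F) u
            * algebraMap F[X] (RatFunc F) t
          + algebraMap F[X] (RatFunc F) (C c) * (algebraMap F[X] (RatFunc F) t) ^ 2
          = (x ^ 2 + algebraMap F[X] (RatFunc F) w * x + algebraMap F[X] (RatFunc F) (C c))
            * (algebraMap F[X] (RatFunc F) t) ^ 2 := by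
        rw [← hund]
        field_simp
      have hrel : u ^ 2 + w * u * t + C c * t ^ 2 = 0 := by
        apply hπ
        simp only [map_add, map_mul, map_pow, map_zero]
        rw [hq2, hquad, zero_mul]
      have hune : u ≠ 0 := RatFunc.num_ne_zero hx
      have htne : t ≠ 0 := x.denom_ne_zero
      have htdvd : t ∣ u ^ 2 := ⟨-(w * u) - C c * t, by linear_combination hrel⟩
      have htunit : IsUnit t := (x.isCoprime_num_denom.symm.pow_right (n := 2)).isUnit_of_dvd htdvd
      have htdeg : t.natDegree = 0 := natDegree_eq_zero_of_isUnit htunit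
      have hfact2 : u * (u + w * t) = -(C c) * t ^ 2 := by linear_combination hrel
      have hrne : (-(C c) : F[X]) * t ^ 2 ≠ 0 :=
        mul_ne_zero (neg_ne_zero.mpr (C_ne_zero.mpr hc)) (pow_ne_zero _ htne)
      have huwne : u + w * t ≠ 0 := by
        intro h0; rw [h0, mul_zero] at hfact2; exact hrne hfact2.symm
      have hdeg := congrArg natDegree hfact2
      have hw0 : w ≠ 0 := fun h0 => by rw [h0] at hw1; simp [natDegree_zero] at hw1
      have hwtdeg : (w * t).natDegree = w.natDegree := by
        rw [natDegree_mul hw0 htne, htdeg]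
        omega
      rw [natDegree_mul hune huwne, natDegree_mul (neg_ne_zero.mpr (C_ne_zero.mpr hc))
        (pow_ne_zero _ htne), natDegree_neg, natDegree_C, natDegree_pow, htdeg] at hdeg
      have hudeg : u.natDegree = 0 := by omega
      have huw : (u + w * t).natDegree = w.natDegree :=
        (natDegree_add_eq_right_of_natDegree_lt (by rw [hwtdeg]; omega)).trans hwtdeg
      omega

lemma four_torsion (h2 : (2 : F) ≠ 0) (hc : c ≠ 0) (hw : Odd w.natDegree)
    (ha1 : W.a₁ = 0) (ha2 : W.a₂ = algebraMap F[X] (RatFunc F) w)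
    (ha3 : W.a₃ = 0) (ha4 : W.a₄ = algebraMap F[X] (RatFunc F) (C c)) (ha6 : W.a₆ = 0)
    (h2K : (2 : RatFunc F) ≠ 0)
    (P : W.Point) (hh : W.Nonsingular 0 0) (hP : P + P = Point.some _ _ hh) : False := by
  rcases P with _ | @⟨x, y, h⟩
  · rw [← Point.zero_def, add_zero] at hP
    exact Point.some_ne_zero hh hP.symm
  · have hyneg : y ≠ W.negY x y := by
      intro hy
      exact Point.some_ne_zero hh (((Point.add_self_of_Y_eq hy).symm.trans hP).symm)
    have hy0 : y ≠ 0 := fun h0 => hyneg (by rw [negY_eq ha1 ha3, h0, neg_zero])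
    have heq := my_equation ha1 ha2 ha3 ha4 ha6 h.1
    have hxadd := (Point.add_self_of_Y_ne hyneg).symm.trans hP
    rw [Point.some.injEq] at hxadd
    obtain ⟨hx0, -⟩ := hxadd
    have hsq := addX_sq ha1 ha2 ha3 ha4 h2K heq hy0 hyneg
    rw [hx0] at hsq
    have h2y : (2 : RatFunc F) * y ≠ 0 := mul_ne_zero h2K hy0
    have hdiv : (x ^ 2 - algebraMap F[X] (RatFunc F) (C c)) / (2 * y) = 0 :=
      pow_eq_zero_iff two_ne_zero |>.mp hsq.symm
    have hnum : x ^ 2 - algebraMap F[X] (RatFunc F) (C c) = 0 :=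
      (div_eq_zero_iff.mp hdiv).resolve_right h2y
    exact no_sqrt_const h2 hc hw heq (by linear_combination hnum)

theorem no_odd (h2 : (2 : F) ≠ 0) (hc : c ≠ 0) (hw : Odd w.natDegree)
    (ha1 : W.a₁ = 0) (ha2 : W.a₂ = algebraMap F[X] (RatFunc F) w)
    (ha3 : W.a₃ = 0) (ha4 : W.a₄ = algebraMap F[X] (RatFunc F) (C c)) (ha6 : W.a₆ = 0)
    (m : ℕ) (hm : Odd m) (P : W.Point) (hP : m • P = 0) : P = 0 := by
  by_contra hP0
  have h2K : (2 : RatFunc F) ≠ 0 := by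
    have hh : algebraMap F[X] (RatFunc F) (C (2:F)) = (2 : RatFunc F) := by
      rw [map_ofNat (C : F →+* F[X]), map_ofNat]
    rw [← hh]
    intro h0
    exact (C_ne_zero.mpr h2) (RatFunc.algebraMap_injective F (by rw [h0, map_zero]))
  have hcop2 : ∀ j : ℕ, Nat.Coprime (2 ^ j) m := fun j =>
    (Nat.coprime_two_left.mpr hm).pow_left j
  have hiter : ∀ j : ℕ, (2 ^ j) • P ≠ 0 := by
    intro j hj
    exact hP0 (bezout_smul (hcop2 j) hj hP)
  have base : ∀ Q : W.Point, Q ≠ 0 → m • Q = 0 →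
      ∃ (x y : RatFunc F) (h : W.Nonsingular x y) (A s : F[X]),
        Q = Point.some _ _ h ∧ A ≠ 0 ∧ s ≠ 0 ∧ IsCoprime A s ∧
        x = (algebraMap F[X] (RatFunc F) A / algebraMap F[X] (RatFunc F) s) ^ 2 := by
    intro Q hQ0 hQm
    have hhalf : 2 * ((m + 1) / 2) = m + 1 := by obtain ⟨k, hk⟩ := hm; omega
    set Q2 := ((m + 1) / 2) • Q with hQ2def
    have hQQ : Q2 + Q2 = Q := by
      rw [← two_nsmul, hQ2def, smul_smul, hhalf, succ_nsmul, hQm, zero_add]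
    have hQ2ne : Q2 ≠ 0 := fun h0 => hQ0 (by rw [← hQQ, h0, add_zero])
    obtain ⟨x₁, y₁, h₁, hQ2eq⟩ := exists_some hQ2ne
    have hy₁ : y₁ ≠ W.negY x₁ y₁ := by
      intro hy
      apply hQ0
      rw [← hQQ, hQ2eq, Point.add_self_of_Y_eq hy]
    have heq₁ := my_equation ha1 ha2 ha3 ha4 ha6 h₁.1
    have hy₁0 : y₁ ≠ 0 := fun h0 => hy₁ (by rw [negY_eq ha1 ha3, h0, neg_zero])
    have hQeq : Q = Point.some _ _ (nonsingular_add h₁ h₁ fun hxy => hy₁ hxy.2) := by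
      rw [← hQQ, hQ2eq, Point.add_self_of_Y_ne hy₁]
    have hsq := addX_sq ha1 ha2 ha3 ha4 h2K heq₁ hy₁0 hy₁
    set z : RatFunc F := (x₁ ^ 2 - algebraMap F[X] (RatFunc F) (C c)) / (2 * y₁) with hzdef
    have hzne : z ≠ 0 := by
      intro hz0
      have hnum : x₁ ^ 2 - algebraMap F[X] (RatFunc F) (C c) = 0 :=
        (div_eq_zero_iff.mp hz0).resolve_right (mul_ne_zero h2K hy₁0)
      exact no_sqrt_const h2 hc hw heq₁ (by linear_combination hnum)
    refine ⟨_, _, nonsingular_add h₁ h₁ fun hxy => hy₁ hxy.2, z.num, z.denom, hQeq,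
      RatFunc.num_ne_zero hzne, z.denom_ne_zero, z.isCoprime_num_denom, ?_⟩
    rw [z.num_div_denom]
    exact hsq
  obtain ⟨x0, y0, h0, A0, s0, hPe, hA0, hs0, hcop0, hx0⟩ := base P hP0 hP
  have ind : ∀ j : ℕ, ∃ (x y : RatFunc F) (h : W.Nonsingular x y) (A s : F[X]),
      (2 ^ j) • P = Point.some _ _ h ∧ A ≠ 0 ∧ s ≠ 0 ∧ IsCoprime A s ∧
      x = (algebraMap F[X] (RatFunc F) A / algebraMap F[X] (RatFunc F) s) ^ 2 ∧
      max A0.natDegree s0.natDegree + j ≤ max A.natDegree s.natDegree := by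
    intro j
    induction j with
    | zero =>
      exact ⟨x0, y0, h0, A0, s0, by rw [pow_zero, one_nsmul]; exact hPe, hA0, hs0, hcop0, hx0,
        by omega⟩
    | succ j ih =>
      obtain ⟨x, y, h, A, s, hje, hA, hs, hcop, hx, hM⟩ := ih
      have hstep_pt : (2 ^ (j + 1)) • P = Point.some _ _ h + Point.some _ _ h := by
        rw [pow_succ, mul_comm, ← smul_smul, hje, two_nsmul]
      have hne2 : Point.some _ _ h + Point.some _ _ h ≠ (0 : W.Point) := by
        rw [← hstep_pt]; exact hiter (j + 1)
      have hyneg : y ≠ W.negY x y := fun hy => hne2 (Point.add_self_of_Y_eq hy)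
      have hy0 : y ≠ 0 := fun h0 => hyneg (by rw [negY_eq ha1 ha3, h0, neg_zero])
      have heq := my_equation ha1 ha2 ha3 ha4 ha6 h.1
      obtain ⟨A', s', hA', hs', hcop', hsq', hlt⟩ := step h2 hc hw heq hy0 hA hs hcop hx
      refine ⟨_, _, nonsingular_add h h fun hxy => hyneg hxy.2, A', s', ?_, hA', hs', hcop', ?_, ?_⟩
      · rw [hstep_pt, Point.add_self_of_Y_ne hyneg]
      · rw [addX_sq ha1 ha2 ha3 ha4 h2K heq hy0 hyneg]
        exact hsq'
      · omega
  have hm0 : 0 < m := hm.pos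
  rcases eq_or_ne m 1 with hm1 | hm1
  · exact hP0 (by rw [hm1, one_nsmul] at hP; exact hP)
  have hφpos : 1 ≤ Nat.totient m := Nat.totient_pos.mpr hm0
  set j := Nat.totient m with hjdef
  have hmod : 2 ^ j ≡ 1 [MOD m] := Nat.ModEq.pow_totient (Nat.coprime_two_left.mpr hm)
  have h1le : 1 ≤ 2 ^ j := Nat.one_le_pow _ _ (by norm_num)
  have hdvd : m ∣ 2 ^ j - 1 := (Nat.modEq_iff_dvd' h1le).mp hmod.symm
  obtain ⟨k, hk⟩ := hdvd
  have h2j : 2 ^ j = 1 + m * k := by omega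
  have hfix : (2 ^ j) • P = P := by
    have h1 : (m * k) • P = (0 : W.Point) := by
      rw [mul_comm m k, ← smul_smul, hP, ← zero_nsmul P, smul_smul, mul_zero]
    rw [h2j, add_nsmul, one_nsmul, h1, add_zero]
  obtain ⟨x, y, h, A, s, hje, hA, hs, hcop, hx, hM⟩ := ind j
  rw [hfix, hPe] at hje
  rw [Point.some.injEq] at hje
  obtain ⟨hxe, -⟩ := hje
  have huniq := rep_unique hA0 hs0 hA hs hcop0 hcop (by rw [← hx0, hxe]; exact hx)
  omega

theorem pow2_torsion (h2 : (2 : F) ≠ 0) (hc : c ≠ 0) (hw : Odd w.natDegree)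
    (ha1 : W.a₁ = 0) (ha2 : W.a₂ = algebraMap F[X] (RatFunc F) w)
    (ha3 : W.a₃ = 0) (ha4 : W.a₄ = algebraMap F[X] (RatFunc F) (C c)) (ha6 : W.a₆ = 0)
    (h2K : (2 : RatFunc F) ≠ 0) :
    ∀ (v : ℕ) (P : W.Point), (2 ^ v) • P = 0 →
      P = 0 ∨ ∃ hh : W.Nonsingular 0 0, P = Point.some _ _ hh := by
  intro v
  induction v with
  | zero =>
    intro P hP
    rw [pow_zero, one_nsmul] at hP
    exact Or.inl hP
  | succ v ih =>
    intro P hP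
    have h2P : (2 ^ v) • (2 • P) = 0 := by
      rw [smul_smul, ← pow_succ]; exact hP
    rcases ih (2 • P) h2P with h0 | ⟨hh, hP₀⟩
    · exact two_torsion h2 hc hw ha1 ha2 ha3 ha4 ha6 h2K P (by rw [← two_nsmul]; exact h0)
    · exact absurd (four_torsion h2 hc hw ha1 ha2 ha3 ha4 ha6 h2K P hh
        (by rw [← two_nsmul]; exact hP₀)) not_false

theorem no_torsion (h2 : (2 : F) ≠ 0) (hc : c ≠ 0) (hw : Odd w.natDegree)
    (ha1 : W.a₁ = 0) (ha2 : W.a₂ = algebraMap F[X] (RatFunc F) w)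
    (ha3 : W.a₃ = 0) (ha4 : W.a₄ = algebraMap F[X] (RatFunc F) (C c)) (ha6 : W.a₆ = 0)
    (P : W.Point) (n : ℕ) (hn : 1 ≤ n) (hP : n • P = 0) :
    P = 0 ∨ ∃ hh : W.Nonsingular 0 0, P = Point.some _ _ hh := by
  have h2K : (2 : RatFunc F) ≠ 0 := by
    have hh : algebraMap F[X] (RatFunc F) (C (2:F)) = (2 : RatFunc F) := by
      rw [map_ofNat (C : F →+* F[X]), map_ofNat]
    rw [← hh]
    intro h0
    exact (C_ne_zero.mpr h2) (RatFunc.algebraMap_injective F (by rw [h0, map_zero]))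
  have hn0 : n ≠ 0 := by omega
  set v := n.factorization 2 with hv
  set m := n / 2 ^ v with hmdef
  have hkey : 2 ^ v * m = n := Nat.ordProj_mul_ordCompl_eq_self n 2
  have hmodd : Odd m := by
    have hnd := Nat.not_dvd_ordCompl Nat.prime_two hn0
    rw [Nat.odd_iff]
    rcases Nat.mod_two_eq_zero_or_one m with hmm | hmm
    · exact absurd (Nat.dvd_of_mod_eq_zero hmm) hnd
    · exact hmm
  have hsm : m • ((2 ^ v) • P) = 0 := by
    rw [smul_smul, mul_comm, hkey, hP]
  have h0 := no_odd h2 hc hw ha1 ha2 ha3 ha4 ha6 m hmodd ((2 ^ v) • P) hsm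
  exact pow2_torsion h2 hc hw ha1 ha2 ha3 ha4 ha6 h2K v P h0

end Stmt2Aux

open Classical in
/-- **Theorem 2.4 of the paper.**
Let `𝔽_q` be a finite field of odd characteristic `p`, `K = 𝔽_q(t)`, `γ ∈ 𝔽_qˣ` and
`a ≥ 1`, and let `E_{γ,a}` be the Weierstrass curve `y² = x³ + ℘_a(t)·x² + γ·x` over `K`
where `℘_a(t) = t^{q^a} − t`.  The torsion subgroup of `E_{γ,a}(K)` is `{O, P₀}`, where
`O` is the point at infinity and `P₀ = (0,0)`: the point `(0,0)` is a nonsingular point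
of the curve, `P₀ ≠ O`, `P₀ + P₀ = O`, and every `P ∈ E_{γ,a}(K)` with `n·P = O` for
some integer `n ≥ 1` equals `O` or `P₀`. -/
theorem stmt2 (Fq : Type*) [Field Fq] [Fintype Fq]
    (p : ℕ) [Fact p.Prime] [CharP Fq p] (hp : Odd p)
    (γ : Fqˣ) (a : ℕ) (ha : 1 ≤ a)
    (W : WeierstrassCurve.Affine (RatFunc Fq))
    (hW : W = { a₁ := 0, a₂ := RatFunc.X ^ Fintype.card Fq ^ a - RatFunc.X, a₃ := 0,
                a₄ := algebraMap Fq (RatFunc Fq) (γ : Fq), a₆ := 0 }) :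
    ∃ h₀ : W.Nonsingular 0 0,
      WeierstrassCurve.Affine.Point.some _ _ h₀ ≠ 0 ∧
      WeierstrassCurve.Affine.Point.some _ _ h₀ + WeierstrassCurve.Affine.Point.some _ _ h₀ = 0 ∧
      ∀ P : W.Point, (∃ n : ℕ, 1 ≤ n ∧ n • P = 0) →
        P = 0 ∨ P = WeierstrassCurve.Affine.Point.some _ _ h₀ := by
  classical
  open Polynomial WeierstrassCurve.Affine Stmt2Aux in
  obtain ⟨nn, hpp, hcard⟩ := FiniteField.card Fq p
  have hp2 : p ≠ 2 := by
    intro h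
    rw [h] at hp
    exact (Nat.not_odd_iff_even.mpr even_two) hp
  have hp3 : 3 ≤ p := by
    have := hpp.two_le; omega
  have h2F : (2 : Fq) ≠ 0 := by
    intro h0
    have h2' : ((2 : ℕ) : Fq) = 0 := by exact_mod_cast h0
    have hdvd : p ∣ 2 := (CharP.cast_eq_zero_iff Fq p 2).mp h2'
    have := Nat.le_of_dvd (by norm_num) hdvd
    omega
  set c : Fq := (γ : Fq) with hcdef
  have hc : c ≠ 0 := γ.ne_zero
  set D := Fintype.card Fq ^ a with hD
  have hcard3 : 3 ≤ Fintype.card Fq := by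
    rw [hcard]
    calc 3 ≤ p := hp3
      _ ≤ p ^ (nn : ℕ) := Nat.le_self_pow (by positivity) p
  have hD3 : 3 ≤ D := by
    calc 3 ≤ Fintype.card Fq := hcard3
      _ ≤ D := Nat.le_self_pow (by omega) _
  have hDodd : Odd D := by
    rw [hD, hcard, ← pow_mul]
    exact hp.pow
  set w : Polynomial Fq := X ^ D - X with hwdef
  have hwdeg : w.natDegree = D := by
    rw [hwdef, natDegree_sub_eq_left_of_natDegree_lt
      (by rw [natDegree_X, natDegree_X_pow]; omega), natDegree_X_pow]
  have hwodd : Odd w.natDegree := hwdeg ▸ hDodd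
  have ha1 : W.a₁ = 0 := by rw [hW]
  have ha2 : W.a₂ = algebraMap (Polynomial Fq) (RatFunc Fq) w := by
    rw [hW, hwdef]
    simp only [map_sub, map_pow, RatFunc.algebraMap_X]
  have ha3 : W.a₃ = 0 := by rw [hW]
  have ha4 : W.a₄ = algebraMap (Polynomial Fq) (RatFunc Fq) (C c) := by
    rw [hW]
    show algebraMap Fq (RatFunc Fq) c = _
    rw [IsScalarTower.algebraMap_apply Fq (Polynomial Fq) (RatFunc Fq), Polynomial.algebraMap_eq]
  have ha6 : W.a₆ = 0 := by rw [hW]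
  have ha4ne : W.a₄ ≠ 0 := by
    rw [ha4]
    intro h0
    apply hc
    exact C_eq_zero.mp ((map_eq_zero_iff _ (RatFunc.algebraMap_injective Fq)).mp h0)
  have h₀ : W.Nonsingular 0 0 := (nonsingular_zero (W := W)).mpr ⟨ha6, Or.inr ha4ne⟩
  refine ⟨h₀, Point.some_ne_zero h₀, ?_, ?_⟩
  · exact Point.add_self_of_Y_eq (by rw [negY_eq ha1 ha3, neg_zero])
  · rintro P ⟨n, hn, hnP⟩
    rcases no_torsion h2F hc hwodd ha1 ha2 ha3 ha4 ha6 P n hn hnP with h0 | ⟨hh, hPe⟩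
    · exact Or.inl h0
    · exact Or.inr (by rw [hPe])
end

section
/- Assume ψ is nontrivial. For every α ∈ Fˣ, the sum ∑_{x∈Fˣ} ψ(x + α·x⁻¹) is congruent to −1 modulo the ideal generated by ζ_p − 1 in the ring of integers of ℚ(ζ_p); i.e., there exists an algebraic integer c in ℚ(ζ_p) with ∑_{x∈Fˣ} ψ(x + α·x⁻¹) + 1 = (ζ_p − 1)·c. In particular the normalized Kloosterman sum Kl(ψ,α) = −∑_{x∈Fˣ} ψ(x + α·x⁻¹) is a p-adic unit (Lemma 5.1 of the paper). -/
/-- **Lemma 5.1 of the paper.**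
Let `p` be an odd prime, `F` a finite field of characteristic `p`, `ζ_p` a primitive
`p`-th root of unity in the cyclotomic field `ℚ(ζ_p)`, and `ψ` a nontrivial additive
character of `F` with values in `ℚ(ζ_p)`.  For every `α ∈ Fˣ`, the sum
`∑_{x∈Fˣ} ψ(x + α·x⁻¹)` is congruent to `−1` modulo `ζ_p − 1`: there is an algebraic
integer `c` of `ℚ(ζ_p)` with `∑_{x∈Fˣ} ψ(x + α·x⁻¹) + 1 = (ζ_p − 1)·c`.
(In particular the normalized Kloosterman sum is a `p`-adic unit.) -/
theorem stmt4 (p : ℕ) [hp : Fact p.Prime] (hodd : Odd p)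
    (F : Type*) [Field F] [Fintype F] [DecidableEq F] [CharP F p]
    (ζ : CyclotomicField p ℚ) (hζ : IsPrimitiveRoot ζ p)
    (ψ : AddChar F (CyclotomicField p ℚ)) (hψ : ψ ≠ 1) (α : Fˣ) :
    ∃ c : CyclotomicField p ℚ, IsIntegral ℤ c ∧
      (∑ x : Fˣ, ψ ((x : F) + (α : F) * (x : F)⁻¹)) + 1 = (ζ - 1) * c := by
  have hp1 : 1 < p := hp.out.one_lt
  haveI : NeZero p := ⟨hp.out.pos.ne'⟩
  have hζint : IsIntegral ℤ ζ := hζ.isIntegral hp.out.pos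
  have hpowint : ∀ j : ℕ, IsIntegral ℤ (ζ ^ j) := fun j => hζint.pow j
  -- p = (ζ - 1) * d with d integral
  have hsum0 : ∑ i ∈ Finset.range p, ζ ^ i = 0 := hζ.geom_sum_eq_zero hp1
  set d := -∑ i ∈ Finset.range p, ∑ j ∈ Finset.range i, ζ ^ j with hd
  have hdint : IsIntegral ℤ d :=
    IsIntegral.neg (IsIntegral.sum _ fun i _ => IsIntegral.sum _ fun j _ => hpowint j)
  have hpd : (p : CyclotomicField p ℚ) = (ζ - 1) * d := by
    have h1 : ∑ i ∈ Finset.range p, ((1 : CyclotomicField p ℚ) - ζ ^ i)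
        = (p : CyclotomicField p ℚ) := by
      rw [Finset.sum_sub_distrib, hsum0, Finset.sum_const, Finset.card_range,
        nsmul_eq_mul, mul_one, sub_zero]
    have hterm : ∀ i : ℕ, (1 : CyclotomicField p ℚ) - ζ ^ i
        = (ζ - 1) * -(∑ j ∈ Finset.range i, ζ ^ j) := fun i => by
      linear_combination geom_sum_mul ζ i
    rw [← h1, Finset.sum_congr rfl fun i _ => hterm i, ← Finset.mul_sum, hd,
      ← Finset.sum_neg_distrib]
  -- each ψ value is ζ^k
  have key : ∀ y : F, ∃ c : CyclotomicField p ℚ,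
      IsIntegral ℤ c ∧ ψ y - 1 = (ζ - 1) * c := by
    intro y
    have hpow : ψ y ^ p = 1 := by
      rw [← AddChar.map_nsmul_eq_pow]
      have h0 : (p : ℕ) • y = 0 := by
        rw [nsmul_eq_mul, CharP.cast_eq_zero, zero_mul]
      rw [h0, AddChar.map_zero_eq_one]
    obtain ⟨i, _, hi⟩ := hζ.eq_pow_of_pow_eq_one hpow
    refine ⟨∑ j ∈ Finset.range i, ζ ^ j, IsIntegral.sum _ fun j _ => hpowint j, ?_⟩
    rw [← hi, mul_comm, geom_sum_mul]
  choose cf hcfint hcf using key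
  -- card F = p ^ n
  obtain ⟨n, -, hcard⟩ := FiniteField.card F p
  have hone : (1 : ℕ) ≤ Fintype.card F := Fintype.card_pos
  refine ⟨(∑ x : Fˣ, cf ((x : F) + (α : F) * (x : F)⁻¹)) + d * ((ζ - 1) * d) ^ ((n : ℕ) - 1),
    ?_, ?_⟩
  · exact IsIntegral.add (IsIntegral.sum _ fun x _ => hcfint _)
      (IsIntegral.mul hdint (((hζint.sub isIntegral_one).mul hdint).pow _))
  · have hunits : ((Fintype.card Fˣ : ℕ) : CyclotomicField p ℚ)
        = (Fintype.card F : CyclotomicField p ℚ) - 1 := by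
      rw [Fintype.card_units]
      push_cast [Nat.cast_sub hone]
      ring
    have hq : ((Fintype.card F : ℕ) : CyclotomicField p ℚ)
        = (ζ - 1) * (d * ((ζ - 1) * d) ^ ((n : ℕ) - 1)) := by
      rw [hcard]
      push_cast
      rw [hpd]
      have hn : ((n : ℕ) - 1) + 1 = (n : ℕ) := Nat.succ_pred_eq_of_pos n.pos
      calc ((ζ - 1) * d) ^ (n : ℕ) = ((ζ - 1) * d) ^ (((n : ℕ) - 1) + 1) := by rw [hn]
        _ = (ζ - 1) * (d * ((ζ - 1) * d) ^ ((n : ℕ) - 1)) := by ring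
    calc (∑ x : Fˣ, ψ ((x : F) + (α : F) * (x : F)⁻¹)) + 1
        = (∑ x : Fˣ, ((ψ ((x : F) + (α : F) * (x : F)⁻¹) - 1) + 1)) + 1 := by
          simp
      _ = (∑ x : Fˣ, (ζ - 1) * cf ((x : F) + (α : F) * (x : F)⁻¹))
            + ((Fintype.card Fˣ : ℕ) : CyclotomicField p ℚ) + 1 := by
          rw [Finset.sum_add_distrib]
          simp [hcf]
      _ = (ζ - 1) * (∑ x : Fˣ, cf ((x : F) + (α : F) * (x : F)⁻¹))
            + ((Fintype.card F : ℕ) : CyclotomicField p ℚ) := by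
          rw [hunits, ← Finset.mul_sum]; ring
      _ = _ := by rw [hq]; ring
end

section
/- For every γ ∈ Fˣ, one has the identity in ℂ: ∑_{z∈F} ∑_{x∈F} λ(x³ + z·x² + γ·x)·ψ(z) = ( ∑_{x∈F} λ(x)·ψ(x) ) · ( ∑_{x∈Fˣ} ψ(x + γ·x⁻¹) ). Equivalently, with the normalizations g(ψ) = −∑_{x∈F} λ(x)ψ(x) and Kl(ψ,γ) = −∑_{x∈Fˣ} ψ(x+γ·x⁻¹), the double character sum S(F,ψ,γ) := ∑_{z∈F}∑_{x∈F} λ(x³+zx²+γx)ψ(z) equals g(ψ)·Kl(ψ,γ) (Lemma 4.2 of the paper). No nontriviality assumption on ψ is needed: for trivial ψ both sides vanish. -/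
/-- **Lemma 4.2 of the paper.**
Let `F` be a finite field of odd characteristic `p`, `λ` its quadratic character
(extended by `λ(0) = 0`), with values in `ℂ`, and `ψ` an additive character of `F`
with values in `ℂ`.  For every `γ ∈ Fˣ` one has
`∑_{z∈F} ∑_{x∈F} λ(x³ + z·x² + γ·x)·ψ(z)
  = (∑_{x∈F} λ(x)·ψ(x)) · (∑_{x∈Fˣ} ψ(x + γ·x⁻¹))`.
No nontriviality assumption on `ψ` is needed. -/
theorem stmt5 (p : ℕ) [Fact p.Prime] (hp : Odd p)
    (F : Type*) [Field F] [Fintype F] [DecidableEq F] [CharP F p]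
    (ψ : AddChar F ℂ) (γ : Fˣ) :
    ∑ z : F, ∑ x : F,
        ((quadraticChar F (x ^ 3 + z * x ^ 2 + (γ : F) * x) : ℤ) : ℂ) * ψ z
      = (∑ x : F, ((quadraticChar F x : ℤ) : ℂ) * ψ x)
          * ∑ x : Fˣ, ψ ((x : F) + (γ : F) * (x : F)⁻¹) := by
  set G : ℂ := ∑ x : F, ((quadraticChar F x : ℤ) : ℂ) * ψ x with hG
  rw [Finset.sum_comm]
  have key : ∀ x : F, x ≠ 0 →
      (∑ z : F, ((quadraticChar F (x ^ 3 + z * x ^ 2 + (γ : F) * x) : ℤ) : ℂ) * ψ z)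
        = G * ψ (-x - (γ : F) * x⁻¹) := by
    intro x hx
    have hfac : ∀ z : F, x ^ 3 + z * x ^ 2 + (γ : F) * x
        = x ^ 2 * (x + z + (γ : F) * x⁻¹) := by
      intro z; field_simp
    have hchi : ∀ z : F,
        (quadraticChar F (x ^ 3 + z * x ^ 2 + (γ : F) * x))
          = quadraticChar F (x + z + (γ : F) * x⁻¹) := by
      intro z
      rw [hfac z, map_mul, quadraticChar_sq_one' hx, one_mul]
    calc (∑ z : F, ((quadraticChar F (x ^ 3 + z * x ^ 2 + (γ : F) * x) : ℤ) : ℂ) * ψ z)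
        = ∑ z : F, ((quadraticChar F (x + z + (γ : F) * x⁻¹) : ℤ) : ℂ) * ψ z := by
          refine Finset.sum_congr rfl fun z _ => ?_; rw [hchi z]
      _ = ∑ w : F, ((quadraticChar F w : ℤ) : ℂ) * ψ (w - (x + (γ : F) * x⁻¹)) := by
          refine Fintype.sum_equiv (Equiv.addLeft (x + (γ : F) * x⁻¹)) _ _ fun z => ?_
          simp only [Equiv.coe_addLeft, add_sub_cancel_left]
          have h2 : x + z + (γ : F) * x⁻¹ = x + (γ : F) * x⁻¹ + z := by ring
          rw [h2]
      _ = G * ψ (-x - (γ : F) * x⁻¹) := by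
          rw [hG, Finset.sum_mul]
          refine Finset.sum_congr rfl fun w _ => ?_
          rw [sub_eq_add_neg, AddChar.map_add_eq_mul]
          have h3 : -(x + (γ : F) * x⁻¹) = -x - (γ : F) * x⁻¹ := by ring
          rw [h3, mul_assoc]
  rw [← Finset.add_sum_erase _ _ (Finset.mem_univ (0 : F))]
  have h0 : (∑ z : F, ((quadraticChar F ((0:F) ^ 3 + z * (0:F) ^ 2 + (γ : F) * 0) : ℤ) : ℂ) * ψ z) = 0 := by
    simp
  rw [h0, zero_add]
  rw [Finset.sum_congr rfl fun x hx => key x (Finset.ne_of_mem_erase hx)]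
  rw [← Finset.mul_sum]
  congr 1
  have hu : ∑ x : Fˣ, ψ ((x : F) + (γ : F) * (x : F)⁻¹)
      = ∑ x ∈ Finset.univ.erase (0:F), ψ (x + (γ : F) * x⁻¹) := by
    refine Finset.sum_bij' (fun (u : Fˣ) _ => (u : F))
      (fun x hx => Units.mk0 x (Finset.ne_of_mem_erase hx)) ?_ ?_ ?_ ?_ ?_
    · intro u _; simp [Finset.mem_erase]
    · intro x hx; exact Finset.mem_univ _
    · intro u _; simp
    · intro x hx; simp
    · intro u _; rfl
  rw [hu]
  refine Finset.sum_bij' (fun x _ => -x) (fun x _ => -x) ?_ ?_ ?_ ?_ ?_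
  · intro x hx
    rw [Finset.mem_erase] at hx ⊢
    exact ⟨neg_ne_zero.2 hx.1, Finset.mem_univ _⟩
  · intro x hx
    rw [Finset.mem_erase] at hx ⊢
    exact ⟨neg_ne_zero.2 hx.1, Finset.mem_univ _⟩
  · intro x _; simp
  · intro x _; simp
  · intro x hx
    have hx0 : x ≠ 0 := Finset.ne_of_mem_erase hx
    congr 1
    rw [mul_comm ((γ:F)) (-x)⁻¹, ← div_eq_inv_mul, div_neg]
    ring
end

section
/- For all γ, γ′ ∈ 𝔽_qˣ and all integers a, a′ ≥ 1 with (γ,a) ≠ (γ′,a′), the j-invariants satisfy j(E_{γ,a}) ≠ j(E_{γ′,a′}) in K; consequently the elliptic curves E_{γ,a} are pairwise non-isomorphic over an algebraic closure of K (first part of Proposition 2.2 of the paper). -/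
open Polynomial
set_option maxHeartbeats 1000000

/-- **First part of Proposition 2.2 of the paper.**
Let `𝔽_q` be a finite field of odd characteristic `p` and `K = 𝔽_q(t)`.  For
`γ, γ′ ∈ 𝔽_qˣ` and integers `a, a′ ≥ 1` with `(γ,a) ≠ (γ′,a′)`, the `j`-invariants
(`j = c₄³/Δ`, defined since the discriminants are nonzero) of the Weierstrass curves
`E_{γ,a} : y² = x³ + ℘_a(t)x² + γx` and `E_{γ′,a′} : y² = x³ + ℘_{a′}(t)x² + γ′x`
are distinct elements of `K`; consequently the curves `E_{γ,a}` are pairwise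
non-isomorphic over an algebraic closure of `K`. -/
theorem stmt6 (Fq : Type*) [Field Fq] [Fintype Fq]
    (p : ℕ) [Fact p.Prime] [CharP Fq p] (hp : Odd p)
    (γ γ' : Fqˣ) (a a' : ℕ) (ha : 1 ≤ a) (ha' : 1 ≤ a')
    (hne : (γ, a) ≠ (γ', a'))
    (W W' : WeierstrassCurve (RatFunc Fq))
    (hW : W = { a₁ := 0, a₂ := RatFunc.X ^ Fintype.card Fq ^ a - RatFunc.X, a₃ := 0,
                a₄ := algebraMap Fq (RatFunc Fq) (γ : Fq), a₆ := 0 })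
    (hW' : W' = { a₁ := 0, a₂ := RatFunc.X ^ Fintype.card Fq ^ a' - RatFunc.X, a₃ := 0,
                  a₄ := algebraMap Fq (RatFunc Fq) (γ' : Fq), a₆ := 0 }) :
    W.c₄ ^ 3 / W.Δ ≠ W'.c₄ ^ 3 / W'.Δ := by
  intro heq
  have hq : 2 ≤ Fintype.card Fq := Fintype.one_lt_card
  set q := Fintype.card Fq with hqdef
  have hp2 : p ≠ 2 := by rintro rfl; exact (by decide : ¬ Odd 2) hp
  have h2 : (2 : Fq) ≠ 0 := by
    intro h
    have h' : ((2 : ℕ) : Fq) = 0 := by push_cast; exact h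
    have := (CharP.cast_eq_zero_iff Fq p 2).mp h'
    exact hp2 ((Nat.prime_dvd_prime_iff_eq Fact.out Nat.prime_two).mp this)
  have hg : (γ : Fq) ≠ 0 := γ.ne_zero
  have hg' : (γ' : Fq) ≠ 0 := γ'.ne_zero
  have h16 : (16 : Fq) ≠ 0 := by
    have : (16 : Fq) = 2 ^ 4 := by norm_num
    rw [this]; exact pow_ne_zero _ h2
  set φ := algebraMap (Polynomial Fq) (RatFunc Fq) with hφ
  have hφinj : Function.Injective φ := RatFunc.algebraMap_injective Fq
  obtain ⟨S, hSdef⟩ : ∃ S : Polynomial Fq, S = X ^ q ^ a - X := ⟨_, rfl⟩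
  obtain ⟨S', hS'def⟩ : ∃ T : Polynomial Fq, T = X ^ q ^ a' - X := ⟨_, rfl⟩
  have hQ : 2 ≤ q ^ a := le_trans hq (Nat.le_self_pow (by omega) q)
  have hQ' : 2 ≤ q ^ a' := le_trans hq (Nat.le_self_pow (by omega) q)
  have hSdeg : S.natDegree = q ^ a := by
    rw [hSdef, natDegree_sub_eq_left_of_natDegree_lt, natDegree_X_pow]
    rw [natDegree_X_pow, natDegree_X]; omega
  have hS'deg : S'.natDegree = q ^ a' := by
    rw [hS'def, natDegree_sub_eq_left_of_natDegree_lt, natDegree_X_pow]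
    rw [natDegree_X_pow, natDegree_X]; omega
  have hsub : ∀ (T : Polynomial Fq) (n : ℕ) (c : Fq), T.natDegree = n → 2 ≤ n →
      (T ^ 2 - C c).natDegree = 2 * n ∧ T ^ 2 - C c ≠ 0 := by
    intro T n c hT hn
    have hd : (T ^ 2 - C c).natDegree = 2 * n := by
      rw [natDegree_sub_eq_left_of_natDegree_lt, natDegree_pow, hT, mul_comm]
      rw [natDegree_pow, hT]
      exact lt_of_le_of_lt (natDegree_C c).le (by omega)
    exact ⟨hd, fun h0 => by simp [h0] at hd; omega⟩
  obtain ⟨hd1, hn1⟩ := hsub S (q ^ a) (3 * (γ : Fq)) hSdeg hQ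
  obtain ⟨hd2, hn2⟩ := hsub S (q ^ a) (4 * (γ : Fq)) hSdeg hQ
  obtain ⟨hd1', hn1'⟩ := hsub S' (q ^ a') (3 * (γ' : Fq)) hS'deg hQ'
  obtain ⟨hd2', hn2'⟩ := hsub S' (q ^ a') (4 * (γ' : Fq)) hS'deg hQ'
  have halg : ∀ c : Fq, algebraMap Fq (RatFunc Fq) c = φ (C c) := fun c => rfl
  have hXmap : φ X = RatFunc.X := RatFunc.algebraMap_X
  have hc4 : W.c₄ = φ (C (16 : Fq) * (S ^ 2 - C (3 * (γ : Fq)))) := by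
    subst hW
    simp only [WeierstrassCurve.c₄, WeierstrassCurve.b₂, WeierstrassCurve.b₄, halg, hSdef,
      map_mul, map_sub, map_pow, map_ofNat, hXmap]
    ring
  have hc4' : W'.c₄ = φ (C (16 : Fq) * (S' ^ 2 - C (3 * (γ' : Fq)))) := by
    subst hW'
    simp only [WeierstrassCurve.c₄, WeierstrassCurve.b₂, WeierstrassCurve.b₄, halg, hS'def,
      map_mul, map_sub, map_pow, map_ofNat, hXmap]
    ring
  have hΔ : W.Δ = φ (C (16 * (γ : Fq) ^ 2) * (S ^ 2 - C (4 * (γ : Fq)))) := by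
    subst hW
    simp only [WeierstrassCurve.Δ, WeierstrassCurve.b₂, WeierstrassCurve.b₄,
      WeierstrassCurve.b₆, WeierstrassCurve.b₈, halg, hSdef,
      map_mul, map_sub, map_pow, map_ofNat, hXmap]
    ring
  have hΔ' : W'.Δ = φ (C (16 * (γ' : Fq) ^ 2) * (S' ^ 2 - C (4 * (γ' : Fq)))) := by
    subst hW'
    simp only [WeierstrassCurve.Δ, WeierstrassCurve.b₂, WeierstrassCurve.b₄,
      WeierstrassCurve.b₆, WeierstrassCurve.b₈, halg, hS'def,
      map_mul, map_sub, map_pow, map_ofNat, hXmap]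
    ring
  have hDne : C (16 * (γ : Fq) ^ 2) * (S ^ 2 - C (4 * (γ : Fq))) ≠ 0 :=
    mul_ne_zero (by simpa using mul_ne_zero h16 (pow_ne_zero 2 hg)) hn2
  have hD'ne : C (16 * (γ' : Fq) ^ 2) * (S' ^ 2 - C (4 * (γ' : Fq))) ≠ 0 :=
    mul_ne_zero (by simpa using mul_ne_zero h16 (pow_ne_zero 2 hg')) hn2'
  rw [hc4, hc4', hΔ, hΔ'] at heq
  rw [div_eq_div_iff (fun h => hDne (hφinj (by simpa using h)))
      (fun h => hD'ne (hφinj (by simpa using h)))] at heq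
  rw [← map_pow, ← map_pow, ← map_mul, ← map_mul] at heq
  have E := hφinj heq
  have hC16 : (C (16:Fq)) ≠ 0 := by simpa using h16
  have hL : ((C (16 : Fq) * (S ^ 2 - C (3 * (γ : Fq)))) ^ 3 *
      (C (16 * (γ' : Fq) ^ 2) * (S' ^ 2 - C (4 * (γ' : Fq))))).natDegree
      = 6 * q ^ a + 2 * q ^ a' := by
    rw [natDegree_mul (pow_ne_zero _ (mul_ne_zero hC16 hn1)) hD'ne,
      natDegree_pow, natDegree_C_mul h16, natDegree_C_mul (mul_ne_zero h16 (pow_ne_zero 2 hg')),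
      hd1, hd2']
    ring
  have hR : ((C (16 : Fq) * (S' ^ 2 - C (3 * (γ' : Fq)))) ^ 3 *
      (C (16 * (γ : Fq) ^ 2) * (S ^ 2 - C (4 * (γ : Fq))))).natDegree
      = 6 * q ^ a' + 2 * q ^ a := by
    rw [natDegree_mul (pow_ne_zero _ (mul_ne_zero hC16 hn1')) hDne,
      natDegree_pow, natDegree_C_mul h16, natDegree_C_mul (mul_ne_zero h16 (pow_ne_zero 2 hg)),
      hd1', hd2]
    ring
  have haa' : a = a' := by
    have hdeg := congrArg Polynomial.natDegree E
    rw [hL, hR] at hdeg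
    have hQQ : q ^ a = q ^ a' := by omega
    exact Nat.pow_right_injective hq hQQ
  subst haa'
  have hSS : S' = S := hS'def.trans hSdef.symm
  rw [hSS] at E
  obtain ⟨A, hAdef⟩ : ∃ A : Polynomial Fq, A = C ((2:Fq) ^ 16) *
      (C ((γ' : Fq) ^ 2) * (X - C (3 * (γ : Fq))) ^ 3 * (X - C (4 * (γ' : Fq))) -
       C ((γ : Fq) ^ 2) * (X - C (3 * (γ' : Fq))) ^ 3 * (X - C (4 * (γ : Fq)))) := ⟨_, rfl⟩
  have hAcomp : A.comp (S ^ 2) = 0 := by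
    rw [hAdef]
    simp only [map_mul, map_pow, map_ofNat] at E
    simp only [sub_comp, mul_comp, pow_comp, C_comp, X_comp]
    simp only [map_mul, map_pow, map_ofNat]
    linear_combination E
  have hA0 : A = 0 := by
    rcases comp_eq_zero_iff.mp hAcomp with h | ⟨_, h⟩
    · exact h
    · exfalso
      have hXX := congrArg Polynomial.natDegree h
      rw [natDegree_pow, hSdeg, natDegree_C] at hXX
      omega
  have heval := congrArg (Polynomial.eval (4 * (γ : Fq))) hA0
  rw [hAdef] at heval
  simp only [eval_mul, eval_sub, eval_pow, eval_C, eval_X, eval_zero] at heval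
  have hγγ' : (γ : Fq) = (γ' : Fq) := by
    have key : ((γ : Fq) - γ') * (2 ^ 18 * (γ' : Fq) ^ 2 * (γ : Fq) ^ 3) = 0 := by
      linear_combination heval
    rcases mul_eq_zero.mp key with h | h
    · exact sub_eq_zero.mp h
    · exact absurd h
        (mul_ne_zero (mul_ne_zero (pow_ne_zero _ h2) (pow_ne_zero _ hg')) (pow_ne_zero _ hg))
  exact hne (by rw [Prod.ext_iff]; exact ⟨Units.ext hγγ', rfl⟩)
end

section
/- For every γ ∈ 𝔽_qˣ and every integer a ≥ 1, the Weierstrass curve E_{γ,a} has discriminant Δ = 16·γ²·(℘_a(t)² − 4γ), which is a nonzero element of K (so E_{γ,a} is an elliptic curve), and its j-invariant equals j(E_{γ,a}) = 2⁸·(℘_a(t)² − 3γ)³ / (γ²·(℘_a(t)² − 4γ)). Moreover j(E_{γ,a}) does not lie in the constant subfield 𝔽_q of K; i.e., the elliptic curve E_{γ,a} is non-isotrivial. -/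
/-- **Discriminant, `j`-invariant and non-isotriviality of `E_{γ,a}` (§2.1 of the paper).**
Let `𝔽_q` be a finite field of odd characteristic `p`, `K = 𝔽_q(t)`,
`℘_a(t) = t^{q^a} − t`, `γ ∈ 𝔽_qˣ`, `a ≥ 1`.  The Weierstrass curve
`E_{γ,a} : y² = x³ + ℘_a(t)·x² + γ·x` has discriminant `Δ = 16·γ²·(℘_a(t)² − 4γ)`,
which is nonzero (so `E_{γ,a}` is an elliptic curve); its `j`-invariant (`j = c₄³/Δ`)
equals `2⁸·(℘_a(t)² − 3γ)³ / (γ²·(℘_a(t)² − 4γ))`; and `j` does not lie in the constant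
subfield `𝔽_q` of `K`, i.e. `E_{γ,a}` is non-isotrivial. -/
theorem stmt8 (Fq : Type*) [Field Fq] [Fintype Fq]
    (p : ℕ) [Fact p.Prime] [CharP Fq p] (hp : Odd p)
    (γ : Fqˣ) (a : ℕ) (ha : 1 ≤ a)
    (W : WeierstrassCurve (RatFunc Fq))
    (hW : W = { a₁ := 0, a₂ := RatFunc.X ^ Fintype.card Fq ^ a - RatFunc.X, a₃ := 0,
                a₄ := algebraMap Fq (RatFunc Fq) (γ : Fq), a₆ := 0 }) :
    W.Δ = 16 * algebraMap Fq (RatFunc Fq) (γ : Fq) ^ 2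
        * ((RatFunc.X ^ Fintype.card Fq ^ a - RatFunc.X) ^ 2
            - 4 * algebraMap Fq (RatFunc Fq) (γ : Fq)) ∧
    W.Δ ≠ 0 ∧
    W.c₄ ^ 3 / W.Δ
        = 2 ^ 8 * ((RatFunc.X ^ Fintype.card Fq ^ a - RatFunc.X) ^ 2
              - 3 * algebraMap Fq (RatFunc Fq) (γ : Fq)) ^ 3
            / (algebraMap Fq (RatFunc Fq) (γ : Fq) ^ 2
              * ((RatFunc.X ^ Fintype.card Fq ^ a - RatFunc.X) ^ 2
                  - 4 * algebraMap Fq (RatFunc Fq) (γ : Fq))) ∧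
    W.c₄ ^ 3 / W.Δ ∉ Set.range (algebraMap Fq (RatFunc Fq)) := by
  have h2 : (2 : Fq) ≠ 0 := by
    intro h
    have hdvd : p ∣ 2 := (CharP.cast_eq_zero_iff Fq p 2).mp (by exact_mod_cast h)
    have hp2 : p = 2 := (Nat.prime_dvd_prime_iff_eq Fact.out Nat.prime_two).mp hdvd
    rw [hp2] at hp
    exact (Nat.not_odd_iff_even.mpr (by norm_num)) hp
  have h16 : (16 : Fq) ≠ 0 := by
    have h : (16 : Fq) = 2 ^ 4 := by norm_num
    rw [h]; exact pow_ne_zero _ h2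
  have hγ0 : (γ : Fq) ≠ 0 := γ.ne_zero
  have hmapinj : Function.Injective (algebraMap Fq (RatFunc Fq)) :=
    (algebraMap Fq (RatFunc Fq)).injective
  subst hW
  set q := Fintype.card Fq with hq
  set n := q ^ a with hn
  set T : RatFunc Fq := RatFunc.X ^ n - RatFunc.X with hTdef
  set c : RatFunc Fq := algebraMap Fq (RatFunc Fq) (γ : Fq) with hcdef
  have hq2 : 1 < q := Fintype.one_lt_card
  have hn1 : 1 < n := Nat.one_lt_pow (by omega) hq2
  set P : Polynomial Fq := Polynomial.X ^ n - Polynomial.X with hP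
  set φ := algebraMap (Polynomial Fq) (RatFunc Fq) with hφ
  have hφinj : Function.Injective φ := RatFunc.algebraMap_injective Fq
  have hPdeg : P.natDegree = n := by
    rw [hP, Polynomial.natDegree_sub_eq_left_of_natDegree_lt, Polynomial.natDegree_X_pow]
    rw [Polynomial.natDegree_X_pow, Polynomial.natDegree_X]; omega
  have hPne : P ≠ 0 := fun h => by rw [h, Polynomial.natDegree_zero] at hPdeg; omega
  have hP2deg : (P ^ 2).natDegree = 2 * n := by
    rw [Polynomial.natDegree_pow'
      (pow_ne_zero 2 (Polynomial.leadingCoeff_ne_zero.mpr hPne)), hPdeg]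
  set D : Polynomial Fq := P ^ 2 - Polynomial.C (4 * (γ : Fq)) with hD
  have hDdeg : D.natDegree = 2 * n := by
    rw [hD, Polynomial.natDegree_sub_eq_left_of_natDegree_lt, hP2deg]
    rw [hP2deg]
    have := Polynomial.natDegree_C (4 * (γ : Fq))
    omega
  have hDne : D ≠ 0 := fun h => by rw [h, Polynomial.natDegree_zero] at hDdeg; omega
  have hT : T = φ P := by
    rw [hTdef, hP, map_sub, map_pow, hφ, RatFunc.algebraMap_X]
  have hCφ : ∀ x : Fq, φ (Polynomial.C x) = algebraMap Fq (RatFunc Fq) x := fun x => by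
    rw [hφ, RatFunc.algebraMap_C, RatFunc.algebraMap_eq_C]
  have hγφ : c = φ (Polynomial.C (γ : Fq)) := by rw [hCφ, hcdef]
  have hDφ : T ^ 2 - 4 * c = φ D := by
    simp only [hD, map_sub, map_pow, Polynomial.C_mul, map_mul, hCφ, map_ofNat, ← hT, ← hcdef]
  have hcne : c ≠ 0 := by
    rw [hcdef]
    exact fun h => hγ0 (hmapinj (by simpa using h))
  have h16R : (16 : RatFunc Fq) ≠ 0 := by
    rw [← map_ofNat (algebraMap Fq (RatFunc Fq)) 16]
    exact fun h => h16 (hmapinj (by simpa using h))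
  have hTDne : T ^ 2 - 4 * c ≠ 0 := by
    rw [hDφ]
    exact fun h => hDne (hφinj (by simpa using h))
  set E : WeierstrassCurve (RatFunc Fq) :=
    { a₁ := 0, a₂ := T, a₃ := 0, a₄ := c, a₆ := 0 } with hE
  have hΔval : E.Δ = 16 * c ^ 2 * (T ^ 2 - 4 * c) := by
    simp only [hE, WeierstrassCurve.Δ, WeierstrassCurve.b₂, WeierstrassCurve.b₄,
      WeierstrassCurve.b₆, WeierstrassCurve.b₈]
    ring
  have hc4 : E.c₄ = 16 * T ^ 2 - 48 * c := by
    simp only [hE, WeierstrassCurve.c₄, WeierstrassCurve.b₂, WeierstrassCurve.b₄]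
    ring
  have hΔne : E.Δ ≠ 0 := by
    rw [hΔval]
    exact mul_ne_zero (mul_ne_zero h16R (pow_ne_zero 2 hcne)) hTDne
  refine ⟨hΔval, hΔne, ?_, ?_⟩
  · rw [hc4, hΔval,
      div_eq_div_iff (mul_ne_zero (mul_ne_zero h16R (pow_ne_zero 2 hcne)) hTDne)
        (mul_ne_zero (pow_ne_zero 2 hcne) hTDne)]
    ring
  · rintro ⟨r, hr⟩
    rw [hc4, hΔval] at hr
    have key : (16 * T ^ 2 - 48 * c) ^ 3
        = algebraMap Fq (RatFunc Fq) r * (16 * c ^ 2 * (T ^ 2 - 4 * c)) := by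
      rw [eq_comm, div_eq_iff (mul_ne_zero (mul_ne_zero h16R (pow_ne_zero 2 hcne)) hTDne)] at hr
      exact hr
    set A : Polynomial Fq := Polynomial.C (16 : Fq) * P ^ 2 - Polynomial.C (48 * (γ : Fq))
      with hA
    set B : Polynomial Fq := Polynomial.C ((16 : Fq) * (γ : Fq) ^ 2) * D with hB
    have hAφ : φ A = 16 * T ^ 2 - 48 * c := by
      simp only [hA, map_sub, Polynomial.C_mul, map_mul, map_pow, hCφ, map_ofNat,
        ← hT, ← hcdef]
    have hBφ : φ B = 16 * c ^ 2 * (T ^ 2 - 4 * c) := by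
      simp only [hB, Polynomial.C_mul, map_mul, map_pow, hCφ, map_ofNat, ← hDφ, ← hcdef]
    have hrφ : φ (Polynomial.C r) = algebraMap Fq (RatFunc Fq) r := hCφ r
    have hpoly : A ^ 3 = Polynomial.C r * B := by
      apply hφinj
      rw [map_pow, hAφ, map_mul, hBφ, hrφ]
      exact key
    have hAdeg : A.natDegree = 2 * n := by
      rw [hA, Polynomial.natDegree_sub_eq_left_of_natDegree_lt,
        Polynomial.natDegree_C_mul h16, hP2deg]
      rw [Polynomial.natDegree_C_mul h16, hP2deg]
      have := Polynomial.natDegree_C (48 * (γ : Fq))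
      omega
    have hAne : A ≠ 0 := fun h => by rw [h, Polynomial.natDegree_zero] at hAdeg; omega
    have hA3deg : (A ^ 3).natDegree = 6 * n := by
      rw [Polynomial.natDegree_pow'
        (pow_ne_zero 3 (Polynomial.leadingCoeff_ne_zero.mpr hAne)), hAdeg]
      ring
    have hRdeg : (Polynomial.C r * B).natDegree ≤ 2 * n := by
      calc (Polynomial.C r * B).natDegree
          ≤ (Polynomial.C r).natDegree + B.natDegree := Polynomial.natDegree_mul_le
        _ ≤ 0 + ((Polynomial.C ((16 : Fq) * (γ : Fq) ^ 2)).natDegree + D.natDegree) := by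
            rw [Polynomial.natDegree_C, hB]
            exact Nat.add_le_add_left Polynomial.natDegree_mul_le _
        _ ≤ 2 * n := by rw [Polynomial.natDegree_C, hDdeg]; omega
    rw [hpoly] at hA3deg
    omega
end

section
/- For every γ ∈ 𝔽_qˣ and every integer a ≥ 1, the polynomial (t^{q^a} − t)² − 4γ ∈ 𝔽_q[t] is squarefree. Consequently, ℘_a(t)² − 4γ is not the square of any element of K = 𝔽_q(t), so the quadratic polynomial X² + ℘_a(t)·X + γ has no root in K. -/
open Polynomial

/-- **Squarefreeness of `℘_a(t)² − 4γ` (used in §2.3, §2.4 of the paper).**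
Let `𝔽_q` be a finite field of odd characteristic `p` and `℘_a(t) = t^{q^a} − t`.
For every `γ ∈ 𝔽_qˣ` and every integer `a ≥ 1`, the polynomial
`(t^{q^a} − t)² − 4γ ∈ 𝔽_q[t]` is squarefree.  Consequently `℘_a(t)² − 4γ` is not a
square in `K = 𝔽_q(t)`, so the quadratic `X² + ℘_a(t)·X + γ` has no root in `K`. -/
theorem stmt9 (Fq : Type*) [Field Fq] [Fintype Fq]
    (p : ℕ) [Fact p.Prime] [CharP Fq p] (hp : Odd p)
    (γ : Fqˣ) (a : ℕ) (ha : 1 ≤ a) :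
    Squarefree ((Polynomial.X ^ Fintype.card Fq ^ a - Polynomial.X) ^ 2
        - Polynomial.C (4 * (γ : Fq))) ∧
    (¬∃ r : RatFunc Fq, r ^ 2 = (RatFunc.X ^ Fintype.card Fq ^ a - RatFunc.X) ^ 2
        - 4 * algebraMap Fq (RatFunc Fq) (γ : Fq)) ∧
    ∀ r : RatFunc Fq,
      r ^ 2 + (RatFunc.X ^ Fintype.card Fq ^ a - RatFunc.X) * r
          + algebraMap Fq (RatFunc Fq) (γ : Fq) ≠ 0 := by
  -- notation
  set q := Fintype.card Fq with hq
  have hp2 : (p : ℕ) ≠ 2 := by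
    rintro rfl
    exact (by norm_num : ¬ Odd 2) hp
  have h2 : (2 : Fq) ≠ 0 := by
    intro h
    have hd : p ∣ 2 := (CharP.cast_eq_zero_iff Fq p 2).mp (by exact_mod_cast h)
    exact hp2 ((Nat.prime_dvd_prime_iff_eq Fact.out Nat.prime_two).mp hd)
  have hc : (4 * (γ : Fq)) ≠ 0 := by
    have h4 : (4 : Fq) ≠ 0 := by
      have : (4 : Fq) = 2 * 2 := by norm_num
      rw [this]
      exact mul_ne_zero h2 h2
    exact mul_ne_zero h4 (Units.ne_zero γ)
  set g : Polynomial Fq := X ^ q ^ a - X with hg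
  set f : Polynomial Fq := g ^ 2 - C (4 * (γ : Fq)) with hf
  have hqa0 : ((q ^ a : ℕ) : Fq) = 0 := by
    have : ((q : ℕ) : Fq) = 0 := by
      rw [hq]; simp
    rw [Nat.cast_pow, this, zero_pow (by omega)]
  have hq2 : 2 ≤ q ^ a := by
    calc 2 ≤ q := Fintype.one_lt_card
    _ ≤ q ^ a := Nat.le_self_pow (by omega) q
  -- derivative of g is -1
  have hdg : derivative g = -1 := by
    rw [hg]
    simp [derivative_X_pow, hqa0]
  have hdf : derivative f = -(C 2 * g) := by
    rw [hf]
    rw [derivative_sub, derivative_C, derivative_pow, hdg]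
    push_cast
    ring
  -- separability
  have hsep : f.Separable := by
    rw [Polynomial.Separable, hdf]
    refine ⟨-C (4 * (γ : Fq))⁻¹, -(C (2⁻¹ * (4 * (γ : Fq))⁻¹) * g), ?_⟩
    rw [hf]
    have e1 : (C (2⁻¹ * (4 * (γ : Fq))⁻¹) : Polynomial Fq) * C 2
        = C (4 * (γ : Fq))⁻¹ := by
      rw [← C_mul]; congr 1; field_simp
    have e2 : (C (4 * (γ : Fq))⁻¹ : Polynomial Fq) * C (4 * (γ : Fq)) = 1 := by
      rw [← C_mul, inv_mul_cancel₀ hc, C_1]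
    linear_combination g ^ 2 * e1 + e2
  have hsf : Squarefree f := hsep.squarefree
  -- degree of f
  have hgdeg : g.natDegree = q ^ a := by
    rw [hg]
    rw [Polynomial.natDegree_sub_eq_left_of_natDegree_lt] <;>
      simp [Polynomial.natDegree_X_pow, Polynomial.natDegree_X] <;> omega
  have hfdeg : f.natDegree = 2 * q ^ a := by
    rw [hf, Polynomial.natDegree_sub_C, Polynomial.natDegree_pow, hgdeg]
  have hfu : ¬ IsUnit f := by
    intro h
    have := Polynomial.natDegree_eq_zero_of_isUnit h
    omega
  -- image of f in RatFunc
  have hmap : algebraMap (Polynomial Fq) (RatFunc Fq) f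
      = (RatFunc.X ^ q ^ a - RatFunc.X) ^ 2
        - 4 * algebraMap Fq (RatFunc Fq) (γ : Fq) := by
    rw [hf, hg]
    push_cast [map_sub, map_pow, map_mul, RatFunc.algebraMap_X, RatFunc.algebraMap_C,
      RatFunc.algebraMap_eq_C]
    simp
    exact map_ofNat RatFunc.C 4
  -- not a square
  have hnsq : ¬∃ r : RatFunc Fq, r ^ 2 = (RatFunc.X ^ q ^ a - RatFunc.X) ^ 2
      - 4 * algebraMap Fq (RatFunc Fq) (γ : Fq) := by
    rintro ⟨r, hr⟩
    rw [← hmap] at hr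
    have hint : IsIntegral (Polynomial Fq) r := by
      refine ⟨X ^ 2 - C f, ?_, ?_⟩
      · apply Polynomial.monic_X_pow_sub_C _ (by norm_num)
      · simp [Polynomial.eval₂_sub, Polynomial.eval₂_pow, hr]
    obtain ⟨s, hs⟩ := IsIntegrallyClosed.isIntegral_iff.mp hint
    have hs2 : s ^ 2 = f := by
      apply IsFractionRing.injective (Polynomial Fq) (RatFunc Fq)
      rw [map_pow, hs, hr]
    have : IsUnit s := hsf s (by rw [← sq, hs2])
    exact hfu (by rw [← hs2, sq]; exact this.mul this)
  refine ⟨hsf, hnsq, ?_⟩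
  -- no root of the quadratic
  intro r hr
  apply hnsq
  refine ⟨2 * r + (RatFunc.X ^ q ^ a - RatFunc.X), ?_⟩
  have : (2 * r + (RatFunc.X ^ q ^ a - RatFunc.X)) ^ 2
      = 4 * (r ^ 2 + (RatFunc.X ^ q ^ a - RatFunc.X) * r
          + algebraMap Fq (RatFunc Fq) (γ : Fq))
        + ((RatFunc.X ^ q ^ a - RatFunc.X) ^ 2
          - 4 * algebraMap Fq (RatFunc Fq) (γ : Fq)) := by ring
  rw [this, hr, mul_zero, zero_add]
end

section
/- Assume ψ is nontrivial. For every α ∈ Fˣ, the Kloosterman sum Kl(ψ,α) is nonzero, and moreover Kl(ψ,α)² ≠ 4·Q in ℂ. (Equivalently, the Kloosterman angle θ ∈ [0,π] defined by Kl(ψ,α) = 2√Q·cos θ satisfies θ ∉ {0, π/2, π}; Remark 6.2(1) of the paper.) -/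
/-- **Remark 6.2(1) of the paper.**
Let `F` be a finite field of odd characteristic `p` with `Q` elements and `ψ` a nontrivial
additive character of `F` with values in `ℂ`.  For every `α ∈ Fˣ`, the normalized
Kloosterman sum `Kl(ψ,α) = −∑_{x∈Fˣ} ψ(x + α·x⁻¹)` is nonzero, and `Kl(ψ,α)² ≠ 4·Q`
in `ℂ`.  (Equivalently, the Kloosterman angle `θ ∈ [0,π]` with `Kl(ψ,α) = 2√Q·cos θ`
satisfies `θ ∉ {0, π/2, π}`.) -/
theorem stmt10 (p : ℕ) [Fact p.Prime] (hp : Odd p)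
    (F : Type*) [Field F] [Fintype F] [DecidableEq F] [CharP F p]
    (ψ : AddChar F ℂ) (hψ : ψ ≠ 1) (α : Fˣ) :
    (-∑ x : Fˣ, ψ ((x : F) + (α : F) * (x : F)⁻¹)) ≠ 0 ∧
      (-∑ x : Fˣ, ψ ((x : F) + (α : F) * (x : F)⁻¹)) ^ 2 ≠ 4 * (Fintype.card F : ℂ) := by
  have hprime : p.Prime := Fact.out
  have : NeZero p := ⟨hprime.ne_zero⟩
  obtain ⟨a, ha⟩ := AddChar.ne_one_iff.mp hψ
  have hpow : ∀ y : F, ψ y ^ p = 1 := by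
    intro y
    rw [← AddChar.map_nsmul_eq_pow, nsmul_eq_mul, CharP.cast_eq_zero F p, zero_mul,
      AddChar.map_zero_eq_one]
  set ζ := ψ a with hζdef
  have hord : orderOf ζ = p := orderOf_eq_prime (hpow a) ha
  have hprim : IsPrimitiveRoot ζ p := hord ▸ IsPrimitiveRoot.orderOf ζ
  have hk : ∀ x : Fˣ, ∃ i : ℕ, ζ ^ i = ψ ((x : F) + (α : F) * (x : F)⁻¹) := by
    intro x
    obtain ⟨i, _, hi⟩ := hprim.eq_pow_of_pow_eq_one (hpow _)
    exact ⟨i, hi⟩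
  choose k hkk using hk
  set G : Polynomial ℤ := ∑ x : Fˣ, Polynomial.X ^ (k x) with hG
  have hGζ : Polynomial.aeval ζ G = ∑ x : Fˣ, ψ ((x : F) + (α : F) * (x : F)⁻¹) := by
    rw [hG, map_sum]
    exact Finset.sum_congr rfl fun x _ => by
      rw [map_pow, Polynomial.aeval_X, hkk]
  have hcard : 1 ≤ Fintype.card F := Fintype.card_pos
  have hG1 : G.eval 1 = (Fintype.card F : ℤ) - 1 := by
    rw [hG, Polynomial.eval_finset_sum]
    simp only [Polynomial.eval_pow, Polynomial.eval_X, one_pow, Finset.sum_const,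
      Finset.card_univ, nsmul_eq_mul, mul_one]
    rw [Fintype.card_units]
    push_cast [Nat.cast_sub hcard]
    omega
  have key : ∀ g : Polynomial ℤ, Polynomial.aeval ζ g = 0 → (p : ℤ) ∣ g.eval 1 := by
    intro g hg
    have hmin : Polynomial.cyclotomic p ℤ = minpoly ℤ ζ :=
      Polynomial.cyclotomic_eq_minpoly hprim hprime.pos
    have hint : IsIntegral ℤ ζ := hprim.isIntegral hprime.pos
    have hdvd : minpoly ℤ ζ ∣ g := minpoly.isIntegrallyClosed_dvd hint hg
    rw [← hmin] at hdvd
    have := Polynomial.eval_dvd (x := (1 : ℤ)) hdvd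
    rwa [Polynomial.eval_one_cyclotomic_prime] at this
  have hpQ : (p : ℤ) ∣ (Fintype.card F : ℤ) := by
    obtain ⟨n, hn⟩ := FiniteField.card F p
    rw [hn.2]
    exact_mod_cast dvd_pow_self p n.ne_zero
  have hnotp1 : ¬ ((p : ℤ) ∣ 1) := by
    intro h
    have := Int.le_of_dvd one_pos h
    have hp2 := hprime.two_le
    omega
  constructor
  · intro h0
    have hS : ∑ x : Fˣ, ψ ((x : F) + (α : F) * (x : F)⁻¹) = 0 := by
      rwa [neg_eq_zero] at h0
    have hd : (p : ℤ) ∣ G.eval 1 := key G (by rw [hGζ, hS])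
    rw [hG1] at hd
    exact hnotp1 (by simpa using dvd_sub hpQ hd)
  · intro h4
    set Q : ℤ := (Fintype.card F : ℤ) with hQ
    have haev : Polynomial.aeval ζ (G ^ 2 - Polynomial.C (4 * Q)) = 0 := by
      rw [map_sub, map_pow, hGζ, Polynomial.aeval_C]
      have : (∑ x : Fˣ, ψ ((x : F) + (α : F) * (x : F)⁻¹)) ^ 2
          = 4 * (Fintype.card F : ℂ) := by
        rw [← h4]; ring
      rw [this, hQ]
      norm_num
    have hd := key _ haev
    have he : (G ^ 2 - Polynomial.C (4 * Q)).eval 1 = (Q - 1) ^ 2 - 4 * Q := by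
      simp [Polynomial.eval_sub, Polynomial.eval_pow, hG1, hQ]
    rw [he] at hd
    have h1 : (p : ℤ) ∣ 1 := by
      have hq : (p : ℤ) ∣ Q * (Q - 6) := Dvd.dvd.mul_right hpQ _
      have := dvd_sub hd hq
      have heq : (Q - 1) ^ 2 - 4 * Q - Q * (Q - 6) = 1 := by ring
      rwa [heq] at this
    exact hnotp1 h1
end

section
/- One has (2/π)·∫₀^π ( −log(sin²θ · cos²θ) )·sin²θ dθ = log 16; i.e., the integral of the function W(θ) := −log(sin²θ·cos²θ) over [0,π] against the Sato–Tate measure dμ∞ = (2/π)·sin²θ dθ equals log 16. -/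
open Real MeasureTheory intervalIntegral Set

noncomputable def gST (θ : ℝ) : ℝ := Real.log (Real.sin θ ^ 2)

lemma gST_per : Function.Periodic gST π := fun x => by
  unfold gST; rw [Real.sin_add_pi, neg_sq]

lemma log_int1 : IntervalIntegrable Real.log volume 0 1 := by
  have h : IntervalIntegrable (fun x : ℝ => -Real.log x) volume 0 1 := by
    apply intervalIntegral.intervalIntegrable_deriv_of_nonneg
      (g := fun x : ℝ => x - x * Real.log x)
    · exact (continuous_id.sub Real.continuous_mul_log).continuousOn
    · intro x hx
      rw [min_eq_left zero_le_one, max_eq_right zero_le_one] at hx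
      have h1 : HasDerivAt (fun y : ℝ => y * Real.log y) (Real.log x + 1) x :=
        Real.hasDerivAt_mul_log hx.1.ne'
      exact ((hasDerivAt_id x).sub h1).congr_deriv (by ring)
    · intro x hx
      rw [min_eq_left zero_le_one, max_eq_right zero_le_one] at hx
      simp only [neg_nonneg]
      exact Real.log_nonpos hx.1.le hx.2.le
  have h2 := h.neg
  have : (-fun x : ℝ => -Real.log x) = Real.log := by funext x; simp
  rwa [this] at h2

lemma log_int {b : ℝ} (hb : 0 < b) : IntervalIntegrable Real.log volume 0 b := by
  rcases le_total b 1 with h | h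
  · refine log_int1.mono_set ?_
    rw [Set.uIcc_of_le hb.le, Set.uIcc_of_le zero_le_one]
    exact Set.Icc_subset_Icc le_rfl h
  · refine log_int1.trans (intervalIntegrable_log ?_)
    rw [Set.uIcc_of_le h]
    rintro ⟨h0, -⟩; linarith

lemma gST_int_half : IntervalIntegrable gST volume 0 (π/2) := by
  have hpi : (0:ℝ) < π/2 := by positivity
  rw [intervalIntegrable_iff_integrableOn_Ioc_of_le hpi.le]
  have hbint : IntegrableOn (fun θ : ℝ => 2*(Real.log (π/2) - Real.log θ))
      (Ioc 0 (π/2)) volume := by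
    have h : IntervalIntegrable (fun θ : ℝ => 2*(Real.log (π/2) - Real.log θ))
        volume 0 (π/2) := (intervalIntegrable_const.sub (log_int hpi)).const_mul 2
    rwa [intervalIntegrable_iff_integrableOn_Ioc_of_le hpi.le] at h
  refine Integrable.mono' hbint ?_ ?_
  · exact (Real.measurable_log.comp ((Real.continuous_sin.pow 2).measurable)).aestronglyMeasurable
  · filter_upwards [ae_restrict_mem measurableSet_Ioc] with θ hθ
    obtain ⟨h0, h1⟩ := hθ
    have hs : 2/π * θ ≤ Real.sin θ := Real.mul_le_sin h0.le (by linarith)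
    have hsp : (0:ℝ) < 2/π * θ := by positivity
    have hsin : 0 < Real.sin θ := lt_of_lt_of_le hsp hs
    have hlog : Real.log (Real.sin θ^2) ≤ 0 :=
      Real.log_nonpos (by positivity) (by nlinarith [Real.sin_le_one θ])
    have hnorm : ‖gST θ‖ = -Real.log (Real.sin θ^2) := by
      rw [gST, Real.norm_eq_abs, abs_of_nonpos hlog]
    have h2 : Real.log ((2/π*θ)^2) ≤ Real.log (Real.sin θ^2) :=
      Real.log_le_log (by positivity) (by nlinarith)
    have h3 : Real.log ((2/π*θ)^2) = 2*(Real.log θ - Real.log (π/2)) := by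
      rw [Real.log_pow, Real.log_mul (by positivity) h0.ne',
        Real.log_div two_ne_zero Real.pi_ne_zero, Real.log_div Real.pi_ne_zero two_ne_zero]
      push_cast; ring
    rw [hnorm]
    linarith

lemma gST_int_half2 : IntervalIntegrable gST volume (π/2) π := by
  have h := gST_int_half.comp_sub_left π
  have he : (fun x => gST (π - x)) = gST := by
    funext x; unfold gST; rw [Real.sin_pi_sub]
  rw [he] at h
  have : π - π/2 = π/2 := by ring
  rw [this, sub_zero] at h
  exact h.symm

lemma gST_int : IntervalIntegrable gST volume 0 π := gST_int_half.trans gST_int_half2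

lemma gST_sub_pi : (fun x => gST (x - π)) = gST := by
  funext x
  have := gST_per (x - π)
  simpa using this.symm

lemma gST_int_pi2pi : IntervalIntegrable gST volume π (2*π) := by
  have h := gST_int.comp_sub_right π
  rw [gST_sub_pi, zero_add] at h
  have : π + π = 2*π := by ring
  rwa [this] at h

lemma gST_int_two_pi : IntervalIntegrable gST volume 0 (2*π) := gST_int.trans gST_int_pi2pi

lemma gST_int_mid : IntervalIntegrable gST volume (π/2) (3*π/2) := by
  have h := gST_int_half.comp_sub_right π
  rw [gST_sub_pi, zero_add] at h
  have : π/2 + π = 3*π/2 := by ring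
  rw [this] at h
  exact gST_int_half2.trans h

lemma cos_log_eq : (fun θ : ℝ => Real.log (Real.cos θ ^ 2)) = fun θ => gST (θ + π/2) := by
  funext θ; unfold gST; rw [Real.sin_add_pi_div_two]

lemma cosg_int : IntervalIntegrable (fun θ : ℝ => Real.log (Real.cos θ ^ 2)) volume 0 π := by
  rw [cos_log_eq]
  have h := gST_int_mid.comp_add_right (π/2)
  have e1 : π/2 - π/2 = (0:ℝ) := by ring
  have e2 : 3*π/2 - π/2 = π := by ring
  rwa [e1, e2] at h

lemma g2_int : IntervalIntegrable (fun θ : ℝ => gST (2*θ)) volume 0 π := by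
  have h := gST_int_two_pi.comp_mul_left (c := 2) enorm_ne_top enorm_ne_top
  norm_num at h
  exact h

lemma cos_integral_eq : ∫ θ in (0:ℝ)..π, Real.log (Real.cos θ ^ 2)
    = ∫ θ in (0:ℝ)..π, gST θ := by
  rw [cos_log_eq, intervalIntegral.integral_comp_add_right gST (π/2)]
  have h := gST_per.intervalIntegral_add_eq (π/2) 0
  rw [zero_add] at h
  have e1 : (0:ℝ) + π/2 = π/2 := by ring
  have e2 : π + π/2 = π/2 + π := by ring
  rw [e1, e2, h]

lemma S_eq_T : ∫ θ in (0:ℝ)..π, gST (2*θ) = ∫ θ in (0:ℝ)..π, gST θ := by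
  rw [intervalIntegral.integral_comp_mul_left gST two_ne_zero]
  have e1 : (2:ℝ) * 0 = 0 := by ring
  rw [e1]
  rw [← intervalIntegral.integral_add_adjacent_intervals gST_int gST_int_pi2pi]
  have h : ∫ x in π..2*π, gST x = ∫ x in (0:ℝ)..π, gST x := by
    have h2 := gST_per.intervalIntegral_add_eq π 0
    rw [zero_add] at h2
    have : π + π = 2*π := by ring
    rwa [this] at h2
  rw [h, smul_eq_mul]
  ring

lemma split_ae : ∀ᵐ θ : ℝ, θ ∈ Set.uIoc (0:ℝ) π →
    gST (2*θ) = Real.log 4 + gST θ + Real.log (Real.cos θ ^ 2) := by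
  have hc : ({π/2, π} : Set ℝ).Countable := (Set.toFinite _).countable
  filter_upwards [hc.ae_notMem volume] with θ hθ hmem
  have hne2 : θ ≠ π/2 := fun h => hθ (by simp [h])
  have hnepi : θ ≠ π := fun h => hθ (by simp [h])
  rw [Set.uIoc_of_le Real.pi_pos.le] at hmem
  obtain ⟨h0, h1⟩ := hmem
  have hlt : θ < π := lt_of_le_of_ne h1 hnepi
  have hsin : 0 < Real.sin θ := Real.sin_pos_of_pos_of_lt_pi h0 hlt
  have hcos : Real.cos θ ≠ 0 := by
    intro h
    refine hne2 (Real.injOn_cos ⟨h0.le, hlt.le⟩ ⟨by positivity, by linarith⟩ ?_)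
    rw [h, Real.cos_pi_div_two]
  unfold gST
  have hsq : Real.sin (2*θ) ^ 2 = 4 * (Real.sin θ ^ 2 * Real.cos θ ^ 2) := by
    rw [Real.sin_two_mul]; ring
  rw [hsq, Real.log_mul (by norm_num) (by positivity),
    Real.log_mul (by positivity) (by positivity)]
  ring

lemma T_val : ∫ θ in (0:ℝ)..π, gST θ = -(π * Real.log 4) := by
  have h1 := S_eq_T
  have h2 : ∫ θ in (0:ℝ)..π, gST (2*θ)
      = π * Real.log 4 + (∫ θ in (0:ℝ)..π, gST θ) + ∫ θ in (0:ℝ)..π, gST θ := by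
    rw [intervalIntegral.integral_congr_ae split_ae]
    rw [intervalIntegral.integral_add (intervalIntegrable_const.add gST_int) cosg_int,
      intervalIntegral.integral_add intervalIntegrable_const gST_int,
      intervalIntegral.integral_const, cos_integral_eq]
    simp [smul_eq_mul]
  rw [h1] at h2
  linarith

lemma g2_int' : IntervalIntegrable (fun θ : ℝ => Real.log (Real.sin (2*θ)^2)) volume 0 π :=
  g2_int

lemma C_val : ∫ θ in (0:ℝ)..π, Real.log (Real.sin (2*θ)^2) * Real.cos (2*θ) = 0 := by
  set H : ℝ → ℝ := fun θ => Real.sin (2*θ) * Real.log (Real.sin (2*θ)) - Real.sin (2*θ) with hH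
  have hderiv : ∀ x : ℝ, Real.sin (2*x) ≠ 0 →
      HasDerivAt H (Real.log (Real.sin (2*x)^2) * Real.cos (2*x)) x := by
    intro x hne
    have h2 : HasDerivAt (fun y : ℝ => 2*y) 2 x := by simpa using (hasDerivAt_id x).const_mul 2
    have hs : HasDerivAt (fun θ : ℝ => Real.sin (2*θ)) (Real.cos (2*x) * 2) x :=
      (Real.hasDerivAt_sin (2*x)).comp x h2
    have hlog : HasDerivAt (fun θ : ℝ => Real.log (Real.sin (2*θ)))
        ((Real.sin (2*x))⁻¹ * (Real.cos (2*x) * 2)) x := by have := (Real.hasDerivAt_log hne).comp x hs; exact this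
    have hd := (hs.mul hlog).sub hs
    refine hd.congr_deriv ?_
    rw [Real.log_pow]
    push_cast
    field_simp
    ring
  have hcont : Continuous H :=
    (Real.continuous_mul_log.comp
      (Real.continuous_sin.comp (continuous_const.mul continuous_id))).sub
      (Real.continuous_sin.comp (continuous_const.mul continuous_id))
  have hpi2 : (0:ℝ) ≤ π/2 := by positivity
  have hpi2' : π/2 ≤ π := by linarith [Real.pi_pos]
  have i1 : IntervalIntegrable
      (fun θ : ℝ => Real.log (Real.sin (2*θ)^2) * Real.cos (2*θ)) volume 0 (π/2) := by
    refine (g2_int'.mono_set ?_).mul_continuousOn (Continuous.continuousOn (by continuity))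
    rw [Set.uIcc_of_le hpi2, Set.uIcc_of_le Real.pi_pos.le]
    exact Set.Icc_subset_Icc le_rfl hpi2'
  have i2 : IntervalIntegrable
      (fun θ : ℝ => Real.log (Real.sin (2*θ)^2) * Real.cos (2*θ)) volume (π/2) π := by
    refine (g2_int'.mono_set ?_).mul_continuousOn (Continuous.continuousOn (by continuity))
    rw [Set.uIcc_of_le hpi2', Set.uIcc_of_le Real.pi_pos.le]
    exact Set.Icc_subset_Icc hpi2 le_rfl
  have p1 : ∫ θ in (0:ℝ)..(π/2), Real.log (Real.sin (2*θ)^2) * Real.cos (2*θ)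
      = H (π/2) - H 0 := by
    refine intervalIntegral.integral_eq_sub_of_hasDeriv_right_of_le hpi2
      hcont.continuousOn (fun x hx => ?_) i1
    refine (hderiv x ?_).hasDerivWithinAt
    have : 0 < Real.sin (2*x) := Real.sin_pos_of_pos_of_lt_pi (by linarith [hx.1]) (by linarith [hx.2])
    exact this.ne'
  have p2 : ∫ θ in (π/2)..π, Real.log (Real.sin (2*θ)^2) * Real.cos (2*θ)
      = H π - H (π/2) := by
    refine intervalIntegral.integral_eq_sub_of_hasDeriv_right_of_le hpi2'
      hcont.continuousOn (fun x hx => ?_) i2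
    refine (hderiv x ?_).hasDerivWithinAt
    have h1 : Real.sin (2*x - π) > 0 :=
      Real.sin_pos_of_pos_of_lt_pi (by linarith [hx.1]) (by linarith [hx.2])
    have h2 : Real.sin (2*x - π) = -Real.sin (2*x) := Real.sin_sub_pi _
    intro hzero
    rw [h2, hzero, neg_zero] at h1
    exact lt_irrefl _ h1
  rw [← intervalIntegral.integral_add_adjacent_intervals i1 i2, p1, p2]
  have v0 : H 0 = 0 := by simp [hH]
  have v1 : H (π/2) = 0 := by
    have : 2 * (π/2) = π := by ring
    simp [hH, this]
  have v2 : H π = 0 := by simp [hH, Real.sin_two_pi]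
  rw [v0, v1, v2]
  ring

lemma final_ae : ∀ᵐ θ : ℝ, θ ∈ Set.uIoc (0:ℝ) π →
    (-Real.log (Real.sin θ ^ 2 * Real.cos θ ^ 2)) * Real.sin θ ^ 2
      = (Real.log 4 - Real.log (Real.sin (2*θ)^2)) * Real.sin θ ^ 2 := by
  have hc : ({π/2, π} : Set ℝ).Countable := (Set.toFinite _).countable
  filter_upwards [hc.ae_notMem volume] with θ hθ hmem
  have hne2 : θ ≠ π/2 := fun h => hθ (by simp [h])
  have hnepi : θ ≠ π := fun h => hθ (by simp [h])
  rw [Set.uIoc_of_le Real.pi_pos.le] at hmem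
  obtain ⟨h0, h1⟩ := hmem
  have hlt : θ < π := lt_of_le_of_ne h1 hnepi
  have hsin : 0 < Real.sin θ := Real.sin_pos_of_pos_of_lt_pi h0 hlt
  have hcos : Real.cos θ ≠ 0 := by
    intro h
    refine hne2 (Real.injOn_cos ⟨h0.le, hlt.le⟩ ⟨by positivity, by linarith⟩ ?_)
    rw [h, Real.cos_pi_div_two]
  have hsq : Real.sin (2*θ) ^ 2 = 4 * (Real.sin θ ^ 2 * Real.cos θ ^ 2) := by
    rw [Real.sin_two_mul]; ring
  have hkey : Real.log (Real.sin (2*θ)^2)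
      = Real.log 4 + Real.log (Real.sin θ^2 * Real.cos θ^2) := by
    rw [hsq, Real.log_mul (by norm_num)
      (mul_ne_zero (pow_ne_zero 2 hsin.ne') (pow_ne_zero 2 hcos))]
  rw [hkey]
  ring

lemma I_val : ∫ θ in (0:ℝ)..π,
    (-Real.log (Real.sin θ ^ 2 * Real.cos θ ^ 2)) * Real.sin θ ^ 2 = π * Real.log 4 := by
  rw [intervalIntegral.integral_congr_ae final_ae]
  have hsin2 : IntervalIntegrable (fun θ : ℝ => Real.sin θ ^ 2) volume 0 π :=
    (Real.continuous_sin.pow 2).intervalIntegrable 0 π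
  have hL : IntervalIntegrable (fun θ : ℝ => Real.log (Real.sin (2*θ)^2)) volume 0 π := g2_int'
  have hLs : IntervalIntegrable
      (fun θ : ℝ => Real.log (Real.sin (2*θ)^2) * Real.sin θ ^ 2) volume 0 π :=
    hL.mul_continuousOn (Continuous.continuousOn (by continuity))
  have hLc : IntervalIntegrable
      (fun θ : ℝ => Real.log (Real.sin (2*θ)^2) * Real.cos (2*θ)) volume 0 π :=
    hL.mul_continuousOn (Continuous.continuousOn (by continuity))
  have step1 : ∫ θ in (0:ℝ)..π,
      (Real.log 4 - Real.log (Real.sin (2*θ)^2)) * Real.sin θ ^ 2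
      = (∫ θ in (0:ℝ)..π, Real.log 4 * Real.sin θ ^ 2)
        - ∫ θ in (0:ℝ)..π, Real.log (Real.sin (2*θ)^2) * Real.sin θ ^ 2 := by
    rw [← intervalIntegral.integral_sub (hsin2.const_mul _) hLs]
    congr 1; funext θ; ring
  rw [step1]
  have hsinval : ∫ θ in (0:ℝ)..π, Real.sin θ ^ 2 = π/2 := by
    rw [integral_sin_sq]; simp
  have e1 : ∫ θ in (0:ℝ)..π, Real.log 4 * Real.sin θ ^ 2 = Real.log 4 * (π/2) := by
    rw [intervalIntegral.integral_const_mul, hsinval]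
  have step2 : ∫ θ in (0:ℝ)..π, Real.log (Real.sin (2*θ)^2) * Real.sin θ ^ 2
      = (∫ θ in (0:ℝ)..π, Real.log (Real.sin (2*θ)^2)) / 2
        - (∫ θ in (0:ℝ)..π, Real.log (Real.sin (2*θ)^2) * Real.cos (2*θ)) / 2 := by
    rw [div_sub_div_same, ← intervalIntegral.integral_sub hL hLc,
      ← intervalIntegral.integral_div]
    congr 1; funext θ
    have hs : Real.sin θ ^ 2 = (1 - Real.cos (2*θ))/2 := by
      rw [Real.cos_two_mul, Real.sin_sq]
      ring
    rw [hs]; ring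
  have hS : ∫ θ in (0:ℝ)..π, Real.log (Real.sin (2*θ)^2) = -(π * Real.log 4) := by
    have h := S_eq_T
    unfold gST at h
    rw [h]
    exact T_val
  rw [step2, e1, hS, C_val]
  ring

/-- The integral of `W(θ) := −log(sin²θ·cos²θ)` over `[0,π]` against the Sato–Tate
measure `dμ∞ = (2/π)·sin²θ dθ` equals `log 16`:
`(2/π)·∫₀^π (−log(sin²θ·cos²θ))·sin²θ dθ = log 16`.
(Note `Real.log 0 = 0` in Lean, so the integrand agrees with the paper's convention
`W(θ) = 0` for `θ ∈ {0, π/2, π}`.) -/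
theorem stmt13 :
    (2 / Real.pi) * ∫ θ in (0:ℝ)..Real.pi,
        (-Real.log (Real.sin θ ^ 2 * Real.cos θ ^ 2)) * Real.sin θ ^ 2
      = Real.log 16 := by
  rw [I_val]
  have h16 : Real.log 16 = 2 * Real.log 4 := by
    rw [show (16:ℝ) = 4^2 by norm_num, Real.log_pow]
    push_cast; ring
  rw [h16]
  field_simp
end

section
/- There exists a constant C > 0, depending only on β₀, such that for every ε ∈ (0, 1/4): (a) ∫₀^π |W_ε′(t)| dt ≤ C·(1 + |log ε|), and (b) ∫₀^π |W(θ) − W_ε(θ)|·(2/π)·sin²θ dθ ≤ C·ε·(1 + |log ε|) (Lemma 7.3 of the paper). -/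
/-- The function `W(θ) = −log(sin²θ·cos²θ)` of §7.1 of the paper.  (Since
`Real.log 0 = 0` in Lean, this agrees with the paper's convention `W(θ) = 0`
for `θ ∈ {0, π/2, π}`.) -/
noncomputable def Wfun (θ : ℝ) : ℝ := -Real.log (Real.sin θ ^ 2 * Real.cos θ ^ 2)

/-- The smoothing function `β_ε` on `[0, π/2]`:  `β₀(θ/ε)` on `[0,ε]`, `1` on
`[ε, π/2−ε]`, and `β₀((π/2−θ)/ε)` on `[π/2−ε, π/2]`. -/
noncomputable def betaHalf (β₀ : ℝ → ℝ) (ε θ : ℝ) : ℝ :=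
  if θ ≤ ε then β₀ (θ / ε)
  else if θ ≤ Real.pi / 2 - ε then 1
  else β₀ ((Real.pi / 2 - θ) / ε)

/-- The smoothing function `β_ε : [0,π] → [0,1]` of §7.1 of the paper, extended to
`[π/2, π]` by the symmetry `β_ε(θ) = β_ε(π − θ)`. -/
noncomputable def betaEps (β₀ : ℝ → ℝ) (ε θ : ℝ) : ℝ :=
  if θ ≤ Real.pi / 2 then betaHalf β₀ ε θ else betaHalf β₀ ε (Real.pi - θ)

open Real Set MeasureTheory Filter intervalIntegral

section Helpers

lemma ae_ne_point (c : ℝ) : ∀ᵐ x : ℝ, x ≠ c := by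
  refine (MeasureTheory.ae_iff).2 ?_
  simp only [ne_eq, not_not, Set.setOf_eq_eq_singleton]
  exact measure_singleton c

lemma II_congr_ae {f g : ℝ → ℝ} {a b : ℝ} (h : IntervalIntegrable f volume a b)
    (he : ∀ᵐ x, x ∈ Set.uIoc a b → f x = g x) : IntervalIntegrable g volume a b := by
  rw [intervalIntegrable_iff] at h ⊢
  exact h.congr ((ae_restrict_iff' measurableSet_uIoc).2 he)

lemma II_mono' {f g : ℝ → ℝ} {a b : ℝ} (hg : IntervalIntegrable g volume a b)
    (hm : AEStronglyMeasurable f (volume.restrict (Set.uIoc a b)))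
    (h : ∀ᵐ x, x ∈ Set.uIoc a b → |f x| ≤ g x) : IntervalIntegrable f volume a b := by
  rw [intervalIntegrable_iff] at hg ⊢
  have h' : ∀ᵐ x ∂(volume.restrict (Set.uIoc a b)), |f x| ≤ g x :=
    (ae_restrict_iff' measurableSet_uIoc).2 h
  exact hg.mono' hm (h'.mono (fun x hx => by simpa [Real.norm_eq_abs] using hx))

lemma Wfun_eq {s : ℝ} (h1 : Real.sin s ≠ 0) (h2 : Real.cos s ≠ 0) :
    Wfun s = -(2 * Real.log (Real.sin s) + 2 * Real.log (Real.cos s)) := by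
  rw [Wfun, Real.log_mul (pow_ne_zero 2 h1) (pow_ne_zero 2 h2), Real.log_pow, Real.log_pow]
  push_cast; ring

lemma Wfun_nonneg (t : ℝ) : 0 ≤ Wfun t := by
  have h : Real.sin t ^ 2 * Real.cos t ^ 2 ≤ 1 := by
    nlinarith [Real.sin_sq_add_cos_sq t, sq_nonneg (Real.sin t), sq_nonneg (Real.cos t)]
  have := Real.log_nonpos (by positivity) h
  simp only [Wfun]; linarith

lemma Wfun_symm_pi (t : ℝ) : Wfun (Real.pi - t) = Wfun t := by
  have h : Real.sin (Real.pi - t) ^ 2 * Real.cos (Real.pi - t) ^ 2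
      = Real.sin t ^ 2 * Real.cos t ^ 2 := by
    rw [Real.sin_pi_sub, Real.cos_pi_sub]; ring
  rw [Wfun, h, Wfun]

lemma Wfun_symm_half (t : ℝ) : Wfun (Real.pi / 2 - t) = Wfun t := by
  have h : Real.sin (Real.pi/2 - t) ^ 2 * Real.cos (Real.pi/2 - t) ^ 2
      = Real.sin t ^ 2 * Real.cos t ^ 2 := by
    rw [Real.sin_pi_div_two_sub, Real.cos_pi_div_two_sub]; ring
  rw [Wfun, h, Wfun]

lemma Wfun_le {t : ℝ} (h0 : 0 < t) (h : t ≤ Real.pi / 4) :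
    Wfun t ≤ -2 * Real.log t + 3 := by
  have hπ := Real.pi_gt_three
  have htπ : t < Real.pi := by linarith
  have hs : 0 < Real.sin t := Real.sin_pos_of_pos_of_lt_pi h0 htπ
  have hc : 0 < Real.cos t := Real.cos_pos_of_mem_Ioo ⟨by linarith, by linarith⟩
  rw [Wfun_eq hs.ne' hc.ne']
  have hsin : 2 / Real.pi * t ≤ Real.sin t := Real.mul_le_sin h0.le (by linarith)
  have hcos : (1:ℝ)/2 ≤ Real.cos t := by
    have : Real.cos (Real.pi / 3) ≤ Real.cos t := by
      apply Real.cos_le_cos_of_nonneg_of_le_pi h0.le (by linarith) (by linarith)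
    rwa [Real.cos_pi_div_three] at this
  have h1 : Real.log (2 / Real.pi * t) ≤ Real.log (Real.sin t) :=
    Real.log_le_log (by positivity) hsin
  have h2 : Real.log (1/2 : ℝ) ≤ Real.log (Real.cos t) :=
    Real.log_le_log (by norm_num) hcos
  have h3 : Real.log (2 / Real.pi * t) = Real.log (2/Real.pi) + Real.log t :=
    Real.log_mul (by positivity) h0.ne'
  have h4 : -Real.log (2/Real.pi) = Real.log (Real.pi/2) := by
    rw [← Real.log_inv]; norm_num
  have h5 : Real.log (Real.pi/2) ≤ Real.pi/2 - 1 := Real.log_le_sub_one_of_pos (by positivity)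
  have h6 : -Real.log (1/2 : ℝ) = Real.log 2 := by
    rw [← Real.log_inv]; norm_num
  have h7 : Real.log 2 < 0.6931471808 := Real.log_two_lt_d9
  have h8 : Real.pi < 3.15 := by
    have := Real.pi_lt_d2; linarith
  nlinarith

lemma hasDerivAt_Wfun {t : ℝ} (h1 : Real.sin t ≠ 0) (h2 : Real.cos t ≠ 0) :
    HasDerivAt Wfun (2 * Real.sin t / Real.cos t - 2 * Real.cos t / Real.sin t) t := by
  have hopen : IsOpen {s : ℝ | Real.sin s ≠ 0 ∧ Real.cos s ≠ 0} := by
    have : {s : ℝ | Real.sin s ≠ 0 ∧ Real.cos s ≠ 0}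
        = Real.sin ⁻¹' {0}ᶜ ∩ Real.cos ⁻¹' {0}ᶜ := by ext s; simp [and_comm]
    rw [this]
    exact (isOpen_compl_singleton.preimage Real.continuous_sin).inter
      (isOpen_compl_singleton.preimage Real.continuous_cos)
  have hmem : {s : ℝ | Real.sin s ≠ 0 ∧ Real.cos s ≠ 0} ∈ nhds t :=
    hopen.mem_nhds ⟨h1, h2⟩
  have hF : HasDerivAt (fun s => -(2 * Real.log (Real.sin s) + 2 * Real.log (Real.cos s)))
      (-(2 * (Real.cos t / Real.sin t) + 2 * (-Real.sin t / Real.cos t))) t := by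
    exact ((((Real.hasDerivAt_sin t).log h1).const_mul 2).add
      (((Real.hasDerivAt_cos t).log h2).const_mul 2)).neg
  have hev : Wfun =ᶠ[nhds t]
      (fun s => -(2 * Real.log (Real.sin s) + 2 * Real.log (Real.cos s))) :=
    Filter.eventually_of_mem hmem (fun s hs => Wfun_eq hs.1 hs.2)
  have := hF.congr_of_eventuallyEq hev
  refine this.congr_deriv ?_
  ring

lemma Wderiv_bound {t : ℝ} (h0 : 0 < t) (h : t ≤ Real.pi / 4) :
    |2 * Real.sin t / Real.cos t - 2 * Real.cos t / Real.sin t| ≤ Real.pi * (1/t) + 2 := by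
  have hπ := Real.pi_gt_three
  have hs : 0 < Real.sin t := Real.sin_pos_of_pos_of_lt_pi h0 (by linarith)
  have hc : 0 < Real.cos t := Real.cos_pos_of_mem_Ioo ⟨by linarith, by linarith⟩
  have hsc : Real.sin t ≤ Real.cos t := by
    rw [← Real.sin_pi_div_two_sub]
    apply Real.sin_le_sin_of_le_of_le_pi_div_two (by linarith) (by linarith) (by linarith)
  have hsin : 2 / Real.pi * t ≤ Real.sin t := Real.mul_le_sin h0.le (by linarith)
  have h1 : 2 * Real.sin t / Real.cos t ≤ 2 := by
    rw [div_le_iff₀ hc]; nlinarith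
  have h2 : 2 * Real.cos t / Real.sin t ≤ Real.pi * (1/t) := by
    rw [div_le_iff₀ hs]
    have hcos1 : Real.cos t ≤ 1 := Real.cos_le_one t
    have : Real.pi * (1/t) * (2 / Real.pi * t) = 2 := by
      field_simp
    nlinarith [mul_le_mul_of_nonneg_left hsin (le_of_lt (by positivity : (0:ℝ) < Real.pi * (1/t)))]
  rw [abs_le]
  constructor
  · have hpos1 : 0 < 2 * Real.sin t / Real.cos t := by positivity
    nlinarith
  · have hpos2 : 0 < 2 * Real.cos t / Real.sin t := by positivity
    nlinarith

lemma betaEps_symm_pi (β₀ : ℝ → ℝ) (ε t : ℝ) :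
    betaEps β₀ ε (Real.pi - t) = betaEps β₀ ε t := by
  unfold betaEps
  rcases le_or_gt t (Real.pi/2) with h|h
  · rcases eq_or_lt_of_le h with h'|hlt
    · have e : Real.pi - t = Real.pi/2 := by rw [h']; ring
      rw [e, h']; simp
    · have h2 : ¬(Real.pi - t ≤ Real.pi/2) := by push_neg; linarith
      rw [if_neg h2, if_pos h, sub_sub_cancel]
  · have h2 : Real.pi - t ≤ Real.pi/2 := by linarith
    rw [if_pos h2, if_neg (not_le.2 h)]

lemma betaHalf_symm (β₀ : ℝ → ℝ) {ε : ℝ} (hε : 0 < ε) (hε4 : ε < Real.pi/4)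
    (hb1 : β₀ 1 = 1) (θ : ℝ) :
    betaHalf β₀ ε (Real.pi/2 - θ) = betaHalf β₀ ε θ := by
  have hπ := Real.pi_gt_three
  unfold betaHalf
  split_ifs with c1 d1 d2 c2 d1 d2 d1 d2
  · linarith
  · have hθ : θ = Real.pi/2 - ε := by linarith
    have e : (Real.pi/2 - θ)/ε = 1 := by rw [hθ]; field_simp; ring
    rw [e, hb1]
  · rfl
  · have hθ : θ = ε := by linarith
    have e : θ/ε = 1 := by rw [hθ]; field_simp
    rw [e, hb1]
  · rfl
  · linarith
  · have e : (Real.pi/2 - (Real.pi/2 - θ))/ε = θ/ε := by ring_nf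
    rw [e]
  · linarith
  · linarith

lemma betaHalf_mem (β₀ : ℝ → ℝ) {ε θ : ℝ} (hε : 0 < ε)
    (hβ₀mem : ∀ x ∈ Set.Icc (0 : ℝ) 1, β₀ x ∈ Set.Icc (0 : ℝ) 1)
    (hθ : θ ∈ Set.Icc 0 (Real.pi/2)) : betaHalf β₀ ε θ ∈ Set.Icc (0:ℝ) 1 := by
  unfold betaHalf
  split_ifs with c1 c2
  · exact hβ₀mem _ ⟨div_nonneg hθ.1 hε.le, (div_le_one hε).2 c1⟩
  · exact ⟨zero_le_one, le_rfl⟩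
  · refine hβ₀mem _ ⟨div_nonneg (by linarith [hθ.2]) hε.le,
      (div_le_one hε).2 (by push_neg at c2; linarith)⟩

lemma betaEps_mem (β₀ : ℝ → ℝ) {ε θ : ℝ} (hε : 0 < ε)
    (hβ₀mem : ∀ x ∈ Set.Icc (0 : ℝ) 1, β₀ x ∈ Set.Icc (0 : ℝ) 1)
    (hθ : θ ∈ Set.Icc 0 Real.pi) : betaEps β₀ ε θ ∈ Set.Icc (0:ℝ) 1 := by
  unfold betaEps
  split_ifs with c
  · exact betaHalf_mem β₀ hε hβ₀mem ⟨hθ.1, c⟩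
  · exact betaHalf_mem β₀ hε hβ₀mem ⟨by linarith [hθ.2], by push_neg at c; linarith⟩

lemma betaEps_zero (β₀ : ℝ → ℝ) {ε s : ℝ} (hε : 0 < ε) (hε4 : ε < 1/4)
    (hβ₀0 : ∀ x ∈ Set.Icc (0 : ℝ) (1 / 3), β₀ x = 0)
    (hs : s ∈ Set.Ioo 0 (ε/3)) : betaEps β₀ ε s = 0 := by
  have hπ := Real.pi_gt_three
  unfold betaEps betaHalf
  rw [if_pos (by linarith [hs.2] : s ≤ Real.pi/2), if_pos (by linarith [hs.2] : s ≤ ε)]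
  exact hβ₀0 _ ⟨div_nonneg hs.1.le hε.le, by rw [div_le_iff₀ hε]; linarith [hs.2]⟩

lemma betaEps_comp (β₀ : ℝ → ℝ) {ε s : ℝ} (hε : 0 < ε) (hε4 : ε < 1/4)
    (hs : s ∈ Set.Ioc 0 ε) : betaEps β₀ ε s = β₀ (s/ε) := by
  have hπ := Real.pi_gt_three
  unfold betaEps betaHalf
  rw [if_pos (by linarith [hs.2] : s ≤ Real.pi/2), if_pos hs.2]

lemma betaEps_one (β₀ : ℝ → ℝ) {ε s : ℝ} (hε : 0 < ε)
    (hβ₀1 : ∀ x ∈ Set.Icc (2 / 3 : ℝ) 1, β₀ x = 1)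
    (hs : s ∈ Set.Ioo (2*ε/3) (Real.pi/2 - ε)) : betaEps β₀ ε s = 1 := by
  unfold betaEps betaHalf
  rw [if_pos (by linarith [hs.2] : s ≤ Real.pi/2)]
  split_ifs with c1 c2
  · exact hβ₀1 _ ⟨by rw [le_div_iff₀ hε]; linarith [hs.1], (div_le_one hε).2 c1⟩
  · rfl
  · exact absurd (le_of_lt hs.2) (by push_neg at c2; linarith)

lemma II_log_zero {ε : ℝ} (hε : 0 < ε) (hε1 : ε ≤ 1) :
    IntervalIntegrable Real.log volume 0 ε := by
  refine II_mono' (g := fun x => 2 * x ^ (-(1/2) : ℝ))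
    ((intervalIntegrable_rpow' (by norm_num)).const_mul 2)
    (Real.measurable_log.aestronglyMeasurable) (Filter.Eventually.of_forall ?_)
  intro x hx
  rw [Set.uIoc_of_le hε.le] at hx
  have hx0 : 0 < x := hx.1
  have hlog : Real.log x ≤ 0 := Real.log_nonpos hx0.le (hx.2.trans hε1)
  rw [abs_of_nonpos hlog]
  have h1 : Real.log (x ^ (-(1/2) : ℝ)) = -(1/2) * Real.log x := Real.log_rpow hx0 _
  have h2 : Real.log (x ^ (-(1/2) : ℝ)) ≤ x ^ (-(1/2) : ℝ) - 1 :=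
    Real.log_le_sub_one_of_pos (Real.rpow_pos_of_pos hx0 _)
  nlinarith [Real.rpow_pos_of_pos hx0 (-(1/2) : ℝ)]

lemma integral_log_zero {ε : ℝ} (hε : 0 < ε) (hε1 : ε ≤ 1) :
    ∫ x in (0:ℝ)..ε, Real.log x = ε * Real.log ε - ε := by
  have h := integral_eq_sub_of_hasDerivAt_of_le hε.le
    (f := fun x => x * Real.log x - x) (f' := Real.log)
    ((Real.continuous_mul_log.sub continuous_id).continuousOn)
    (fun x hx => by
      exact ((Real.hasDerivAt_mul_log hx.1.ne').sub (hasDerivAt_id' x)).congr_deriv (by ring))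
    (II_log_zero hε hε1)
  simpa using h

end Helpers

set_option maxHeartbeats 1000000 in
/-- **Lemma 7.3 of the paper.**
Fix a continuously differentiable nondecreasing function `β₀ : [0,1] → [0,1]` with
`β₀ ≡ 0` on `[0,1/3]` and `β₀ ≡ 1` on `[2/3,1]`, and set `W_ε := W·β_ε`.  There is a
constant `C > 0`, depending only on `β₀`, such that for every `ε ∈ (0,1/4)`:
(a) `∫₀^π |W_ε′(t)| dt ≤ C·(1 + |log ε|)`, and
(b) `∫₀^π |W(θ) − W_ε(θ)|·(2/π)·sin²θ dθ ≤ C·ε·(1 + |log ε|)`. -/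
theorem stmt14 (β₀ : ℝ → ℝ)
    (hβ₀C1 : ContDiffOn ℝ 1 β₀ (Set.Icc 0 1))
    (hβ₀mono : MonotoneOn β₀ (Set.Icc 0 1))
    (hβ₀mem : ∀ x ∈ Set.Icc (0 : ℝ) 1, β₀ x ∈ Set.Icc (0 : ℝ) 1)
    (hβ₀0 : ∀ x ∈ Set.Icc (0 : ℝ) (1 / 3), β₀ x = 0)
    (hβ₀1 : ∀ x ∈ Set.Icc (2 / 3 : ℝ) 1, β₀ x = 1) :
    ∃ C : ℝ, 0 < C ∧ ∀ ε : ℝ, 0 < ε → ε < 1 / 4 →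
      (∫ t in (0:ℝ)..Real.pi, |deriv (fun u => Wfun u * betaEps β₀ ε u) t|)
          ≤ C * (1 + |Real.log ε|) ∧
      (∫ θ in (0:ℝ)..Real.pi,
            |Wfun θ - Wfun θ * betaEps β₀ ε θ| * (2 / Real.pi * Real.sin θ ^ 2))
          ≤ C * ε * (1 + |Real.log ε|) := by
  -- bound on the derivative of β₀
  obtain ⟨M₀, hM₀⟩ := (isCompact_Icc (a := (0:ℝ)) (b := 1)).exists_bound_of_continuousOn
    (hβ₀C1.continuousOn_derivWithin (uniqueDiffOn_Icc one_pos) le_rfl)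
  set M : ℝ := max M₀ 0 with hMdef
  have hM0 : 0 ≤ M := le_max_right _ _
  have hM : ∀ x ∈ Set.Ioo (0:ℝ) 1, |deriv β₀ x| ≤ M := by
    intro x hx
    have h2 : derivWithin β₀ (Set.Icc 0 1) x = deriv β₀ x :=
      derivWithin_of_mem_nhds (Icc_mem_nhds hx.1 hx.2)
    have := hM₀ x ⟨hx.1.le, hx.2.le⟩
    rw [Real.norm_eq_abs, h2] at this
    exact this.trans (le_max_left _ _)
  have hb1 : β₀ 1 = 1 := hβ₀1 1 ⟨by norm_num, le_rfl⟩
  refine ⟨44 + 20*M, by linarith, ?_⟩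
  intro ε hε hε4
  have hπ3 : (3:ℝ) < Real.pi := Real.pi_gt_three
  have hπ315 : Real.pi < 3.15 := by have := Real.pi_lt_d2; linarith
  have hεπ4 : ε < Real.pi/4 := by linarith
  have hL : |Real.log ε| = -Real.log ε := abs_of_neg (Real.log_neg hε (by linarith))
  have hL0 : (0:ℝ) ≤ |Real.log ε| := abs_nonneg _
  set L : ℝ := |Real.log ε| with hLdef
  set g : ℝ → ℝ := fun u => Wfun u * betaEps β₀ ε u with hgdef
  constructor
  · -- part (a)
    have hFmeas : Measurable (fun t => |deriv g t|) := (measurable_deriv g).abs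
    -- derivative vanishes near 0
    have hd0 : ∀ t ∈ Set.Ioo 0 (ε/3), deriv g t = 0 := by
      intro t ht
      have hev : g =ᶠ[nhds t] (fun _ => (0:ℝ)) :=
        Filter.eventually_of_mem (Ioo_mem_nhds ht.1 ht.2) (fun s hs => by
          show Wfun s * betaEps β₀ ε s = 0
          rw [betaEps_zero β₀ hε hε4 hβ₀0 hs, mul_zero])
      rw [hev.deriv_eq, deriv_const]
    -- derivative equals W' in the middle
    have hd3 : ∀ t ∈ Set.Ioo (2*ε/3) (Real.pi/2 - ε), t ≤ Real.pi/4 →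
        |deriv g t| ≤ Real.pi * (1/t) + 2 := by
      intro t ht htle
      have hev : g =ᶠ[nhds t] Wfun :=
        Filter.eventually_of_mem (Ioo_mem_nhds ht.1 ht.2) (fun s hs => by
          show Wfun s * betaEps β₀ ε s = Wfun s
          rw [betaEps_one β₀ hε hβ₀1 hs, mul_one])
      have ht0 : 0 < t := lt_of_le_of_lt (by positivity) ht.1
      have hsin : Real.sin t ≠ 0 :=
        (Real.sin_pos_of_pos_of_lt_pi ht0 (by linarith [ht.2])).ne'
      have hcos : Real.cos t ≠ 0 :=
        (Real.cos_pos_of_mem_Ioo ⟨by linarith, by linarith [ht.2]⟩).ne'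
      rw [hev.deriv_eq, (hasDerivAt_Wfun hsin hcos).deriv]
      exact Wderiv_bound ht0 htle
    -- derivative in the transition region
    have hd2 : ∀ t ∈ Set.Ico (ε/3) (2*ε/3),
        |deriv g t| ≤ Real.pi * (1/t) + 2 + (-2*Real.log (ε/3) + 3) * (M * (1/ε)) := by
      intro t ht
      have ht0 : 0 < t := lt_of_lt_of_le (by positivity) ht.1
      have htε : t < ε := by linarith [ht.2]
      have htπ4 : t ≤ Real.pi/4 := by linarith
      have hsin : Real.sin t ≠ 0 :=
        (Real.sin_pos_of_pos_of_lt_pi ht0 (by linarith)).ne'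
      have hcos : Real.cos t ≠ 0 :=
        (Real.cos_pos_of_mem_Ioo ⟨by linarith, by linarith⟩).ne'
      have hx1 : (1:ℝ)/3 ≤ t/ε := by rw [le_div_iff₀ hε]; linarith [ht.1]
      have hx2 : t/ε < 2/3 := by rw [div_lt_iff₀ hε]; linarith [ht.2]
      have hβdiff : DifferentiableAt ℝ β₀ (t/ε) :=
        (hβ₀C1.contDiffAt (Icc_mem_nhds (by linarith) (by linarith))).differentiableAt one_ne_zero
      have hB : HasDerivAt (fun s => β₀ (s/ε)) (deriv β₀ (t/ε) * (1/ε)) t := by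
        have h1 : HasDerivAt (fun s : ℝ => s/ε) (1/ε) t := (hasDerivAt_id t).div_const ε
        exact hβdiff.hasDerivAt.comp t h1
      have hW : HasDerivAt Wfun (2*Real.sin t/Real.cos t - 2*Real.cos t/Real.sin t) t :=
        hasDerivAt_Wfun hsin hcos
      have hprod := hW.mul hB
      have hev : g =ᶠ[nhds t] (fun s => Wfun s * β₀ (s/ε)) :=
        Filter.eventually_of_mem (Ioo_mem_nhds ht0 htε) (fun s hs => by
          show Wfun s * betaEps β₀ ε s = Wfun s * β₀ (s/ε)
          rw [betaEps_comp β₀ hε hε4 ⟨hs.1, hs.2.le⟩])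
      rw [hev.deriv_eq, show deriv (fun s => Wfun s * β₀ (s/ε)) t = _ from hprod.deriv]
      have hβmem := hβ₀mem (t/ε) ⟨by linarith, by linarith⟩
      have hβabs : |β₀ (t/ε)| ≤ 1 := abs_le.2 ⟨by linarith [hβmem.1], hβmem.2⟩
      have hMt : |deriv β₀ (t/ε)| ≤ M := hM _ ⟨by linarith, by linarith⟩
      have hWb : |Wfun t| ≤ -2*Real.log (ε/3) + 3 := by
        rw [abs_of_nonneg (Wfun_nonneg t)]
        have h1 := Wfun_le ht0 htπ4
        have hlog : Real.log (ε/3) ≤ Real.log t :=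
          Real.log_le_log (by positivity) ht.1
        linarith
      have hWbpos : (0:ℝ) ≤ -2*Real.log (ε/3) + 3 := le_trans (abs_nonneg _) hWb
      have e1 : |(2*Real.sin t/Real.cos t - 2*Real.cos t/Real.sin t) * β₀ (t/ε)|
          ≤ Real.pi * (1/t) + 2 := by
        rw [abs_mul]
        calc |2*Real.sin t/Real.cos t - 2*Real.cos t/Real.sin t| * |β₀ (t/ε)|
            ≤ (Real.pi * (1/t) + 2) * 1 :=
              mul_le_mul (Wderiv_bound ht0 htπ4) hβabs (abs_nonneg _) (by positivity)
          _ = Real.pi * (1/t) + 2 := mul_one _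
      have e2 : |Wfun t * (deriv β₀ (t/ε) * (1/ε))|
          ≤ (-2*Real.log (ε/3) + 3) * (M * (1/ε)) := by
        rw [abs_mul, abs_mul]
        have habs : |(1:ℝ)/ε| = 1/ε := abs_of_pos (by positivity)
        rw [habs]
        exact mul_le_mul hWb (mul_le_mul_of_nonneg_right hMt (by positivity))
          (by positivity) hWbpos
      calc |(2*Real.sin t/Real.cos t - 2*Real.cos t/Real.sin t) * β₀ (t/ε) +
            Wfun t * (deriv β₀ (t/ε) * (1/ε))|
          ≤ |(2*Real.sin t/Real.cos t - 2*Real.cos t/Real.sin t) * β₀ (t/ε)| +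
            |Wfun t * (deriv β₀ (t/ε) * (1/ε))| := abs_add_le _ _
        _ ≤ _ := add_le_add e1 e2
    -- the constant bound on the transition interval
    set K2 : ℝ := Real.pi * (3/ε) + 2 + (-2*Real.log (ε/3) + 3) * (M * (1/ε)) with hK2def
    have hlogε3 : Real.log (ε/3) < 0 := Real.log_neg (by positivity) (by linarith)
    have hK2term : (0:ℝ) ≤ (-2*Real.log (ε/3) + 3) * (M * (1/ε)) := by
      apply mul_nonneg (by linarith) (by positivity)
    have hbnd : ∀ x ∈ Set.Icc (ε/3) ε, x ≠ 2*ε/3 → |deriv g x| ≤ K2 := by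
      intro x hx hne
      have hx0 : 0 < x := lt_of_lt_of_le (by positivity) hx.1
      have hinv : 1/x ≤ 3/ε := by
        rw [div_le_div_iff₀ hx0 hε]; linarith [hx.1]
      have hπinv : Real.pi * (1/x) ≤ Real.pi * (3/ε) :=
        mul_le_mul_of_nonneg_left hinv (by linarith)
      rcases lt_or_gt_of_ne hne with hlt|hgt
      · have := hd2 x ⟨hx.1, hlt⟩
        rw [hK2def]; linarith
      · have := hd3 x ⟨hgt, by linarith [hx.2]⟩ (by linarith [hx.2])
        rw [hK2def]; linarith
    -- piece integrabilities and bounds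
    have h03 : (0:ℝ) ≤ ε/3 := by positivity
    have h3e : ε/3 ≤ ε := by linarith
    have hi1 : IntervalIntegrable (fun t => |deriv g t|) volume 0 (ε/3) := by
      refine II_congr_ae (f := fun _ => (0:ℝ)) _root_.intervalIntegrable_const ?_
      filter_upwards [ae_ne_point (ε/3)] with x hx hxm
      rw [Set.uIoc_of_le h03] at hxm
      rw [hd0 x ⟨hxm.1, lt_of_le_of_ne hxm.2 hx⟩, abs_zero]
    have hI1 : ∫ t in (0:ℝ)..(ε/3), |deriv g t| = 0 := by
      have heq : ∫ t in (0:ℝ)..(ε/3), |deriv g t| = ∫ _t in (0:ℝ)..(ε/3), (0:ℝ) := by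
        apply intervalIntegral.integral_congr_ae
        filter_upwards [ae_ne_point (ε/3)] with x hx hxm
        rw [Set.uIoc_of_le h03] at hxm
        rw [hd0 x ⟨hxm.1, lt_of_le_of_ne hxm.2 hx⟩, abs_zero]
      rw [heq]
      simp
    have hi2 : IntervalIntegrable (fun t => |deriv g t|) volume (ε/3) ε := by
      refine II_mono' (g := fun _ => K2) _root_.intervalIntegrable_const
        hFmeas.aestronglyMeasurable ?_
      filter_upwards [ae_ne_point (2*ε/3)] with x hx hxm
      rw [Set.uIoc_of_le h3e] at hxm
      rw [abs_abs]
      exact hbnd x ⟨hxm.1.le, hxm.2⟩ hx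
    have hI2 : ∫ t in (ε/3)..ε, |deriv g t| ≤ (ε - ε/3) * K2 := by
      have hae : (fun t => |deriv g t|) ≤ᵐ[volume.restrict (Set.Icc (ε/3) ε)]
          (fun _ => K2) := by
        filter_upwards [ae_restrict_mem measurableSet_Icc,
          ae_restrict_of_ae (ae_ne_point (2*ε/3))] with x hxm hx
        exact hbnd x hxm hx
      have hmono := integral_mono_ae_restrict h3e hi2 (_root_.intervalIntegrable_const (c := K2)) hae
      have hconst : (∫ _t in (ε/3)..ε, K2) = (ε - ε/3) * K2 := by
        rw [intervalIntegral.integral_const, smul_eq_mul]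
      exact hmono.trans_eq hconst
    have hb3 : IntervalIntegrable (fun t => Real.pi * (1/t) + 2) volume ε (Real.pi/4) := by
      apply ContinuousOn.intervalIntegrable
      apply ContinuousOn.add ?_ continuousOn_const
      apply ContinuousOn.mul continuousOn_const
      apply ContinuousOn.div continuousOn_const continuousOn_id ?_
      intro x hx
      rw [Set.uIcc_of_le (by linarith : ε ≤ Real.pi/4)] at hx
      have : 0 < x := lt_of_lt_of_le hε hx.1
      simpa using this.ne'
    have hbnd3 : ∀ x ∈ Set.Icc ε (Real.pi/4), |deriv g x| ≤ Real.pi * (1/x) + 2 := by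
      intro x hx
      exact hd3 x ⟨by linarith [hx.1], by linarith [hx.2]⟩ hx.2
    have hi3 : IntervalIntegrable (fun t => |deriv g t|) volume ε (Real.pi/4) := by
      refine II_mono' hb3 hFmeas.aestronglyMeasurable (Filter.Eventually.of_forall ?_)
      intro x hxm
      rw [Set.uIoc_of_le (by linarith : ε ≤ Real.pi/4)] at hxm
      rw [abs_abs]
      exact hbnd3 x ⟨hxm.1.le, hxm.2⟩
    have h0uIcc : (0:ℝ) ∉ Set.uIcc ε (Real.pi/4) := by
      rw [Set.uIcc_of_le (by linarith)]
      intro h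
      exact absurd h.1 (by push_neg; linarith)
    have h1div : IntervalIntegrable (fun t : ℝ => 1/t) volume ε (Real.pi/4) := by
      apply ContinuousOn.intervalIntegrable
      apply ContinuousOn.div continuousOn_const continuousOn_id ?_
      intro x hx
      rw [Set.uIcc_of_le (by linarith : ε ≤ Real.pi/4)] at hx
      have : 0 < x := lt_of_lt_of_le hε hx.1
      simpa using this.ne'
    have hI3calc : ∫ t in ε..(Real.pi/4), (Real.pi * (1/t) + 2)
        = Real.pi * (Real.log (Real.pi/4) - Real.log ε) + (Real.pi/4 - ε) * 2 := by
      rw [integral_add (h1div.const_mul Real.pi) (_root_.intervalIntegrable_const),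
        intervalIntegral.integral_const_mul, integral_one_div h0uIcc,
        intervalIntegral.integral_const,
        Real.log_div (ne_of_gt (by positivity)) hε.ne']
      simp [smul_eq_mul]
    have hI3 : ∫ t in ε..(Real.pi/4), |deriv g t|
        ≤ Real.pi * (Real.log (Real.pi/4) - Real.log ε) + (Real.pi/4 - ε) * 2 := by
      rw [← hI3calc]
      exact integral_mono_on (by linarith) hi3 hb3 hbnd3
    have hi02 : IntervalIntegrable (fun t => |deriv g t|) volume 0 ε := hi1.trans hi2
    have hi04 : IntervalIntegrable (fun t => |deriv g t|) volume 0 (Real.pi/4) :=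
      hi02.trans hi3
    have hML : 0 ≤ M * L := mul_nonneg hM0 hL0
    have hI4 : ∫ t in (0:ℝ)..(Real.pi/4), |deriv g t| ≤ (10 + 5*M) * (1 + L) := by
      have hs1 : ∫ t in (0:ℝ)..ε, |deriv g t|
          = (∫ t in (0:ℝ)..(ε/3), |deriv g t|) + ∫ t in (ε/3)..ε, |deriv g t| :=
         (integral_add_adjacent_intervals hi1 hi2).symm
      have hs2 : ∫ t in (0:ℝ)..(Real.pi/4), |deriv g t|
          = (∫ t in (0:ℝ)..ε, |deriv g t|) + ∫ t in ε..(Real.pi/4), |deriv g t| :=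
         (integral_add_adjacent_intervals hi02 hi3).symm
      rw [hs2, hs1, hI1]
      have hK2e : (ε - ε/3) * K2
          = 2*Real.pi + 4*ε/3 + (2/3)*((-2*Real.log (ε/3) + 3) * M) := by
        rw [hK2def]; field_simp; ring
      have hlog3 : Real.log (ε/3) = Real.log ε - Real.log 3 :=
        Real.log_div hε.ne' (by norm_num)
      have hlog3' : Real.log 3 ≤ 2 := by
        have := Real.log_le_sub_one_of_pos (by norm_num : (0:ℝ) < 3); linarith
      have hlog3'' : 0 < Real.log 3 := Real.log_pos (by norm_num)
      have hlogpi4 : Real.log (Real.pi/4) ≤ 0 :=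
        Real.log_nonpos (by positivity) (by linarith)
      have hpilogpi4 : Real.pi * Real.log (Real.pi/4) ≤ 0 :=
        mul_nonpos_iff.2 (Or.inl ⟨by linarith, hlogpi4⟩)
      have hεlog : Real.log ε = -L := by rw [hL, neg_neg]
      have hfinal : (ε - ε/3) * K2
          + (Real.pi * (Real.log (Real.pi/4) - Real.log ε) + (Real.pi/4 - ε) * 2)
          ≤ (10 + 5*M) * (1 + L) := by
        rw [hK2e, hlog3, hεlog]
        nlinarith [hML, hM0, hL0, hε, hε4, hπ3, hπ315, hpilogpi4,
          mul_le_mul_of_nonneg_right hlog3' hM0, mul_nonneg hlog3''.le hM0]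
      linarith [hI2, hI3]
    -- symmetry about π/2 and π/4
    have hgpi : ∀ s, g (Real.pi - s) = g s := by
      intro s
      show Wfun (Real.pi - s) * betaEps β₀ ε (Real.pi - s) = Wfun s * betaEps β₀ ε s
      rw [Wfun_symm_pi, betaEps_symm_pi]
    have hFpi : ∀ x, |deriv g (Real.pi - x)| = |deriv g x| := by
      intro x
      have h1 : g = fun s => g (Real.pi - s) := funext fun s => (hgpi s).symm
      have h2 : deriv (fun s => g (Real.pi - s)) x = -deriv g (Real.pi - x) :=
        deriv_comp_const_sub g Real.pi x
      calc |deriv g (Real.pi - x)| = |deriv (fun s => g (Real.pi - s)) x| := by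
            rw [h2, abs_neg]
        _ = |deriv g x| := by rw [← h1]
    have hghalf : ∀ s ∈ Set.Ioo 0 (Real.pi/2), g (Real.pi/2 - s) = g s := by
      intro s hs
      show Wfun (Real.pi/2 - s) * betaEps β₀ ε (Real.pi/2 - s) = Wfun s * betaEps β₀ ε s
      rw [Wfun_symm_half]
      congr 1
      have e1 : Real.pi/2 - s ≤ Real.pi/2 := by linarith [hs.1]
      have e2 : s ≤ Real.pi/2 := hs.2.le
      show (if Real.pi/2 - s ≤ Real.pi/2 then betaHalf β₀ ε (Real.pi/2 - s)
          else betaHalf β₀ ε (Real.pi - (Real.pi/2 - s)))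
        = (if s ≤ Real.pi/2 then betaHalf β₀ ε s else betaHalf β₀ ε (Real.pi - s))
      rw [if_pos e1, if_pos e2]
      exact betaHalf_symm β₀ hε hεπ4 hb1 s
    have hFhalf : ∀ x ∈ Set.Ioo 0 (Real.pi/2), |deriv g (Real.pi/2 - x)| = |deriv g x| := by
      intro x hx
      have hev : (fun s => g (Real.pi/2 - s)) =ᶠ[nhds x] g :=
        Filter.eventually_of_mem (Ioo_mem_nhds hx.1 hx.2) (fun s hs => hghalf s hs)
      have h2 : deriv (fun s => g (Real.pi/2 - s)) x = -deriv g (Real.pi/2 - x) :=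
        deriv_comp_const_sub g (Real.pi/2) x
      calc |deriv g (Real.pi/2 - x)| = |deriv (fun s => g (Real.pi/2 - s)) x| := by
            rw [h2, abs_neg]
        _ = |deriv g x| := by rw [hev.deriv_eq]
    have hq1 : ∫ x in (Real.pi/4)..(Real.pi/2), |deriv g x|
        = ∫ x in (0:ℝ)..(Real.pi/4), |deriv g x| := by
      have e1 : ∫ x in (0:ℝ)..(Real.pi/4), |deriv g (Real.pi/2 - x)|
          = ∫ x in (Real.pi/2 - Real.pi/4)..(Real.pi/2 - 0), |deriv g x| :=
        integral_comp_sub_left (fun x => |deriv g x|) (Real.pi/2)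
      have e2 : Real.pi/2 - Real.pi/4 = Real.pi/4 := by ring
      have e3 : Real.pi/2 - (0:ℝ) = Real.pi/2 := by ring
      rw [e2, e3] at e1
      rw [← e1]
      apply intervalIntegral.integral_congr_ae
      apply Filter.Eventually.of_forall
      intro x hxm
      rw [Set.uIoc_of_le (by linarith : (0:ℝ) ≤ Real.pi/4)] at hxm
      exact hFhalf x ⟨hxm.1, by linarith [hxm.2]⟩
    have hi44 : IntervalIntegrable (fun t => |deriv g t|) volume (Real.pi/4) (Real.pi/2) := by
      have h1 := hi04.comp_sub_left (Real.pi/2)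
      have e2 : Real.pi/2 - Real.pi/4 = Real.pi/4 := by ring
      have e3 : Real.pi/2 - (0:ℝ) = Real.pi/2 := by ring
      rw [e2, e3] at h1
      refine II_congr_ae h1.symm ?_
      filter_upwards [ae_ne_point (Real.pi/2)] with x hx hxm
      rw [Set.uIoc_of_le (by linarith : Real.pi/4 ≤ Real.pi/2)] at hxm
      exact hFhalf x ⟨by linarith [hxm.1], lt_of_le_of_ne hxm.2 hx⟩
    have hi0h : IntervalIntegrable (fun t => |deriv g t|) volume 0 (Real.pi/2) :=
      hi04.trans hi44
    have hIhalf : ∫ x in (0:ℝ)..(Real.pi/2), |deriv g x|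
        = 2 * ∫ x in (0:ℝ)..(Real.pi/4), |deriv g x| := by
      rw [← integral_add_adjacent_intervals hi04 hi44, hq1]; ring
    have hq2 : ∫ x in (Real.pi/2)..Real.pi, |deriv g x|
        = ∫ x in (0:ℝ)..(Real.pi/2), |deriv g x| := by
      have e1 : ∫ x in (0:ℝ)..(Real.pi/2), |deriv g (Real.pi - x)|
          = ∫ x in (Real.pi - Real.pi/2)..(Real.pi - 0), |deriv g x| :=
        integral_comp_sub_left (fun x => |deriv g x|) Real.pi
      have e2 : Real.pi - Real.pi/2 = Real.pi/2 := by ring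
      have e3 : Real.pi - (0:ℝ) = Real.pi := by ring
      rw [e2, e3] at e1
      rw [← e1]
      simp only [hFpi]
    have hi2pi : IntervalIntegrable (fun t => |deriv g t|) volume (Real.pi/2) Real.pi := by
      have h1 := hi0h.comp_sub_left Real.pi
      have e2 : Real.pi - Real.pi/2 = Real.pi/2 := by ring
      have e3 : Real.pi - (0:ℝ) = Real.pi := by ring
      rw [e2, e3] at h1
      have h2 : (fun x => |deriv g (Real.pi - x)|) = fun t => |deriv g t| := funext hFpi
      rw [h2] at h1
      exact h1.symm
    calc ∫ t in (0:ℝ)..Real.pi, |deriv g t|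
        = (∫ x in (0:ℝ)..(Real.pi/2), |deriv g x|)
          + ∫ x in (Real.pi/2)..Real.pi, |deriv g x| :=
           (integral_add_adjacent_intervals hi0h hi2pi).symm
      _ = 2 * ∫ x in (0:ℝ)..(Real.pi/2), |deriv g x| := by rw [hq2]; ring
      _ = 4 * ∫ x in (0:ℝ)..(Real.pi/4), |deriv g x| := by rw [hIhalf]; ring
      _ ≤ 4 * ((10 + 5*M) * (1 + L)) := by linarith [hI4]
      _ ≤ (44 + 20*M) * (1 + L) := by nlinarith [hM0, hL0]
  · -- part (b)
    set φ : ℝ → ℝ :=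
      fun θ => |Wfun θ - Wfun θ * betaEps β₀ ε θ| * (2 / Real.pi * Real.sin θ ^ 2) with hφdef
    have hεlog : Real.log ε = -L := by rw [hL, neg_neg]
    have hβmem2 : ∀ θ ∈ Set.Icc (0:ℝ) Real.pi, betaEps β₀ ε θ ∈ Set.Icc (0:ℝ) 1 :=
      fun θ hθ => betaEps_mem β₀ hε hβ₀mem hθ
    have hφ0 : ∀ θ, 0 ≤ φ θ := by
      intro θ
      simp only [hφdef]
      positivity
    set Kb : ℝ := 2/Real.pi * (5*ε^2 + 2*ε^2*L) with hKbdef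
    have hKb0 : 0 ≤ Kb := by positivity
    -- pointwise bound on [0, ε]
    have hφbnd1 : ∀ θ ∈ Set.Icc (0:ℝ) ε, φ θ ≤ Kb := by
      intro θ hθ
      rcases eq_or_lt_of_le hθ.1 with h0|h0
      · simp only [hφdef, ← h0, Real.sin_zero]
        simpa using hKb0
      · have hβ := hβmem2 θ ⟨hθ.1, by linarith [hθ.2]⟩
        have hW0 := Wfun_nonneg θ
        have hWle := Wfun_le h0 (by linarith [hθ.2])
        have hsin0 : 0 ≤ Real.sin θ :=
          Real.sin_nonneg_of_nonneg_of_le_pi hθ.1 (by linarith [hθ.2])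
        have hsinle : Real.sin θ ≤ θ := le_of_lt (Real.sin_lt h0)
        have habs : |Wfun θ - Wfun θ * betaEps β₀ ε θ|
            = Wfun θ * (1 - betaEps β₀ ε θ) := by
          rw [show Wfun θ - Wfun θ * betaEps β₀ ε θ
              = Wfun θ * (1 - betaEps β₀ ε θ) from by ring]
          exact abs_of_nonneg (mul_nonneg hW0 (by linarith [hβ.2]))
        have hsq : 2/Real.pi * Real.sin θ^2 ≤ 2/Real.pi * θ^2 := by
          apply mul_le_mul_of_nonneg_left _ (by positivity)
          exact pow_le_pow_left₀ hsin0 hsinle 2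
        have hstep : φ θ ≤ Wfun θ * (2/Real.pi * θ^2) := by
          simp only [hφdef]
          rw [habs]
          calc Wfun θ * (1 - betaEps β₀ ε θ) * (2/Real.pi * Real.sin θ^2)
              ≤ (Wfun θ * 1) * (2/Real.pi * θ^2) := by
                apply mul_le_mul (mul_le_mul_of_nonneg_left (by linarith [hβ.1]) hW0)
                  hsq (by positivity) (by positivity)
            _ = Wfun θ * (2/Real.pi * θ^2) := by ring
        have hlogq : Real.log (ε/θ) ≤ ε/θ := by
          have := Real.log_le_sub_one_of_pos (show (0:ℝ) < ε/θ by positivity)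
          linarith
        have hsplit : Real.log θ = Real.log ε - Real.log (ε/θ) := by
          rw [Real.log_div hε.ne' h0.ne']; ring
        have hWb2 : Wfun θ ≤ 2*L + 2*(ε/θ) + 3 := by
          rw [hsplit, hεlog] at hWle
          linarith
        have hθ2 : θ^2 ≤ ε^2 := pow_le_pow_left₀ hθ.1 hθ.2 2
        have hid : (ε/θ) * θ^2 = ε*θ := by field_simp
        have key : Wfun θ * θ^2 ≤ 5*ε^2 + 2*ε^2*L := by
          nlinarith [mul_le_mul_of_nonneg_right hWb2 (sq_nonneg θ), hid,
            mul_le_mul_of_nonneg_left hθ2 hL0,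
            mul_le_mul_of_nonneg_left hθ.2 hε.le, hθ2, hθ.1, hL0]
        calc φ θ ≤ Wfun θ * (2/Real.pi * θ^2) := hstep
          _ = 2/Real.pi * (Wfun θ * θ^2) := by ring
          _ ≤ 2/Real.pi * (5*ε^2 + 2*ε^2*L) :=
              mul_le_mul_of_nonneg_left key (by positivity)
          _ = Kb := by rw [hKbdef]
    -- continuity / integrability on [0, ε]
    have hWcont : ∀ a b : ℝ, (∀ θ ∈ Set.Ioc a b, Real.sin θ ≠ 0 ∧ Real.cos θ ≠ 0) →
        ContinuousOn Wfun (Set.Ioc a b) := by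
      intro a b hab
      have : ContinuousOn (fun θ => Real.sin θ ^ 2 * Real.cos θ ^ 2) (Set.Ioc a b) :=
        (((Real.continuous_sin.pow 2).mul (Real.continuous_cos.pow 2))).continuousOn
      apply ContinuousOn.neg
      apply Real.continuousOn_log.comp this
      intro θ hθ
      have h12 := hab θ hθ
      simp only [Set.mem_compl_iff, Set.mem_singleton_iff]
      exact mul_ne_zero (pow_ne_zero 2 h12.1) (pow_ne_zero 2 h12.2)
    have hj1 : IntervalIntegrable φ volume 0 ε := by
      refine II_mono' (g := fun _ => Kb) _root_.intervalIntegrable_const ?_ ?_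
      · rw [Set.uIoc_of_le hε.le]
        apply ContinuousOn.aestronglyMeasurable _ measurableSet_Ioc
        have hW : ContinuousOn Wfun (Set.Ioc 0 ε) := by
          apply hWcont
          intro θ hθ
          exact ⟨(Real.sin_pos_of_pos_of_lt_pi hθ.1 (by linarith [hθ.2])).ne',
            (Real.cos_pos_of_mem_Ioo ⟨by linarith [hθ.1], by linarith [hθ.2]⟩).ne'⟩
        have hBe : ContinuousOn (fun θ => betaEps β₀ ε θ) (Set.Ioc 0 ε) := by
          apply ContinuousOn.congr (f := fun θ => β₀ (θ/ε))
          · apply hβ₀C1.continuousOn.comp (continuous_id.div_const ε).continuousOn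
            intro θ hθ
            exact ⟨div_nonneg hθ.1.le hε.le, (div_le_one hε).2 hθ.2⟩
          · intro θ hθ
            exact betaEps_comp β₀ hε hε4 hθ
        simp only [hφdef]
        exact ((hW.sub (hW.mul hBe)).abs).mul
          (continuousOn_const.mul ((Real.continuous_sin.pow 2).continuousOn))
      · apply Filter.Eventually.of_forall
        intro x hxm
        rw [Set.uIoc_of_le hε.le] at hxm
        rw [abs_of_nonneg (hφ0 x)]
        exact hφbnd1 x ⟨hxm.1.le, hxm.2⟩
    have hJ1 : ∫ θ in (0:ℝ)..ε, φ θ ≤ ε * Kb := by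
      have h := integral_mono_on hε.le hj1 (_root_.intervalIntegrable_const (c := Kb)) hφbnd1
      have hconst : (∫ _θ in (0:ℝ)..ε, Kb) = ε * Kb := by
        rw [intervalIntegral.integral_const, smul_eq_mul, sub_zero]
      exact h.trans_eq hconst
    -- middle piece is zero
    have hmid : ε ≤ Real.pi/2 - ε := by linarith
    have hzero : ∀ θ ∈ Set.Icc ε (Real.pi/2 - ε), φ θ = 0 := by
      intro θ hθ
      have hbe : betaEps β₀ ε θ = 1 := by
        rcases eq_or_lt_of_le hθ.1 with h'|h'
        · rw [betaEps_comp β₀ hε hε4 ⟨by linarith, by linarith⟩]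
          rw [show θ/ε = 1 from by rw [← h']; field_simp, hb1]
        · show (if θ ≤ Real.pi / 2 then betaHalf β₀ ε θ
              else betaHalf β₀ ε (Real.pi - θ)) = 1
          rw [if_pos (by linarith [hθ.2] : θ ≤ Real.pi/2)]
          show (if θ ≤ ε then β₀ (θ / ε)
            else if θ ≤ Real.pi / 2 - ε then 1
            else β₀ ((Real.pi / 2 - θ) / ε)) = 1
          rw [if_neg (not_le.2 h'), if_pos hθ.2]
      simp only [hφdef, hbe, mul_one, sub_self, abs_zero, zero_mul]
    have hj2 : IntervalIntegrable φ volume ε (Real.pi/2 - ε) := by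
      refine II_congr_ae (f := fun _ => (0:ℝ)) _root_.intervalIntegrable_const ?_
      apply Filter.Eventually.of_forall
      intro x hxm
      rw [Set.uIoc_of_le hmid] at hxm
      exact (hzero x ⟨hxm.1.le, hxm.2⟩).symm
    have hJ2 : ∫ θ in ε..(Real.pi/2 - ε), φ θ = 0 := by
      have heq : ∫ θ in ε..(Real.pi/2 - ε), φ θ = ∫ _θ in ε..(Real.pi/2 - ε), (0:ℝ) := by
        apply intervalIntegral.integral_congr_ae
        apply Filter.Eventually.of_forall
        intro x hxm
        rw [Set.uIoc_of_le hmid] at hxm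
        exact hzero x ⟨hxm.1.le, hxm.2⟩
      rw [heq]; simp
    -- band piece near π/2
    set q : ℝ → ℝ := fun u => 2/Real.pi * (-2*Real.log u + 3) with hqdef
    have hjlog : IntervalIntegrable Real.log volume 0 ε := II_log_zero hε (by linarith)
    have hjq : IntervalIntegrable q volume 0 ε := by
      have h1 : IntervalIntegrable (fun u => -2*Real.log u + 3) volume 0 ε :=
        (hjlog.const_mul (-2)).add _root_.intervalIntegrable_const
      exact h1.const_mul (2/Real.pi)
    have hIq : ∫ u in (0:ℝ)..ε, q u = 2/Real.pi * (2*ε*L + 5*ε) := by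
      have h1 : ∫ u in (0:ℝ)..ε, (-2*Real.log u + 3)
          = -2*(ε*Real.log ε - ε) + (ε - 0)*3 := by
        rw [integral_add (hjlog.const_mul (-2)) _root_.intervalIntegrable_const,
          intervalIntegral.integral_const_mul, integral_log_zero hε (by linarith),
          intervalIntegral.integral_const, smul_eq_mul]
      have h2 : ∫ u in (0:ℝ)..ε, q u
          = 2/Real.pi * ∫ u in (0:ℝ)..ε, (-2*Real.log u + 3) := by
        rw [hqdef]
        exact intervalIntegral.integral_const_mul _ _
      rw [h2, h1, hεlog]
      ring
    have hφbnd3 : ∀ θ ∈ Set.Icc (Real.pi/2 - ε) (Real.pi/2), φ θ ≤ q (Real.pi/2 - θ) := by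
      intro θ hθ
      rcases eq_or_lt_of_le hθ.2 with h'|h'
      · have hW : Wfun (Real.pi/2) = 0 := by
          simp [Wfun, Real.cos_pi_div_two]
        simp only [hφdef, h', hW, zero_mul, sub_self, abs_zero]
        simp only [hqdef, Real.log_zero]
        positivity
      · have hu0 : 0 < Real.pi/2 - θ := by linarith
        have huε : Real.pi/2 - θ ≤ ε := by linarith [hθ.1]
        have hθ0 : 0 < θ := by linarith [hθ.1]
        have hβ := hβmem2 θ ⟨hθ0.le, by linarith⟩
        have hW0 := Wfun_nonneg θ
        have hWle : Wfun θ ≤ -2*Real.log (Real.pi/2 - θ) + 3 := by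
          have e := Wfun_symm_half (Real.pi/2 - θ)
          rw [show Real.pi/2 - (Real.pi/2 - θ) = θ from by ring] at e
          rw [e]
          exact Wfun_le hu0 (by linarith)
        have hsin1 : Real.sin θ^2 ≤ 1 := Real.sin_sq_le_one θ
        have habs : |Wfun θ - Wfun θ * betaEps β₀ ε θ|
            = Wfun θ * (1 - betaEps β₀ ε θ) := by
          rw [show Wfun θ - Wfun θ * betaEps β₀ ε θ
              = Wfun θ * (1 - betaEps β₀ ε θ) from by ring]
          exact abs_of_nonneg (mul_nonneg hW0 (by linarith [hβ.2]))
        have hstep : φ θ ≤ Wfun θ * (2/Real.pi) := by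
          simp only [hφdef]
          rw [habs]
          calc Wfun θ * (1 - betaEps β₀ ε θ) * (2/Real.pi * Real.sin θ^2)
              ≤ (Wfun θ * 1) * (2/Real.pi * 1) := by
                apply mul_le_mul (mul_le_mul_of_nonneg_left (by linarith [hβ.1]) hW0)
                  (mul_le_mul_of_nonneg_left hsin1 (by positivity))
                  (by positivity) (by positivity)
            _ = Wfun θ * (2/Real.pi) := by ring
        calc φ θ ≤ Wfun θ * (2/Real.pi) := hstep
          _ ≤ (-2*Real.log (Real.pi/2 - θ) + 3) * (2/Real.pi) :=
              mul_le_mul_of_nonneg_right hWle (by positivity)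
          _ = q (Real.pi/2 - θ) := by rw [hqdef]; ring
    have hcomp3 : IntervalIntegrable (fun θ => q (Real.pi/2 - θ)) volume
        (Real.pi/2 - ε) (Real.pi/2) := by
      have h1 := hjq.comp_sub_left (Real.pi/2)
      rw [show Real.pi/2 - (0:ℝ) = Real.pi/2 from by ring] at h1
      exact h1.symm
    have hj3 : IntervalIntegrable φ volume (Real.pi/2 - ε) (Real.pi/2) := by
      refine II_mono' hcomp3 ?_ ?_
      · rw [Set.uIoc_of_le (by linarith : Real.pi/2 - ε ≤ Real.pi/2)]
        have hres : volume.restrict (Set.Ioc (Real.pi/2 - ε) (Real.pi/2))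
            = volume.restrict (Set.Ioo (Real.pi/2 - ε) (Real.pi/2)) :=
          (Measure.restrict_congr_set Ioo_ae_eq_Ioc).symm
        rw [hres]
        apply ContinuousOn.aestronglyMeasurable _ measurableSet_Ioo
        have hW : ContinuousOn Wfun (Set.Ioo (Real.pi/2 - ε) (Real.pi/2)) := by
          have : ContinuousOn (fun θ => Real.sin θ ^ 2 * Real.cos θ ^ 2)
              (Set.Ioo (Real.pi/2 - ε) (Real.pi/2)) :=
            (((Real.continuous_sin.pow 2).mul (Real.continuous_cos.pow 2))).continuousOn
          apply ContinuousOn.neg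
          apply Real.continuousOn_log.comp this
          intro θ hθ
          have h1 : 0 < Real.sin θ :=
            Real.sin_pos_of_pos_of_lt_pi (by linarith [hθ.1]) (by linarith [hθ.2])
          have h2 : 0 < Real.cos θ :=
            Real.cos_pos_of_mem_Ioo ⟨by linarith [hθ.1], hθ.2⟩
          simp only [Set.mem_compl_iff, Set.mem_singleton_iff]
          exact (mul_pos (pow_pos h1 2) (pow_pos h2 2)).ne'
        have hBe : ContinuousOn (fun θ => betaEps β₀ ε θ)
            (Set.Ioo (Real.pi/2 - ε) (Real.pi/2)) := by
          apply ContinuousOn.congr (f := fun θ => β₀ ((Real.pi/2 - θ)/ε))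
          · apply hβ₀C1.continuousOn.comp
              ((continuous_const.sub continuous_id).div_const ε).continuousOn
            intro θ hθ
            refine ⟨div_nonneg ?_ hε.le, (div_le_one hε).2 ?_⟩
            · simp only [Pi.sub_apply, id_eq]; linarith [hθ.2]
            · simp only [Pi.sub_apply, id_eq]; linarith [hθ.1]
          · intro θ hθ
            show (if θ ≤ Real.pi / 2 then betaHalf β₀ ε θ
              else betaHalf β₀ ε (Real.pi - θ)) = β₀ ((Real.pi/2 - θ)/ε)
            rw [if_pos (le_of_lt hθ.2)]
            show (if θ ≤ ε then β₀ (θ / ε)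
              else if θ ≤ Real.pi / 2 - ε then 1
              else β₀ ((Real.pi / 2 - θ) / ε)) = β₀ ((Real.pi/2 - θ)/ε)
            rw [if_neg (by push_neg; linarith [hθ.1]), if_neg (by push_neg; linarith [hθ.1])]
        simp only [hφdef]
        exact ((hW.sub (hW.mul hBe)).abs).mul
          (continuousOn_const.mul ((Real.continuous_sin.pow 2).continuousOn))
      · apply Filter.Eventually.of_forall
        intro x hxm
        rw [Set.uIoc_of_le (by linarith : Real.pi/2 - ε ≤ Real.pi/2)] at hxm
        rw [abs_of_nonneg (hφ0 x)]
        exact hφbnd3 x ⟨hxm.1.le, hxm.2⟩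
    have hJ3 : ∫ θ in (Real.pi/2 - ε)..(Real.pi/2), φ θ ≤ 2/Real.pi * (2*ε*L + 5*ε) := by
      have h1 := integral_mono_on (by linarith : Real.pi/2 - ε ≤ Real.pi/2)
        hj3 hcomp3 hφbnd3
      have h2 : ∫ θ in (Real.pi/2 - ε)..(Real.pi/2), q (Real.pi/2 - θ)
          = ∫ u in (0:ℝ)..ε, q u := by
        have e1 := integral_comp_sub_left q (Real.pi/2)
          (a := Real.pi/2 - ε) (b := Real.pi/2)
        rw [show Real.pi/2 - (Real.pi/2) = (0:ℝ) from by ring,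
          show Real.pi/2 - (Real.pi/2 - ε) = ε from by ring] at e1
        exact e1
      rw [h2, hIq] at h1
      exact h1
    -- assemble the half integral
    have hj0h2 : IntervalIntegrable φ volume 0 (Real.pi/2) :=
      (hj1.trans hj2).trans hj3
    have hJhalf : ∫ θ in (0:ℝ)..(Real.pi/2), φ θ
        ≤ ε * Kb + 2/Real.pi * (2*ε*L + 5*ε) := by
      have hs1 : ∫ θ in (0:ℝ)..(Real.pi/2 - ε), φ θ
          = (∫ θ in (0:ℝ)..ε, φ θ) + ∫ θ in ε..(Real.pi/2 - ε), φ θ :=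
        (integral_add_adjacent_intervals hj1 hj2).symm
      have hs2 : ∫ θ in (0:ℝ)..(Real.pi/2), φ θ
          = (∫ θ in (0:ℝ)..(Real.pi/2 - ε), φ θ)
            + ∫ θ in (Real.pi/2 - ε)..(Real.pi/2), φ θ :=
        (integral_add_adjacent_intervals (hj1.trans hj2) hj3).symm
      rw [hs2, hs1, hJ2]
      linarith [hJ1, hJ3]
    -- symmetry θ ↦ π − θ
    have hφpi : ∀ θ, φ (Real.pi - θ) = φ θ := by
      intro θ
      simp only [hφdef]
      rw [Wfun_symm_pi, betaEps_symm_pi, Real.sin_pi_sub]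
    have hq2b : ∫ θ in (Real.pi/2)..Real.pi, φ θ = ∫ θ in (0:ℝ)..(Real.pi/2), φ θ := by
      have e1 : ∫ x in (0:ℝ)..(Real.pi/2), φ (Real.pi - x)
          = ∫ x in (Real.pi - Real.pi/2)..(Real.pi - 0), φ x :=
        integral_comp_sub_left φ Real.pi
      rw [show Real.pi - Real.pi/2 = Real.pi/2 from by ring,
        show Real.pi - (0:ℝ) = Real.pi from by ring] at e1
      rw [← e1]
      simp only [hφpi]
    have hj2pi : IntervalIntegrable φ volume (Real.pi/2) Real.pi := by
      have h1 := hj0h2.comp_sub_left Real.pi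
      rw [show Real.pi - Real.pi/2 = Real.pi/2 from by ring,
        show Real.pi - (0:ℝ) = Real.pi from by ring] at h1
      have h2 : (fun x => φ (Real.pi - x)) = φ := funext hφpi
      rw [h2] at h1
      exact h1.symm
    have htotal : ∫ θ in (0:ℝ)..Real.pi, φ θ
        = 2 * ∫ θ in (0:ℝ)..(Real.pi/2), φ θ := by
      rw [← integral_add_adjacent_intervals hj0h2 hj2pi, hq2b]
      ring
    rw [htotal]
    -- final numerics
    have h2π : 2/Real.pi ≤ 2/3 := by
      rw [div_le_div_iff₀ (by linarith) (by norm_num)]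
      linarith
    have hεL : 0 ≤ ε * L := mul_nonneg hε.le hL0
    have hKbb : Kb ≤ 2/3 * (5*ε^2 + 2*ε^2*L) := by
      rw [hKbdef]
      apply mul_le_mul_of_nonneg_right h2π
      nlinarith [mul_nonneg (sq_nonneg ε) hL0]
    have hband : 2/Real.pi * (2*ε*L + 5*ε) ≤ 2/3 * (2*ε*L + 5*ε) := by
      apply mul_le_mul_of_nonneg_right h2π
      nlinarith
    have hε2 : ε^2 ≤ 1 := by nlinarith
    have hεKb : ε * Kb ≤ 2/3 * (5*ε + 2*ε*L) := by
      have h1 : ε * Kb ≤ ε * (2/3 * (5*ε^2 + 2*ε^2*L)) :=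
        mul_le_mul_of_nonneg_left hKbb hε.le
      have h2 : ε * (2/3 * (5*ε^2 + 2*ε^2*L)) ≤ 2/3 * (5*ε + 2*ε*L) := by
        nlinarith [mul_nonneg (mul_nonneg hε.le hε.le) (mul_nonneg hε.le hL0),
          mul_nonneg hε.le hL0, sq_nonneg ε,
          mul_le_mul_of_nonneg_right hε2 hεL]
      linarith
    have hMε : 0 ≤ 20*M * (ε * (1 + L)) :=
      mul_nonneg (by linarith) (mul_nonneg hε.le (by linarith))
    nlinarith [hJhalf, hεKb, hband, hεL, hε, hL0, hMε]
end
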